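/- arXiv:1607.08731 — 10 statements merged into one kernel-verified Lean document; each statement's English description precedes it below -/
import Mathlib

section
/- Let θ be a positive random variable with μ := E[θ] ∈ (1,∞) and E[θ log⁺θ] < ∞. Then for each p ∈ [1,2), the series ∑_{k≥1} (E[|θ−μ| · 1{μ^{k−1} < |θ−μ| ≤ μ^k}])^{1/p} converges. -/
open MeasureTheory ProbabilityTheory

/-- Monotonicity of `x ↦ max (log x) 0`. -/
lemma aux_maxlog_mono {a b : ℝ} (ha : 0 ≤ a) (hab : a ≤ b) :
    max (Real.log a) 0 ≤ max (Real.log b) 0 := by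
  rcases eq_or_lt_of_le ha with h | h
  · simp [← h]
  · exact max_le_max (Real.log_le_log h hab) le_rfl

/-- Monotonicity of `x ↦ x * max (log x) 0`. -/
lemma aux_xlog_mono {a b : ℝ} (ha : 0 ≤ a) (hab : a ≤ b) :
    a * max (Real.log a) 0 ≤ b * max (Real.log b) 0 :=
  mul_le_mul hab (aux_maxlog_mono ha hab) (le_max_right _ _) (ha.trans hab)

/-- If `θ > 0`, `μ = E θ ∈ (1,∞)` and `E[θ log⁺ θ] < ∞`, then for every `p ∈ [1,2)` the
series `∑_{k ≥ 1} (E[|θ-μ| 1{μ^{k-1} < |θ-μ| ≤ μ^k}])^{1/p}` converges.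
(The index `k : ℕ` below corresponds to `k+1 ≥ 1`.) -/
theorem stmt0 {Ω : Type*} [MeasureSpace Ω] [IsProbabilityMeasure (ℙ : Measure Ω)]
    (θ : Ω → ℝ) (hθmeas : Measurable θ) (hθpos : ∀ ω, 0 < θ ω)
    (hθint : Integrable θ) (μ : ℝ) (hμ : μ = ∫ ω, θ ω) (hμgt : 1 < μ)
    (hlog : Integrable (fun ω => θ ω * max (Real.log (θ ω)) 0)) :
    ∀ p : ℝ, p ∈ Set.Ico (1 : ℝ) 2 →
      Summable (fun k : ℕ =>
        (∫ ω, Set.indicator {ω' | μ ^ k < |θ ω' - μ| ∧ |θ ω' - μ| ≤ μ ^ (k + 1)}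
            (fun ω' => |θ ω' - μ|) ω) ^ (1 / p)) := by
  have hμ0 : (0:ℝ) < μ := lt_trans one_pos hμgt
  have hμ1 : (1:ℝ) ≤ μ := le_of_lt hμgt
  have hlogμ : 0 < Real.log μ := Real.log_pos hμgt
  set X : Ω → ℝ := fun ω => |θ ω - μ| with hX
  set E : ℕ → Set Ω := fun k => {ω' | μ ^ k < X ω' ∧ X ω' ≤ μ ^ (k + 1)} with hE
  set b : ℕ → ℝ := fun k => ∫ ω, Set.indicator (E k) X ω with hb
  have hXmeas : Measurable X := (hθmeas.sub measurable_const).abs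
  have hXnn : ∀ ω, 0 ≤ X ω := fun ω => abs_nonneg _
  have hXint : Integrable X := (hθint.sub (integrable_const μ)).abs
  have hEmeas : ∀ k, MeasurableSet (E k) := fun k =>
    (measurableSet_lt measurable_const hXmeas).inter
      (measurableSet_le hXmeas measurable_const)
  have hind_int : ∀ k, Integrable (Set.indicator (E k) X) := fun k =>
    hXint.indicator (hEmeas k)
  have hind_nn : ∀ k ω, 0 ≤ Set.indicator (E k) X ω := fun k ω =>
    Set.indicator_nonneg (fun ω' _ => hXnn ω') ω
  have hb0 : ∀ k, 0 ≤ b k := fun k => integral_nonneg (hind_nn k)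
  -- the dominating function G
  set G : Ω → ℝ := fun ω => (Real.log μ)⁻¹ * (X ω * max (Real.log (X ω)) 0) + X ω with hG
  have hGnn : ∀ ω, 0 ≤ G ω := by
    intro ω
    have h1 : 0 ≤ X ω * max (Real.log (X ω)) 0 :=
      mul_nonneg (hXnn ω) (le_max_right _ _)
    positivity
  -- integrability of X log⁺ X
  have hXlog_int : Integrable (fun ω => X ω * max (Real.log (X ω)) 0) := by
    have hfm : Measurable (fun ω => X ω * max (Real.log (X ω)) 0) :=
      hXmeas.mul ((Real.measurable_log.comp hXmeas).max measurable_const)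
    apply Integrable.mono' (g := fun ω => θ ω * max (Real.log (θ ω)) 0 + μ * Real.log μ)
      (hlog.add (integrable_const _)) hfm.aestronglyMeasurable
    filter_upwards with ω
    have h1 : 0 ≤ X ω * max (Real.log (X ω)) 0 :=
      mul_nonneg (hXnn ω) (le_max_right _ _)
    rw [Real.norm_eq_abs, abs_of_nonneg h1]
    have hθnn : 0 ≤ θ ω * max (Real.log (θ ω)) 0 :=
      mul_nonneg (hθpos ω).le (le_max_right _ _)
    have hμlμ : 0 ≤ μ * Real.log μ := mul_nonneg hμ0.le hlogμ.le
    rcases le_or_gt (θ ω) μ with h | h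
    · -- X ω ≤ μ
      have hXle : X ω ≤ μ := by
        simp only [hX]
        rw [abs_sub_comm, abs_of_nonneg (by linarith)]
        have := (hθpos ω); linarith
      have := aux_xlog_mono (hXnn ω) hXle
      have hlμ : max (Real.log μ) 0 = Real.log μ := max_eq_left hlogμ.le
      nlinarith [this]
    · -- X ω = θ ω - μ ≤ θ ω
      have hXle : X ω ≤ θ ω := by
        simp only [hX]
        rw [abs_of_nonneg (by linarith)]; linarith
      have := aux_xlog_mono (hXnn ω) hXle
      linarith
  have hGint : Integrable G :=
    (hXlog_int.const_mul _).add hXint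
  -- disjointness of the events
  have hdisj : ∀ {j k : ℕ} {ω : Ω}, ω ∈ E j → ω ∈ E k → j = k := by
    intro j k ω hj hk
    by_contra hne
    rcases lt_or_gt_of_ne hne with h | h
    · have : μ ^ (j + 1) ≤ μ ^ k := pow_le_pow_right₀ hμ1 h
      exact absurd (hj.2.trans this) (not_le.mpr hk.1)
    · have : μ ^ (k + 1) ≤ μ ^ j := pow_le_pow_right₀ hμ1 h
      exact absurd (hk.2.trans this) (not_le.mpr hj.1)
  -- key pointwise bound
  have hkey : ∀ (n : ℕ) (ω : Ω),
      ∑ k ∈ Finset.range n, ((k : ℝ) + 1) * Set.indicator (E k) X ω ≤ G ω := by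
    intro n ω
    by_cases h : ∃ j ∈ Finset.range n, ω ∈ E j
    · obtain ⟨j, hjn, hjE⟩ := h
      rw [Finset.sum_eq_single_of_mem j hjn (fun k _ hk => by
        rw [Set.indicator_of_notMem (fun hkE => hk (hdisj hkE hjE))]
        ring)]
      rw [Set.indicator_of_mem hjE]
      -- on E j : μ^j < X ω, so j * log μ ≤ log (X ω) and log X ω ≥ 0
      have h1 : (1:ℝ) ≤ μ ^ j := one_le_pow₀ hμ1
      have hX1 : 1 < X ω := lt_of_le_of_lt h1 hjE.1
      have hlogX : Real.log (μ ^ j) ≤ Real.log (X ω) :=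
        Real.log_le_log (by positivity) hjE.1.le
      rw [Real.log_pow] at hlogX
      have hlogXnn : 0 ≤ Real.log (X ω) := Real.log_nonneg hX1.le
      have hmax : max (Real.log (X ω)) 0 = Real.log (X ω) := max_eq_left hlogXnn
      show (↑j + 1) * X ω ≤ (Real.log μ)⁻¹ * (X ω * max (Real.log (X ω)) 0) + X ω
      rw [hmax]
      have hjX : (j : ℝ) * X ω ≤ (Real.log μ)⁻¹ * (X ω * Real.log (X ω)) := by
        have e1 : (j : ℝ) * X ω = (Real.log μ)⁻¹ * (((j : ℝ) * Real.log μ) * X ω) := by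
          field_simp
        rw [e1]
        refine mul_le_mul_of_nonneg_left ?_ (inv_nonneg.mpr hlogμ.le)
        nlinarith [mul_le_mul_of_nonneg_right hlogX (hXnn ω)]
      nlinarith [hXnn ω]
    · push_neg at h
      rw [Finset.sum_eq_zero (fun k hk => by
        rw [Set.indicator_of_notMem (h k hk)]; ring)]
      exact hGnn ω
  -- summability of (k+1) * b k
  have hsum1 : Summable (fun k : ℕ => ((k : ℝ) + 1) * b k) := by
    refine summable_of_sum_range_le (c := ∫ ω, G ω)
      (fun k => mul_nonneg (add_nonneg (Nat.cast_nonneg k) zero_le_one) (hb0 k)) (fun n => ?_)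
    have : ∑ k ∈ Finset.range n, ((k : ℝ) + 1) * b k
        = ∫ ω, ∑ k ∈ Finset.range n, ((k : ℝ) + 1) * Set.indicator (E k) X ω := by
      rw [integral_finset_sum _ (fun k _ => (hind_int k).const_mul _)]
      simp_rw [hb, integral_const_mul]
    rw [this]
    exact integral_mono (integrable_finset_sum _ (fun k _ => (hind_int k).const_mul _))
      hGint (fun ω => hkey n ω)
  -- conclusion
  intro p hp
  obtain ⟨hp1, hp2⟩ := hp
  show Summable (fun k : ℕ => (b k) ^ (1 / p))
  rcases eq_or_lt_of_le hp1 with hp1' | hp1'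
  · -- p = 1
    subst hp1'
    simp only [div_one, Real.rpow_one]
    exact hsum1.of_nonneg_of_le hb0
      (fun k => le_mul_of_one_le_left (hb0 k) (le_add_of_nonneg_left (Nat.cast_nonneg k)))
  · -- 1 < p < 2
    have hp0 : (0:ℝ) < p := lt_trans one_pos hp1'
    set q : ℝ := p / (p - 1) with hq
    have hpq : p.HolderConjugate q := Real.HolderConjugate.conjExponent hp1'
    have hq0 : 0 < q := hpq.symm.pos
    have hqpe : q / p = (p - 1)⁻¹ := by
      rw [hq, div_div, mul_comm (p-1) p, ← div_div, div_self hp0.ne', one_div]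
    have hqp1 : 1 < q / p := by
      rw [hqpe]
      exact one_lt_inv_iff₀.mpr ⟨by linarith, by linarith⟩
    -- summability of the tail sequence
    have hsum2 : Summable (fun k : ℕ => (((k : ℝ) + 1)⁻¹) ^ (q / p)) := by
      have h1 : Summable (fun n : ℕ => ((n : ℝ)) ^ (-(q / p))) :=
        Real.summable_nat_rpow.mpr (by linarith)
      have h2 := (_root_.summable_nat_add_iff 1).mpr h1
      refine h2.congr fun k => ?_
      have hk : (0:ℝ) ≤ (k : ℝ) + 1 := by positivity
      push_cast
      rw [Real.inv_rpow hk, ← Real.rpow_neg hk]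
    refine Summable.of_nonneg_of_le (fun k => Real.rpow_nonneg (hb0 k) _)
      (fun k => ?_) ((hsum1.div_const p).add (hsum2.div_const q))
    · 
      have hk1 : (0:ℝ) < (k : ℝ) + 1 := by positivity
      set c : ℝ := ((k : ℝ) + 1) * b k with hc
      have hc0 : 0 ≤ c := mul_nonneg (by positivity) (hb0 k)
      have hbk : b k = c * ((k : ℝ) + 1)⁻¹ := by
        rw [hc]; field_simp
      rw [hbk, Real.mul_rpow hc0 (by positivity)]
      calc c ^ (1/p) * (((k : ℝ) + 1)⁻¹) ^ (1/p)
          ≤ (c ^ (1/p)) ^ p / p + ((((k : ℝ) + 1)⁻¹) ^ (1/p)) ^ q / q :=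
            Real.young_inequality_of_nonneg (Real.rpow_nonneg hc0 _)
              (Real.rpow_nonneg (by positivity) _) hpq
        _ = c / p + (((k : ℝ) + 1)⁻¹) ^ (q / p) / q := by
            rw [← Real.rpow_mul hc0, ← Real.rpow_mul (by positivity : (0:ℝ) ≤ ((k:ℝ)+1)⁻¹),
              one_div_mul_cancel (ne_of_gt hp0), Real.rpow_one]
            ring_nf
end

section
/- Let θ be a positive random variable with μ := E[θ] ∈ (1,∞) and E[θ log⁺θ] < ∞. Then for every T > 0, ∑_{n≥1} (T μ^{n−1}) · P(|θ − μ| > μ^n) < ∞. -/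
open MeasureTheory ProbabilityTheory

lemma aux_geom_sum (μ : ℝ) (hμ : 1 < μ) (x : ℝ) (hx : 0 < x) :
    (∑' n : ℕ, (if μ ^ (n + 1) < x then ENNReal.ofReal (μ ^ n) else 0)) ≤
      ENNReal.ofReal (x / (μ - 1)) := by
  have hex : ∃ n : ℕ, x ≤ μ ^ (n + 1) := by
    obtain ⟨n, hn⟩ := pow_unbounded_of_one_lt x hμ
    exact ⟨n, le_trans hn.le (pow_le_pow_right₀ hμ.le (Nat.le_succ n))⟩
  set N := Nat.find hex with hN
  have hNspec : x ≤ μ ^ (N + 1) := Nat.find_spec hex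
  have hzero : ∀ n ∉ Finset.range N,
      (if μ ^ (n + 1) < x then ENNReal.ofReal (μ ^ n) else 0) = 0 := by
    intro n hn
    rw [Finset.mem_range, not_lt] at hn
    have : μ ^ (N + 1) ≤ μ ^ (n + 1) :=
      pow_le_pow_right₀ hμ.le (by omega)
    rw [if_neg (not_lt.2 (hNspec.trans this))]
  rw [tsum_eq_sum hzero]
  have h1 : (∑ n ∈ Finset.range N, (if μ ^ (n + 1) < x then ENNReal.ofReal (μ ^ n) else 0)) ≤
      ∑ n ∈ Finset.range N, ENNReal.ofReal (μ ^ n) := by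
    apply Finset.sum_le_sum
    intro n _
    split_ifs <;> simp
  refine h1.trans ?_
  rw [← ENNReal.ofReal_sum_of_nonneg (fun n _ => pow_nonneg (by linarith) n)]
  apply ENNReal.ofReal_le_ofReal
  rw [geom_sum_eq (by linarith : μ ≠ 1)]
  apply div_le_div_of_nonneg_right _ (by linarith)
  -- goal : μ ^ N - 1 ≤ x
  rcases Nat.eq_zero_or_pos N with h0 | hpos
  · simp [h0]; linarith
  · obtain ⟨m, hm⟩ := Nat.exists_eq_succ_of_ne_zero hpos.ne'
    have hmin := Nat.find_min hex (m := m) (by omega)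
    push_neg at hmin
    have hlt : μ ^ (m + 1) < x := hmin
    rw [hm, Nat.succ_eq_add_one]
    linarith

/-- If `θ > 0`, `μ = E θ ∈ (1,∞)` and `E[θ log⁺ θ] < ∞`, then for every `T > 0` the series
`∑_{n ≥ 1} T μ^{n-1} ℙ(|θ - μ| > μ^n)` converges. (Index `n : ℕ` corresponds to `n+1 ≥ 1`.) -/
theorem stmt1 {Ω : Type*} [MeasureSpace Ω] [IsProbabilityMeasure (ℙ : Measure Ω)]
    (θ : Ω → ℝ) (hθmeas : Measurable θ) (hθpos : ∀ ω, 0 < θ ω)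
    (hθint : Integrable θ) (μ : ℝ) (hμ : μ = ∫ ω, θ ω) (hμgt : 1 < μ)
    (hlog : Integrable (fun ω => θ ω * max (Real.log (θ ω)) 0))
    (T : ℝ) (hT : 0 < T) :
    Summable (fun n : ℕ =>
      T * μ ^ n * (ℙ {ω | μ ^ (n + 1) < |θ ω - μ|}).toReal) := by
  have hμ0 : (0:ℝ) < μ := by linarith
  set B : ℕ → Set Ω := fun n => {ω | μ ^ (n + 1) < θ ω} with hB
  have hBmeas : ∀ n, MeasurableSet (B n) := fun n =>
    measurableSet_lt measurable_const hθmeas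
  -- subset relation
  have hsub : ∀ n, {ω | μ ^ (n + 1) < |θ ω - μ|} ⊆ B n := by
    intro n ω hω
    simp only [Set.mem_setOf_eq] at hω
    show μ ^ (n + 1) < θ ω
    have hμn : μ ≤ μ ^ (n + 1) := by
      calc μ = μ ^ 1 := (pow_one μ).symm
      _ ≤ μ ^ (n + 1) := pow_le_pow_right₀ hμgt.le (by omega)
    rcases lt_abs.mp hω with h | h
    · linarith
    · have := hθpos ω; linarith
  -- key finiteness in ℝ≥0∞
  have key : (∑' n : ℕ, ENNReal.ofReal (μ ^ n) * ℙ (B n)) < ⊤ := by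
    have heq : ∀ n : ℕ, ENNReal.ofReal (μ ^ n) * ℙ (B n) =
        ∫⁻ ω, (B n).indicator (fun _ => ENNReal.ofReal (μ ^ n)) ω := by
      intro n
      rw [lintegral_indicator_const (hBmeas n)]
    calc (∑' n : ℕ, ENNReal.ofReal (μ ^ n) * ℙ (B n))
        = ∑' n : ℕ, ∫⁻ ω, (B n).indicator (fun _ => ENNReal.ofReal (μ ^ n)) ω := by
          exact tsum_congr heq
      _ = ∫⁻ ω, ∑' n : ℕ, (B n).indicator (fun _ => ENNReal.ofReal (μ ^ n)) ω :=
          (lintegral_tsum (fun n =>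
            ((measurable_const.indicator (hBmeas n)).aemeasurable))).symm
      _ ≤ ∫⁻ ω, ENNReal.ofReal (θ ω / (μ - 1)) := by
          apply lintegral_mono
          intro ω
          have hind : ∀ n : ℕ, (B n).indicator (fun _ => ENNReal.ofReal (μ ^ n)) ω =
              (if μ ^ (n + 1) < θ ω then ENNReal.ofReal (μ ^ n) else 0) := by
            intro n
            simp [Set.indicator_apply, hB, Set.mem_setOf_eq]
          refine le_trans (le_of_eq (tsum_congr hind)) ?_
          exact aux_geom_sum μ hμgt (θ ω) (hθpos ω)
      _ < ⊤ := (hθint.div_const (μ - 1)).lintegral_lt_top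
  have hsummB : Summable (fun n : ℕ => μ ^ n * (ℙ (B n)).toReal) := by
    have := ENNReal.summable_toReal key.ne
    convert this using 2 with n
    rw [ENNReal.toReal_mul, ENNReal.toReal_ofReal (pow_nonneg hμ0.le n)]
  apply Summable.of_nonneg_of_le
    (fun n => by positivity)
    (fun n => ?_) (hsummB.mul_left T)
  rw [mul_assoc]
  apply mul_le_mul_of_nonneg_left _ hT.le
  apply mul_le_mul_of_nonneg_left _ (pow_nonneg hμ0.le n)
  exact ENNReal.toReal_mono (measure_ne_top _ _) (measure_mono (hsub n))
end

section
/- Let (θ_k^{(n)})_{n,k ∈ ℕ} be an array of i.i.d. copies of a positive random variable θ with μ := E[θ] ∈ (1,∞) and E[θ log⁺θ] < ∞, and define the random walks R^{(n)}(k) = θ_1^{(n)} + ⋯ + θ_k^{(n)}, R^{(n)}(0) = 0. Then for every T > 0, almost surely ∑_{n≥1} sup_{t ∈ [0,T]} |μ^{−n} R^{(n)}(⌊t μ^{n−1}⌋) − t| < ∞. -/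
/-!
Fix a row, write `S k` for its partial sums and `m = E θ`, and put `s = m ^ (n / 8)`, so that
`m ^ n = s ^ 8`. Each summand is split at level `c = s ^ 2` into `min θ c` and `θ - min θ c`.
Since the walk is monotone, the supremum of `|S k - k m|` over `k ≤ T m ^ n` is controlled, up to
one grid step `q ≈ s ^ 4`, by its values on the grid `q ℕ`. On the `≈ T s ^ 4` grid points the
truncated part is handled in `L²`: by `|x| ≤ ε / 2 + x ^ 2 / (2 ε)` with `ε = s ^ 7`, its maximum
has expectation `O(s ^ 7)`, which is `O(s⁻¹)` after division by `m ^ (n + 1)`. The remainder costs at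
most `2 (T + 2) m ^ n E[θ - min θ c]`, and `∑ₙ E[θ - min θ (r ^ n)] < ∞` for `r > 1` is exactly the
`θ log⁺ θ` condition. So the rescaled row suprema are dominated by nonnegative variables with
summable expectations, hence are almost surely summable.
-/

open MeasureTheory ProbabilityTheory Finset
open scoped ENNReal

lemma abs_le_half_add_sq_div {ε : ℝ} (hε : 0 < ε) (x : ℝ) : |x| ≤ ε / 2 + x ^ 2 / (2 * ε) := by
  rw [div_add_div _ _ two_ne_zero (by positivity), le_div_iff₀ (by positivity)]
  nlinarith [sq_nonneg (|x| - ε), sq_abs x]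

lemma Monotone.abs_sub_mul_le_of_grid {S : ℕ → ℝ} (hS : Monotone S) {m w : ℝ} (hm : 0 ≤ m)
    {q M k : ℕ} (hk : k < M * q) (hgrid : ∀ j ≤ M, |S (j * q) - (j * q : ℕ) * m| ≤ w) :
    |S k - k * m| ≤ w + q * m := by
  have hq : 0 < q := Nat.pos_of_ne_zero (by rintro rfl; simp at hk)
  set j := k / q
  have hjk : j * q ≤ k := Nat.div_mul_le_self k q
  have hkj : k ≤ (j + 1) * q := by rw [add_one_mul]; exact (Nat.lt_div_mul_add hq).le
  have hjM : j < M := Nat.div_lt_of_lt_mul (by rwa [mul_comm] at hk)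
  have hlow := abs_le.1 (hgrid j hjM.le)
  have hhigh := abs_le.1 (hgrid (j + 1) hjM)
  have hSlow : S (j * q) ≤ S k := hS hjk
  have hShigh : S k ≤ S ((j + 1) * q) := hS hkj
  have hklow : ((j * q : ℕ) : ℝ) * m ≤ k * m := by gcongr
  have hkhigh : (k : ℝ) * m ≤ ((j + 1) * q : ℕ) * m := by gcongr
  have hstep : (((j + 1) * q : ℕ) : ℝ) * m = (j * q : ℕ) * m + q * m := by push_cast; ring
  rw [abs_le]
  constructor <;> linarith

lemma abs_sum_range_add_sub_le {a b : ℕ → ℝ} (hb : ∀ i, 0 ≤ b i) {α β : ℝ} (hβ : 0 ≤ β)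
    {k N : ℕ} (hkN : k ≤ N) :
    |∑ i ∈ range k, (a i + b i) - k * (α + β)|
      ≤ |∑ i ∈ range k, a i - k * α| + (∑ i ∈ range N, b i + N * β) := by
  have hsum : ∑ i ∈ range k, b i ≤ ∑ i ∈ range N, b i :=
    sum_le_sum_of_subset_of_nonneg (range_subset_range.2 hkN) fun i _ _ => hb i
  have hmean : (k : ℝ) * β ≤ N * β := by gcongr
  have hsum0 : 0 ≤ ∑ i ∈ range k, b i := sum_nonneg fun i _ => hb i
  calc |∑ i ∈ range k, (a i + b i) - k * (α + β)|
      = |(∑ i ∈ range k, a i - k * α) + (∑ i ∈ range k, b i - k * β)| := by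
        rw [sum_add_distrib]; ring_nf
    _ ≤ |∑ i ∈ range k, a i - k * α| + |∑ i ∈ range k, b i - k * β| := abs_add_le _ _
    _ ≤ _ := by
        gcongr
        rw [abs_le]
        constructor <;> nlinarith

lemma abs_sum_range_sub_le_truncated {x : ℕ → ℝ} (c : ℝ) {ε mlow mhigh : ℝ} (hε : 0 < ε)
    (hmhigh : 0 ≤ mhigh) {j M q : ℕ} (hj : j ≤ M) :
    |∑ i ∈ range (j * q), x i - (j * q : ℕ) * (mlow + mhigh)|
      ≤ ε / 2 + (∑ l ∈ range (M + 1),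
          (∑ i ∈ range (l * q), min (x i) c - (l * q : ℕ) * mlow) ^ 2) / (2 * ε)
        + (∑ i ∈ range (M * q), (x i - min (x i) c) + (M * q : ℕ) * mhigh) := by
  set dev := fun l : ℕ => ∑ i ∈ range (l * q), min (x i) c - (l * q : ℕ) * mlow
  calc |∑ i ∈ range (j * q), x i - (j * q : ℕ) * (mlow + mhigh)|
      = |∑ i ∈ range (j * q), (min (x i) c + (x i - min (x i) c))
          - (j * q : ℕ) * (mlow + mhigh)| := by simp only [add_sub_cancel]
    _ ≤ |dev j| + (∑ i ∈ range (M * q), (x i - min (x i) c) + (M * q : ℕ) * mhigh) :=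
        abs_sum_range_add_sub_le (fun i => sub_nonneg.2 (min_le_left _ _)) hmhigh
          (Nat.mul_le_mul_right q hj)
    _ ≤ ε / 2 + dev j ^ 2 / (2 * ε)
          + (∑ i ∈ range (M * q), (x i - min (x i) c) + (M * q : ℕ) * mhigh) := by
        gcongr
        exact abs_le_half_add_sq_div hε _
    _ ≤ _ := by
        gcongr
        exact single_le_sum (f := fun l => dev l ^ 2) (fun l _ => sq_nonneg _)
          (mem_range.2 (Nat.lt_succ_of_le hj))

lemma sum_range_sub_min_pow_le {x r : ℝ} (hx : 0 ≤ x) (hr : 1 < r) (N : ℕ) :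
    ∑ n ∈ range N, (x - min x (r ^ n)) ≤ x * max (Real.log x) 0 / Real.log r + x := by
  have hlogr : 0 < Real.log r := Real.log_pos hr
  set L := ⌊max (Real.log x) 0 / Real.log r⌋₊
  have hvanish : ∀ n, L < n → x ≤ r ^ n := by
    intro n hn
    rcases hx.eq_or_lt with rfl | hx0
    · positivity
    have := (Nat.floor_lt (by positivity)).1 hn
    rw [div_lt_iff₀ hlogr] at this
    rw [← Real.log_le_log_iff hx0 (by positivity), Real.log_pow]
    linarith [le_max_left (Real.log x) 0]
  have hterm : ∀ n ∈ range N, x - min x (r ^ n) ≤ if n ≤ L then x else 0 := by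
    intro n _
    split_ifs with hn
    · linarith [le_min hx (by positivity : (0 : ℝ) ≤ r ^ n)]
    · simp [hvanish n (not_le.1 hn)]
  have hcard : #{n ∈ range N | n ≤ L} ≤ L + 1 :=
    (card_le_card fun n => by simp).trans (card_range _).le
  have hL : (L : ℝ) ≤ max (Real.log x) 0 / Real.log r := Nat.floor_le (by positivity)
  calc ∑ n ∈ range N, (x - min x (r ^ n))
      ≤ ∑ n ∈ range N, if n ≤ L then x else 0 := sum_le_sum hterm
    _ = #{n ∈ range N | n ≤ L} * x := by rw [← sum_filter, sum_const, nsmul_eq_mul]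
    _ ≤ (L + 1) * x := by gcongr; exact_mod_cast hcard
    _ ≤ _ := by
        rw [mul_div_assoc]
        nlinarith

lemma row_bound_le {m s A E : ℝ} {M q : ℕ} (hm : 0 < m) (hs : 1 ≤ s) (hE : 0 ≤ E)
    (hM : (M : ℝ) + 1 ≤ A * s ^ 4) (hMq : (M : ℝ) * q ≤ A * s ^ 8) (hq : (q : ℝ) ≤ 2 * s ^ 4) :
    (s ^ 8 * m)⁻¹ * (s ^ 7 / 2 + (M + 1) * (M * q) * (s ^ 2 * m) / (2 * s ^ 7)
      + 2 * (M * q) * E + q * m) ≤ (1 / (2 * m) + A ^ 2 / 2 + 2) * s⁻¹ + 2 * A / m * E := by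
  have hs0 : 0 < s := by linarith
  have hsq : ((M : ℝ) + 1) * (M * q) ≤ A ^ 2 * s ^ 12 := by
    calc ((M : ℝ) + 1) * (M * q) ≤ (A * s ^ 4) * (A * s ^ 8) :=
          mul_le_mul hM hMq (by positivity) (by linarith)
      _ = A ^ 2 * s ^ 12 := by ring
  have hsplit : (s ^ 8 * m)⁻¹ * (s ^ 7 / 2 + (M + 1) * (M * q) * (s ^ 2 * m) / (2 * s ^ 7)
      + 2 * (M * q) * E + q * m) = 1 / (2 * m) * s⁻¹ + (M + 1) * (M * q) / (2 * s ^ 13)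
        + 2 * (M * q) * E / (s ^ 8 * m) + q / s ^ 8 := by
    field_simp
  have hterm₂ : ((M : ℝ) + 1) * (M * q) / (2 * s ^ 13) ≤ A ^ 2 / 2 * s⁻¹ := by
    rw [div_le_iff₀ (by positivity)]
    calc ((M : ℝ) + 1) * (M * q) ≤ A ^ 2 * s ^ 12 := hsq
      _ = A ^ 2 / 2 * s⁻¹ * (2 * s ^ 13) := by field_simp
  have hterm₃ : 2 * ((M : ℝ) * q) * E / (s ^ 8 * m) ≤ 2 * A / m * E := by
    rw [div_le_iff₀ (by positivity)]
    calc 2 * ((M : ℝ) * q) * E ≤ 2 * (A * s ^ 8) * E := by gcongr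
      _ = 2 * A / m * E * (s ^ 8 * m) := by field_simp
  have hterm₄ : (q : ℝ) / s ^ 8 ≤ 2 * s⁻¹ := by
    rw [div_le_iff₀ (by positivity)]
    calc (q : ℝ) ≤ 2 * s ^ 4 := hq
      _ ≤ 2 * s ^ 7 := by gcongr; norm_num
      _ = 2 * s⁻¹ * s ^ 8 := by field_simp
  rw [hsplit]
  linarith

lemma grid_size_le {T s : ℝ} (hT : 0 ≤ T) (hs : 1 ≤ s) {K q : ℕ} (hK : (K : ℝ) ≤ T * s ^ 8)
    (hq₁ : s ^ 4 ≤ q) (hq₂ : (q : ℝ) ≤ 2 * s ^ 4) :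
    ((K / q + 1 : ℕ) : ℝ) + 1 ≤ (T + 2) * s ^ 4 ∧ ((K / q + 1 : ℕ) : ℝ) * q ≤ (T + 2) * s ^ 8 := by
  have hs4 : 1 ≤ s ^ 4 := one_le_pow₀ hs
  have hdiv : ((K / q : ℕ) : ℝ) ≤ T * s ^ 4 := by
    calc ((K / q : ℕ) : ℝ) ≤ K / q := Nat.cast_div_le
      _ ≤ T * s ^ 8 / s ^ 4 := div_le_div₀ (by positivity) hK (by positivity) hq₁
      _ = T * s ^ 4 := by field_simp
  have hmul : ((K / q : ℕ) : ℝ) * q ≤ K := by exact_mod_cast Nat.div_mul_le_self K q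
  push_cast
  constructor
  · nlinarith
  · nlinarith [pow_le_pow_right₀ hs (show 4 ≤ 8 by norm_num)]

lemma iSup_abs_inv_pow_mul_sum_floor_sub_le {S : ℕ → ℝ} {m T z : ℝ} (hm : 0 < m) (n : ℕ)
    (hS : ∀ k ≤ ⌊T * m ^ n⌋₊, |S k - k * m| ≤ m ^ (n + 1) * z) :
    ⨆ t : Set.Icc (0 : ℝ) T, |(m ^ (n + 1))⁻¹ * S ⌊(t : ℝ) * m ^ n⌋₊ - t| ≤ z + m⁻¹ ^ n := by
  have hz : 0 ≤ z := nonneg_of_mul_nonneg_right ((abs_nonneg _).trans (hS 0 (Nat.zero_le _)))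
    (by positivity)
  refine Real.iSup_le (fun ⟨t, ht₀, htT⟩ => ?_) (by positivity)
  set k := ⌊t * m ^ n⌋₊
  have hkT : k ≤ ⌊T * m ^ n⌋₊ := Nat.floor_le_floor (by gcongr)
  have hk₁ : (k : ℝ) ≤ t * m ^ n := Nat.floor_le (by positivity)
  have hk₂ : t * m ^ n < k + 1 := Nat.lt_floor_add_one _
  have hdisc : |k * m - t * m ^ (n + 1)| ≤ m := by
    rw [pow_succ, abs_le]
    constructor <;> nlinarith
  have hsplit : (m ^ (n + 1))⁻¹ * S k - t
      = (m ^ (n + 1))⁻¹ * ((S k - k * m) + (k * m - t * m ^ (n + 1))) := by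
    field_simp
    ring
  calc |(m ^ (n + 1))⁻¹ * S k - t|
      = (m ^ (n + 1))⁻¹ * |(S k - k * m) + (k * m - t * m ^ (n + 1))| := by
        rw [hsplit, abs_mul, abs_of_pos (by positivity)]
    _ ≤ (m ^ (n + 1))⁻¹ * (m ^ (n + 1) * z + m) := by
        gcongr
        exact (abs_add_le _ _).trans (add_le_add (hS k hkT) hdisc)
    _ = z + m⁻¹ ^ n := by
        rw [inv_pow]
        field_simp
        ring

section Probability

variable {Ω : Type*} {mΩ : MeasurableSpace Ω} {P : Measure Ω}

lemma ae_summable_of_summable_integral {f : ℕ → Ω → ℝ} (hf : ∀ n, Integrable (f n) P)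
    (hf0 : ∀ n, 0 ≤ᵐ[P] f n) (hsum : Summable fun n => ∫ ω, f n ω ∂P) :
    ∀ᵐ ω ∂P, Summable fun n => f n ω := by
  have hnorm : ∀ n, eLpNorm (f n) 1 P = ENNReal.ofReal (∫ ω, f n ω ∂P) := fun n => by
    rw [eLpNorm_one_eq_lintegral_enorm, ← ofReal_integral_norm_eq_lintegral_enorm (hf n)]
    congr 1
    exact integral_congr_ae ((hf0 n).mono fun ω hω => Real.norm_of_nonneg hω)
  have hfin : ∑' n, eLpNorm (f n) 1 P ≠ ⊤ := by
    simp_rw [hnorm]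
    rw [← ENNReal.ofReal_tsum_of_nonneg (fun n => integral_nonneg_of_ae (hf0 n)) hsum]
    exact ENNReal.ofReal_ne_top
  filter_upwards [summable_norm_of_tsum_eLpNorm_ne_top le_rfl
    (fun n => (hf n).aestronglyMeasurable) hfin, ae_all_iff.2 hf0] with ω hω hω0
  exact hω.congr fun n => Real.norm_of_nonneg (hω0 n)

lemma integral_sum_range_of_identDistrib {Y : ℕ → Ω → ℝ} {Y₀ : Ω → ℝ} (hY₀ : Integrable Y₀ P)
    (hid : ∀ i, IdentDistrib (Y i) Y₀ P P) (k : ℕ) :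
    ∫ ω, ∑ i ∈ range k, Y i ω ∂P = k * ∫ ω, Y₀ ω ∂P := by
  rw [integral_finsetSum _ fun i _ => (hid i).symm.integrable_snd hY₀]
  simp [fun i => (hid i).integral_eq]

lemma summable_integral_sub_min_pow [IsFiniteMeasure P] {X : Ω → ℝ} (hX0 : 0 ≤ᵐ[P] X)
    (hX : Integrable X P)
    (hlog : Integrable (fun ω => X ω * max (Real.log (X ω)) 0) P) {r : ℝ} (hr : 1 < r) :
    Summable fun n : ℕ => ∫ ω, (X ω - min (X ω) (r ^ n)) ∂P := by
  have hint : ∀ n : ℕ, Integrable (fun ω => X ω - min (X ω) (r ^ n)) P := fun n =>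
    hX.sub (hX.inf (integrable_const _))
  refine summable_of_sum_range_le
    (c := ∫ ω, (X ω * max (Real.log (X ω)) 0 / Real.log r + X ω) ∂P)
    (fun n => integral_nonneg fun ω => sub_nonneg.2 (min_le_left _ _)) fun N => ?_
  rw [← integral_finsetSum _ fun n _ => hint n]
  refine integral_mono_ae (integrable_finsetSum _ fun n _ => hint n)
    ((hlog.div_const _).add hX) ?_
  filter_upwards [hX0] with ω hω
  exact sum_range_sub_min_pow_le hω hr N

lemma memLp_min_of_nonneg [IsFiniteMeasure P] {X : Ω → ℝ} (hX0 : 0 ≤ᵐ[P] X)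
    (hX : AEMeasurable X P) {c : ℝ} (hc : 0 ≤ c) (p : ℝ≥0∞) : MemLp (fun ω => min (X ω) c) p P := by
  refine (memLp_top_of_bound (hX.min aemeasurable_const).aestronglyMeasurable c ?_).mono_exponent
    le_top
  filter_upwards [hX0] with ω (hω : 0 ≤ X ω)
  rw [Real.norm_of_nonneg (le_min hω hc)]
  exact min_le_right _ _

variable [IsProbabilityMeasure P]

lemma variance_min_le {X : Ω → ℝ} (hX0 : 0 ≤ᵐ[P] X) (hX : Integrable X P) {c : ℝ} (hc : 0 ≤ c) :
    Var[fun ω => min (X ω) c; P] ≤ c * ∫ ω, X ω ∂P := by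
  refine (variance_le_expectation_sq
    (hX.aemeasurable.min aemeasurable_const).aestronglyMeasurable).trans ?_
  rw [← integral_const_mul]
  refine integral_mono_of_nonneg (ae_of_all _ fun ω => sq_nonneg _) (hX.const_mul c) ?_
  filter_upwards [hX0] with ω hω
  have h0 : 0 ≤ min (X ω) c := le_min hω hc
  simp only [Pi.pow_apply]
  nlinarith [min_le_left (X ω) c, min_le_right (X ω) c]

lemma integral_sq_sum_range_sub {Y : ℕ → Ω → ℝ} {Y₀ : Ω → ℝ} (hY : ∀ i, MemLp (Y i) 2 P)
    (hind : Pairwise fun i j => Y i ⟂ᵢ[P] Y j) (hid : ∀ i, IdentDistrib (Y i) Y₀ P P) (k : ℕ) :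
    ∫ ω, (∑ i ∈ range k, Y i ω - k * ∫ ω, Y₀ ω ∂P) ^ 2 ∂P = k * Var[Y₀; P] := by
  have hmean := integral_sum_range_of_identDistrib
    ((hid 0).memLp_snd (hY 0) |>.integrable one_le_two) hid k
  have hvar := IndepFun.variance_sum (fun i _ => hY i) (hind.set_pairwise (range k : Set ℕ))
  rw [sum_congr rfl fun i _ => (hid i).variance_eq, sum_const, card_range, nsmul_eq_mul,
    variance_eq_integral (memLp_finsetSum' _ fun i _ => hY i).aemeasurable] at hvar
  simpa [Finset.sum_apply, hmean] using hvar

lemma integral_sum_sq_grid_le {Y : ℕ → Ω → ℝ} {Y₀ : Ω → ℝ} (hY : ∀ i, MemLp (Y i) 2 P)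
    (hind : Pairwise fun i j => Y i ⟂ᵢ[P] Y j) (hid : ∀ i, IdentDistrib (Y i) Y₀ P P) (M q : ℕ) :
    Integrable (fun ω => ∑ j ∈ range (M + 1),
      (∑ i ∈ range (j * q), Y i ω - (j * q : ℕ) * ∫ ω, Y₀ ω ∂P) ^ 2) P ∧
    ∫ ω, ∑ j ∈ range (M + 1), (∑ i ∈ range (j * q), Y i ω - (j * q : ℕ) * ∫ ω, Y₀ ω ∂P) ^ 2 ∂P
      ≤ (M + 1) * (M * q) * Var[Y₀; P] := by
  have hint (j : ℕ) : Integrable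
      (fun ω => (∑ i ∈ range (j * q), Y i ω - (j * q : ℕ) * ∫ ω, Y₀ ω ∂P) ^ 2) P :=
    ((memLp_finsetSum _ fun i _ => hY i).sub (memLp_const _)).integrable_sq
  refine ⟨integrable_finsetSum _ fun j _ => hint j, ?_⟩
  rw [integral_finsetSum _ fun j _ => hint j]
  calc ∑ j ∈ range (M + 1), ∫ ω, (∑ i ∈ range (j * q), Y i ω - (j * q : ℕ) * ∫ ω, Y₀ ω ∂P) ^ 2 ∂P
      = ∑ j ∈ range (M + 1), ((j * q : ℕ) : ℝ) * Var[Y₀; P] :=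
        sum_congr rfl fun j _ => integral_sq_sum_range_sub hY hind hid (j * q)
    _ ≤ ∑ _j ∈ range (M + 1), (M * q) * Var[Y₀; P] := by
        refine sum_le_sum fun j hj => ?_
        have hjq : j * q ≤ M * q := Nat.mul_le_mul_right q (Nat.lt_succ_iff.1 (mem_range.1 hj))
        gcongr
        · exact variance_nonneg _ _
        · exact_mod_cast hjq
    _ = (M + 1) * (M * q) * Var[Y₀; P] := by simp [mul_assoc]

theorem exists_dominator_abs_sum_range_sub {X : ℕ → Ω → ℝ} {X₀ : Ω → ℝ}
    (hind : Pairwise fun i j => X i ⟂ᵢ[P] X j) (hid : ∀ i, IdentDistrib (X i) X₀ P P)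
    (hX₀ : 0 ≤ᵐ[P] X₀) (hint : Integrable X₀ P) {c ε : ℝ} (hc : 0 ≤ c) (hε : 0 < ε) (M q : ℕ) :
    ∃ W : Ω → ℝ, Integrable W P ∧ 0 ≤ W ∧
      ∫ ω, W ω ∂P ≤ ε / 2 + (M + 1) * (M * q) * (c * ∫ ω, X₀ ω ∂P) / (2 * ε)
        + 2 * (M * q) * ∫ ω, (X₀ ω - min (X₀ ω) c) ∂P + q * ∫ ω, X₀ ω ∂P ∧
      ∀ᵐ ω ∂P, ∀ k < M * q, |∑ i ∈ range k, X i ω - k * ∫ ω, X₀ ω ∂P| ≤ W ω := by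
  set m := ∫ ω, X₀ ω ∂P
  set mlow := ∫ ω, min (X₀ ω) c ∂P
  set mhigh := ∫ ω, (X₀ ω - min (X₀ ω) c) ∂P
  have hlow_meas : Measurable fun x : ℝ => min x c := measurable_id.min measurable_const
  have hlow_int : Integrable (fun ω => min (X₀ ω) c) P := hint.inf (integrable_const c)
  have hm : m = mlow + mhigh := by
    have := integral_add hlow_int (hint.sub hlow_int)
    simpa only [Pi.sub_apply, add_sub_cancel] using this
  have hid_low (i : ℕ) : IdentDistrib (fun ω => min (X i ω) c) (fun ω => min (X₀ ω) c) P P :=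
    (hid i).comp hlow_meas
  have hid_high (i : ℕ) :
      IdentDistrib (fun ω => X i ω - min (X i ω) c) (fun ω => X₀ ω - min (X₀ ω) c) P P :=
    (hid i).comp (measurable_id.sub hlow_meas)
  have hhigh_int (i : ℕ) : Integrable (fun ω => X i ω - min (X i ω) c) P :=
    (hid_high i).symm.integrable_snd (hint.sub hlow_int)
  have hmhigh0 : 0 ≤ mhigh := integral_nonneg fun ω => sub_nonneg.2 (min_le_left _ _)
  obtain ⟨hsq_int, hsq⟩ := integral_sum_sq_grid_le
    (fun i => (hid_low i).symm.memLp_snd (memLp_min_of_nonneg hX₀ hint.aemeasurable hc 2))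
    (fun i j hij => (hind hij).comp hlow_meas hlow_meas) hid_low M q
  set sq : Ω → ℝ := fun ω => ∑ j ∈ range (M + 1),
    (∑ i ∈ range (j * q), min (X i ω) c - (j * q : ℕ) * mlow) ^ 2
  set tail : Ω → ℝ := fun ω => ∑ i ∈ range (M * q), (X i ω - min (X i ω) c) + (M * q : ℕ) * mhigh
  have htail_int : Integrable tail P :=
    (integrable_finsetSum _ fun i _ => hhigh_int i).add (integrable_const _)
  have htail : ∫ ω, tail ω ∂P = 2 * (M * q) * mhigh := by
    rw [integral_add (integrable_finsetSum _ fun i _ => hhigh_int i) (integrable_const _),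
      integral_sum_range_of_identDistrib (Y₀ := fun ω => X₀ ω - min (X₀ ω) c)
        (hint.sub hlow_int) hid_high]
    simp only [integral_const, probReal_univ, one_smul]
    push_cast
    ring
  have hsq_int' : Integrable (fun ω => ε / 2 + sq ω / (2 * ε)) P :=
    (integrable_const _).add (hsq_int.div_const _)
  refine ⟨fun ω => ε / 2 + sq ω / (2 * ε) + tail ω + q * m, (hsq_int'.add htail_int).add
    (integrable_const _), fun ω => ?_, ?_, ?_⟩
  · have : 0 ≤ tail ω := add_nonneg (sum_nonneg fun i _ => sub_nonneg.2 (min_le_left _ _))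
      (by positivity)
    have : 0 ≤ m := integral_nonneg_of_ae hX₀
    positivity
  · show ∫ ω, (ε / 2 + sq ω / (2 * ε) + tail ω + q * m) ∂P ≤ _
    rw [integral_add ?_ (integrable_const _), integral_add hsq_int' htail_int,
      integral_add (integrable_const _) (hsq_int.div_const _), integral_div (2 * ε), htail]
    swap
    · exact hsq_int'.add htail_int
    simp only [integral_const, probReal_univ, one_smul]
    gcongr
    exact hsq.trans (by gcongr; exact variance_min_le hX₀ hint hc)
  · filter_upwards [ae_all_iff.2 fun i => (hid i).symm.ae_snd (p := (0 ≤ ·)) measurableSet_Ici hX₀]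
      with ω hω k hk
    have hmono : Monotone fun k => ∑ i ∈ range k, X i ω :=
      monotone_nat_of_le_succ fun k => by rw [sum_range_succ]; linarith [hω k]
    refine hmono.abs_sub_mul_le_of_grid (integral_nonneg_of_ae hX₀) hk fun j hj => ?_
    rw [show ∫ ω, X₀ ω ∂P = mlow + mhigh from hm]
    exact abs_sum_range_sub_le_truncated c hε hmhigh0 hj

theorem exists_summable_row_dominators {X : ℕ → ℕ → Ω → ℝ} {X₀ : Ω → ℝ}
    (hind : ∀ n, Pairwise fun i j => X n i ⟂ᵢ[P] X n j)
    (hid : ∀ n i, IdentDistrib (X n i) X₀ P P) (hX₀ : 0 ≤ᵐ[P] X₀) (hint : Integrable X₀ P)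
    (hlog : Integrable (fun ω => X₀ ω * max (Real.log (X₀ ω)) 0) P)
    (hm : 1 < ∫ ω, X₀ ω ∂P) {T : ℝ} (hT : 0 ≤ T) :
    ∃ Z : ℕ → Ω → ℝ, (∀ n, Integrable (Z n) P) ∧ (∀ n ω, 0 ≤ Z n ω) ∧
      Summable (fun n => ∫ ω, Z n ω ∂P) ∧
      ∀ n, ∀ᵐ ω ∂P, ∀ k ≤ ⌊T * (∫ ω, X₀ ω ∂P) ^ n⌋₊,
        |∑ i ∈ range k, X n i ω - k * ∫ ω, X₀ ω ∂P| ≤ (∫ ω, X₀ ω ∂P) ^ (n + 1) * Z n ω := by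
  set m := ∫ ω, X₀ ω ∂P
  have hm0 : 0 < m := by linarith
  -- `b ^ n` is the scale `s` of row `n`
  set b := m ^ (8 : ℝ)⁻¹
  have hb : 1 < b := Real.one_lt_rpow hm (by norm_num)
  have hmb (n : ℕ) : m ^ n = (b ^ n) ^ 8 := by
    rw [← pow_mul, mul_comm, pow_mul]
    congr 1
    simpa using (Real.rpow_inv_natCast_pow hm0.le (n := 8) (by norm_num)).symm
  set q : ℕ → ℕ := fun n => ⌈(b ^ n) ^ 4⌉₊
  set M : ℕ → ℕ := fun n => ⌊T * m ^ n⌋₊ / q n + 1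
  have hrow (n : ℕ) := exists_dominator_abs_sum_range_sub (hind n) (hid n) hX₀ hint
    (c := (b ^ n) ^ 2) (ε := (b ^ n) ^ 7) (by positivity) (by positivity) (M n) (q n)
  choose W hWint hW0 hWle hW using hrow
  refine ⟨fun n ω => (m ^ (n + 1))⁻¹ * W n ω, fun n => (hWint n).const_mul _,
    fun n ω => mul_nonneg (by positivity) (hW0 n ω), ?_, fun n => ?_⟩
  · have htail := summable_integral_sub_min_pow hX₀ hint hlog (one_lt_pow₀ hb two_ne_zero)
    have hgeom :=
      summable_geometric_of_lt_one (inv_nonneg.2 (by positivity)) (inv_lt_one_of_one_lt₀ hb)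
    refine Summable.of_nonneg_of_le
      (fun n => integral_nonneg fun ω => mul_nonneg (by positivity) (hW0 n ω))
      (fun n => ?_) ((hgeom.mul_left (1 / (2 * m) + (T + 2) ^ 2 / 2 + 2)).add
        (htail.mul_left (2 * (T + 2) / m)))
    have hs : 1 ≤ b ^ n := one_le_pow₀ hb.le
    have hq₁ : (b ^ n) ^ 4 ≤ q n := Nat.le_ceil _
    have hq₂ : (q n : ℝ) ≤ 2 * (b ^ n) ^ 4 :=
      (Nat.ceil_lt_add_one (by positivity)).le.trans (by linarith [one_le_pow₀ (n := 4) hs])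
    obtain ⟨hM, hMq⟩ := grid_size_le hT hs (K := ⌊T * m ^ n⌋₊)
      (by rw [← hmb]; exact Nat.floor_le (by positivity)) hq₁ hq₂
    calc ∫ ω, (m ^ (n + 1))⁻¹ * W n ω ∂P
        ≤ ((b ^ n) ^ 8 * m)⁻¹ * ((b ^ n) ^ 7 / 2
            + (M n + 1) * (M n * q n) * ((b ^ n) ^ 2 * m) / (2 * (b ^ n) ^ 7)
            + 2 * (M n * q n) * ∫ ω, (X₀ ω - min (X₀ ω) ((b ^ n) ^ 2)) ∂P + q n * m) := by
          rw [integral_const_mul, pow_succ, hmb]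
          gcongr
          exact hWle n
      _ ≤ (1 / (2 * m) + (T + 2) ^ 2 / 2 + 2) * (b ^ n)⁻¹
            + 2 * (T + 2) / m * ∫ ω, (X₀ ω - min (X₀ ω) ((b ^ n) ^ 2)) ∂P :=
          row_bound_le hm0 hs (integral_nonneg fun ω => sub_nonneg.2 (min_le_left _ _)) hM hMq hq₂
      _ = _ := by rw [inv_pow, pow_right_comm]
  · filter_upwards [hW n] with ω hω k hk
    rw [mul_inv_cancel_left₀ (by positivity)]
    refine hω k (hk.trans_lt ?_)
    rw [add_one_mul]
    exact Nat.lt_div_mul_add (Nat.ceil_pos.2 (by positivity))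

end Probability

theorem stmt3_general {Ω : Type*} [MeasureSpace Ω] [IsProbabilityMeasure (ℙ : Measure Ω)]
    (θ : ℕ × ℕ → Ω → ℝ)
    (hindep : iIndepFun θ ℙ)
    (θ0 : Ω → ℝ) (hident : ∀ p, IdentDistrib (θ p) θ0 ℙ ℙ)
    (hpos : ∀ ω, 0 < θ0 ω) (hint : Integrable θ0)
    (μ : ℝ) (hμ : μ = ∫ ω, θ0 ω) (hμgt : 1 < μ)
    (hlog : Integrable (fun ω => θ0 ω * max (Real.log (θ0 ω)) 0)) :
    ∀ T : ℝ, 0 < T → ∀ᵐ ω ∂ℙ,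
      Summable (fun n : ℕ =>
        ⨆ t : Set.Icc (0 : ℝ) T,
          |(μ ^ (n + 1))⁻¹ * (∑ i ∈ Finset.range ⌊(t : ℝ) * μ ^ n⌋₊, θ (n + 1, i) ω)
            - (t : ℝ)|) := by
  intro T hT
  subst hμ
  obtain ⟨Z, hZint, hZ0, hZsum, hZ⟩ := exists_summable_row_dominators (X := fun n i => θ (n + 1, i))
    (fun n i j hij => hindep.indepFun (by simpa using hij)) (fun n i => hident _)
    (ae_of_all _ fun ω => (hpos ω).le) hint hlog hμgt hT.le
  filter_upwards [ae_summable_of_summable_integral hZint (fun n => ae_of_all _ (hZ0 n)) hZsum,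
    ae_all_iff.2 hZ] with ω hsum hbound
  exact (hsum.add (summable_geometric_of_lt_one (by positivity)
    (inv_lt_one_of_one_lt₀ hμgt))).of_nonneg_of_le
    (fun n => Real.iSup_nonneg fun _ => abs_nonneg _)
    fun n => iSup_abs_inv_pow_mul_sum_floor_sub_le (by linarith) n (hbound n)

/-- For an i.i.d. array `θ (n, k)` of copies of a positive random variable with mean
`μ ∈ (1,∞)` and `E[θ log⁺ θ] < ∞`, the random walks `R⁽ⁿ⁾(k) = θ (n,0) + ⋯ + θ (n,k-1)`
satisfy, for every `T > 0`, almost surely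
`∑_{n ≥ 1} sup_{t ∈ [0,T]} |μ^{-n} R⁽ⁿ⁾(⌊t μ^{n-1}⌋) - t| < ∞`.
(Index `n : ℕ` corresponds to the walk with label `n + 1 ≥ 1`.) -/
theorem stmt3 {Ω : Type*} [MeasureSpace Ω] [IsProbabilityMeasure (ℙ : Measure Ω)]
    (θ : ℕ × ℕ → Ω → ℝ) (hmeas : ∀ p, Measurable (θ p))
    (hindep : iIndepFun θ ℙ)
    (θ0 : Ω → ℝ) (hident : ∀ p, IdentDistrib (θ p) θ0 ℙ ℙ)
    (hpos : ∀ ω, 0 < θ0 ω) (hint : Integrable θ0)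
    (μ : ℝ) (hμ : μ = ∫ ω, θ0 ω) (hμgt : 1 < μ)
    (hlog : Integrable (fun ω => θ0 ω * max (Real.log (θ0 ω)) 0)) :
    ∀ T : ℝ, 0 < T → ∀ᵐ ω ∂ℙ,
      Summable (fun n : ℕ =>
        ⨆ t : Set.Icc (0 : ℝ) T,
          |(μ ^ (n + 1))⁻¹ * (∑ i ∈ Finset.range ⌊(t : ℝ) * μ ^ n⌋₊, θ (n + 1, i) ω)
            - (t : ℝ)|) :=
  stmt3_general θ hindep θ0 hident hpos hint μ hμ hμgt hlog
end

section
/- Let (Z_k)_{k≥0} be a Galton–Watson process with offspring distribution supported on the positive integers (so P(offspring = 0) = 0), offspring mean μ ∈ (1,∞), Z_0 = 1. If (Z_k^{(j)})_{k≥0}, j ∈ ℕ, are i.i.d. copies and P(inf_{k≥1} μ^{−k} Z_k = 0) = 0, then for g_k ∘ ⋯ ∘ g_1(t) = ∑_{j=1}^{⌊t⌋} μ^{−k} Z_k^{(j)} we have inf_{k≥1} g_k ∘ ⋯ ∘ g_1(t) → ∞ almost surely as t → ∞. -/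
open MeasureTheory ProbabilityTheory Filter

/-! Put `Y_j = inf_{k ≥ 1} μ^{-k} Z_k^{(j)}`. The infimum of the sums dominates the sum
`∑_{j < ⌊t⌋} Y_j` of the infima, and the `Y_j` are i.i.d., nonnegative and almost surely
positive. Hence `ℙ(Y_0 > c) > 0` for some `c > 0`, the second Borel–Cantelli lemma gives
`Y_j > c` for infinitely many `j` almost surely, and the sums diverge. -/

lemma tendsto_sum_range_atTop_of_frequently_lt {Y : ℕ → ℝ} (hY : ∀ j, 0 ≤ Y j) {c : ℝ}
    (hc : 0 < c) (hfreq : ∃ᶠ j in atTop, c < Y j) :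
    Tendsto (fun n => ∑ j ∈ Finset.range n, Y j) atTop atTop := by
  rw [← not_summable_iff_tendsto_nat_atTop_of_nonneg hY]
  intro hsum
  exact hfreq <| (hsum.tendsto_atTop_zero.eventually (gt_mem_nhds hc)).mono
    fun _ => not_lt.2 ∘ le_of_lt

lemma Finset.sum_ciInf_le_ciInf_sum {ι κ : Type*} [Nonempty κ] (s : Finset ι) {f : ι → κ → ℝ}
    (hf : ∀ i, BddBelow (Set.range (f i))) : ∑ i ∈ s, ⨅ k, f i k ≤ ⨅ k, ∑ i ∈ s, f i k :=
  le_ciInf fun k => Finset.sum_le_sum fun i _ => ciInf_le (hf i) k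

section
variable {Ω : Type*} {mΩ : MeasurableSpace Ω} {P : Measure Ω}

lemma exists_pos_measure_setOf_lt_ne_zero [NeZero P] {Y : Ω → ℝ} (hY : ∀ᵐ ω ∂P, 0 < Y ω) :
    ∃ c, 0 < c ∧ P {ω | c < Y ω} ≠ 0 := by
  have hcover : {ω | 0 < Y ω} = ⋃ n : ℕ, {ω | 1 / (n + 1 : ℝ) < Y ω} := by
    ext ω
    rw [Set.mem_iUnion]
    show 0 < Y ω ↔ ∃ n : ℕ, 1 / (n + 1 : ℝ) < Y ω
    exact ⟨exists_nat_one_div_lt, fun ⟨_, hn⟩ => Nat.one_div_pos_of_nat.trans hn⟩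
  have hpos : P {ω | 0 < Y ω} ≠ 0 := fun h =>
    let ⟨_, hω, hω'⟩ := (hY.and (measure_eq_zero_iff_ae_notMem.1 h)).exists
    hω' hω
  rw [hcover] at hpos
  obtain ⟨n, hn⟩ := exists_measure_pos_of_not_measure_iUnion_null hpos
  exact ⟨_, Nat.one_div_pos_of_nat, hn.ne'⟩

lemma ae_frequently_mem_of_iIndepFun_identDistrib [IsProbabilityMeasure P] {β : Type*}
    [MeasurableSpace β] {X : ℕ → Ω → β} (hmeas : ∀ j, Measurable (X j)) (hindep : iIndepFun X P)
    (hident : ∀ j, IdentDistrib (X j) (X 0) P P) {B : Set β} (hB : MeasurableSet B)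
    (hpos : P (X 0 ⁻¹' B) ≠ 0) : ∀ᵐ ω ∂P, ∃ᶠ j in atTop, X j ω ∈ B := by
  have hA : ∀ j, MeasurableSet (X j ⁻¹' B) := fun j => hmeas j hB
  have hAindep : iIndepSet (fun j => X j ⁻¹' B) P := by
    rw [iIndepSet_iff_meas_biInter hA]
    exact fun s => hindep.measure_inter_preimage_eq_mul s (sets := fun _ => B) fun _ _ => hB
  have hdiv : ∑' j, P (X j ⁻¹' B) = ⊤ := by
    simp_rw [fun j => (hident j).measure_mem_eq hB]
    exact ENNReal.tsum_const_eq_top_of_ne_zero hpos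
  have hlimsup : ∀ᵐ ω ∂P, ω ∈ limsup (fun j => X j ⁻¹' B) atTop := by
    rw [ae_mem_iff_measure_eq (MeasurableSet.measurableSet_limsup hA).nullMeasurableSet,
      measure_limsup_eq_one hA hAindep hdiv, measure_univ]
  filter_upwards [hlimsup] with ω hω using mem_limsup_iff_frequently_mem.1 hω

lemma ae_tendsto_sum_range_atTop_of_iIndepFun [IsProbabilityMeasure P] {Y : ℕ → Ω → ℝ}
    (hmeas : ∀ j, Measurable (Y j)) (hindep : iIndepFun Y P)
    (hident : ∀ j, IdentDistrib (Y j) (Y 0) P P) (hnonneg : ∀ j ω, 0 ≤ Y j ω)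
    (hpos : ∀ᵐ ω ∂P, 0 < Y 0 ω) :
    ∀ᵐ ω ∂P, Tendsto (fun n => ∑ j ∈ Finset.range n, Y j ω) atTop atTop := by
  obtain ⟨c, hc, hPc⟩ := exists_pos_measure_setOf_lt_ne_zero hpos
  filter_upwards [ae_frequently_mem_of_iIndepFun_identDistrib hmeas hindep hident
    measurableSet_Ioi hPc] with ω hω
  exact tendsto_sum_range_atTop_of_frequently_lt (fun j => hnonneg j ω) hc hω

end

noncomputable def scaledInf (μ : ℝ) (z : ℕ → ℕ) : ℝ := ⨅ k : ℕ, (z (k + 1) : ℝ) / μ ^ (k + 1)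

lemma measurable_scaledInf (μ : ℝ) : Measurable (scaledInf μ) :=
  Measurable.iInf fun k => (measurable_from_top.comp (measurable_pi_apply (k + 1))).div_const _

lemma bddBelow_range_div_pow {μ : ℝ} (hμ : 0 ≤ μ) (z : ℕ → ℕ) :
    BddBelow (Set.range fun k : ℕ => (z (k + 1) : ℝ) / μ ^ (k + 1)) :=
  ⟨0, by rintro _ ⟨k, rfl⟩; positivity⟩

lemma scaledInf_nonneg {μ : ℝ} (hμ : 0 ≤ μ) (z : ℕ → ℕ) : 0 ≤ scaledInf μ z :=
  Real.iInf_nonneg fun _ => by positivity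

theorem stmt4_general {Ω : Type*} [MeasureSpace Ω] [IsProbabilityMeasure (ℙ : Measure Ω)]
    (μ : ℝ) (hμ : 1 < μ)
    (Z : ℕ → ℕ → Ω → ℕ)
    (hmeas : ∀ j k, Measurable (Z j k))
    (hindep : iIndepFun (fun j => fun ω => fun k => Z j k ω) ℙ)
    (hident : ∀ j, IdentDistrib (fun ω => fun k => Z j k ω) (fun ω => fun k => Z 0 k ω) ℙ ℙ)
    (hinf : ℙ {ω | (⨅ k : ℕ, (Z 0 (k + 1) ω : ℝ) / μ ^ (k + 1)) = 0} = 0) :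
    ∀ᵐ ω ∂ℙ, Tendsto
      (fun t : ℝ => ⨅ k : ℕ, ∑ j ∈ Finset.range ⌊t⌋₊, (Z j (k + 1) ω : ℝ) / μ ^ (k + 1))
      atTop atTop := by
  have hμ0 : 0 ≤ μ := zero_le_one.trans hμ.le
  set X : ℕ → Ω → ℕ → ℕ := fun j ω k => Z j k ω
  have hX : ∀ j, Measurable (X j) := fun j => measurable_pi_lambda _ (hmeas j)
  have hpos : ∀ᵐ ω ∂ℙ, 0 < scaledInf μ (X 0 ω) := by
    filter_upwards [measure_eq_zero_iff_ae_notMem.1 hinf] with ω hω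
    exact (scaledInf_nonneg hμ0 _).lt_of_ne' hω
  have hsum := ae_tendsto_sum_range_atTop_of_iIndepFun
    (fun j => (measurable_scaledInf μ).comp (hX j))
    (hindep.comp _ fun _ => measurable_scaledInf μ)
    (fun j => (hident j).comp (measurable_scaledInf μ))
    (fun j ω => scaledInf_nonneg hμ0 (X j ω)) hpos
  filter_upwards [hsum] with ω hω
  refine tendsto_atTop_mono (fun t => ?_) (hω.comp tendsto_nat_floor_atTop)
  exact Finset.sum_ciInf_le_ciInf_sum _ fun j => bddBelow_range_div_pow hμ0 (X j ω)

/-- Let `(Z j k)` (`j`-th independent copy, generation `k`) be i.i.d. copies of a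
Galton–Watson process with positive offspring, one ancestor (`Z j 0 = 1`), offspring mean
`μ ∈ (1,∞)`, and suppose `ℙ(inf_{k ≥ 1} μ^{-k} Z k = 0) = 0`.  Then, with
`g_k ∘ ⋯ ∘ g_1 (t) = ∑_{j=1}^{⌊t⌋} μ^{-k} Z_k^{(j)}`, almost surely
`inf_{k ≥ 1} g_k ∘ ⋯ ∘ g_1 (t) → ∞` as `t → ∞`. -/
theorem stmt4 {Ω : Type*} [MeasureSpace Ω] [IsProbabilityMeasure (ℙ : Measure Ω)]
    (μ : ℝ) (hμ : 1 < μ)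
    (Z : ℕ → ℕ → Ω → ℕ)
    (hmeas : ∀ j k, Measurable (Z j k))
    (h0 : ∀ j ω, Z j 0 ω = 1)
    (hpos : ∀ j k ω, 1 ≤ Z j k ω)
    (hmean : μ = ∫ ω, (Z 0 1 ω : ℝ))
    (hindep : iIndepFun (fun j => fun ω => fun k => Z j k ω) ℙ)
    (hident : ∀ j, IdentDistrib (fun ω => fun k => Z j k ω) (fun ω => fun k => Z 0 k ω) ℙ ℙ)
    (hinf : ℙ {ω | (⨅ k : ℕ, (Z 0 (k + 1) ω : ℝ) / μ ^ (k + 1)) = 0} = 0) :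
    ∀ᵐ ω ∂ℙ, Tendsto
      (fun t : ℝ => ⨅ k : ℕ, ∑ j ∈ Finset.range ⌊t⌋₊, (Z j (k + 1) ω : ℝ) / μ ^ (k + 1))
      atTop atTop :=
  stmt4_general μ hμ Z hmeas hindep hident hinf
end

section
/- Let R^{(1)}, R^{(2)}, … be i.i.d. increasing random walks on ℕ with step distribution (p_i)_{i≥1}, p_1 < 1, and finite mean μ ∈ (1,∞). Then for each n, the sequence (R^{(n)} ∘ ⋯ ∘ R^{(1)}(j))_{j≥0} is again an increasing random walk on ℕ (i.e., has i.i.d. increments), with generic increment distributed as the generation-n size Z_n of a Galton–Watson process with offspring distribution (p_i) and one ancestor. -/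
/-!
Write `S = R⁽ⁿ⁾ ∘ ⋯ ∘ R⁽¹⁾` and let `D j = S (j + 1) - S j` be its increments. The `j`-th
increment of `R⁽ⁿ⁺¹⁾ ∘ S` is the sum of the steps `X i = ξ (n + 1) i` over the `j`-th block of a
partition of `ℕ` into consecutive intervals of lengths `D 0, D 1, …`. The process `D` is a function
of the first `n` rows of steps and hence independent of `X`, so by Fubini we may freeze `D = δ`.
The blocks are then deterministic and disjoint, so the block sums are independent, and the `j`-th
one is distributed as `X 0 + ⋯ + X (δ j - 1)`. Integrating back over the law of `D`, which has
independent coordinates,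
  `ℙ (⋂ j ∈ s, {T j ∈ A j}) = ∏ j ∈ s, ∫ ℙ (X 0 + ⋯ + X (D j - 1) ∈ A j) dℙ`,
which gives independence of the increments, and identical distribution since the `D j` are
identically distributed. Induction on `n` concludes.
-/

open MeasureTheory ProbabilityTheory Finset Function
open scoped ENNReal

section Independence
variable {Ω ι κ : Type*} {mΩ : MeasurableSpace Ω} {μ : Measure Ω}

theorem ProbabilityTheory.iIndep.iSup_of_pairwise_disjoint {m : ι → MeasurableSpace Ω}
    (h_le : ∀ i, m i ≤ mΩ) (h : iIndep m μ) {I : κ → Set ι} (hI : Pairwise (Disjoint on I)) :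
    iIndep (fun k => ⨆ i ∈ I k, m i) μ := by
  classical
  have := h.isProbabilityMeasure
  refine (iIndep_iff _ μ).2 fun K => ?_
  induction K using Finset.induction_on with
  | empty => simp
  | insert a K ha ih =>
    intro f hf
    have hdisj : Disjoint (I a) (⋃ k ∈ K, I k) :=
      Set.disjoint_iUnion₂_right.2 fun k hk => hI (ne_of_mem_of_not_mem hk ha).symm
    have hrest : MeasurableSet[⨆ i ∈ ⋃ k ∈ K, I k, m i] (⋂ k ∈ K, f k) :=
      .biInter K.countable_toSet fun k hk =>
        (show ⨆ i ∈ I k, m i ≤ ⨆ i ∈ ⋃ k ∈ K, I k, m i from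
          biSup_mono fun i hi => Set.mem_biUnion hk hi) _ (hf k (mem_insert_of_mem hk))
    rw [set_biInter_insert, prod_insert ha, ← ih fun k hk => hf k (mem_insert_of_mem hk)]
    exact (Indep_iff _ _ μ).1 (indep_iSup_of_disjoint h_le h hdisj) _ _
      (hf a (mem_insert_self a K)) hrest

theorem ProbabilityTheory.iIndepFun.finsetSum_of_pairwise_disjoint {β : Type*}
    [MeasurableSpace β] [AddCommMonoid β] [MeasurableAdd₂ β] {f : ι → Ω → β}
    (hf : ∀ i, Measurable (f i)) (h : iIndepFun f μ) {I : κ → Finset ι}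
    (hI : Pairwise (Disjoint on I)) :
    iIndepFun (fun k ω => ∑ i ∈ I k, f i ω) μ := by
  rw [iIndepFun_iff_iIndep] at h ⊢
  refine iIndep_of_iIndep_of_le (h.iSup_of_pairwise_disjoint (fun i => (hf i).comap_le)
    (I := fun k => (I k : Set ι)) fun k l hkl => disjoint_coe.2 (hI hkl)) fun k => ?_
  refine Measurable.comap_le (Finset.measurable_sum (I k) fun i hi => ?_)
  have hle : MeasurableSpace.comap (f i) ‹_› ≤
      ⨆ j ∈ (I k : Set ι), MeasurableSpace.comap (f j) ‹_› :=
    le_iSup₂ (f := fun j (_ : j ∈ (I k : Set ι)) => MeasurableSpace.comap (f j) ‹_›) i hi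
  exact (comap_measurable (f i)).mono hle le_rfl

theorem identDistrib_sum_Ico_add_sum_range {β : Type*} [MeasurableSpace β] [AddCommMonoid β]
    [MeasurableAdd₂ β] {X : ℕ → Ω → β} (hind : iIndepFun X μ)
    (hid : ∀ i, IdentDistrib (X i) (X 0) μ μ) (s c : ℕ) :
    IdentDistrib (fun ω => ∑ i ∈ Ico s (s + c), X i ω) (fun ω => ∑ i ∈ range c, X i ω) μ μ := by
  have hsum : Measurable fun v : Fin c → β => ∑ k, v k :=
    Finset.measurable_sum _ fun k _ => measurable_pi_apply k
  have hpi : IdentDistrib (fun ω (k : Fin c) => X (s + k) ω) (fun ω (k : Fin c) => X k ω) μ μ :=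
    .pi (fun k => (hid _).trans (hid k).symm)
      (hind.precomp fun k l h => Fin.ext (by simpa using h)) (hind.precomp Fin.val_injective)
  convert hpi.comp hsum using 1 <;> ext ω
  · simp [sum_Ico_eq_sum_range, Fin.sum_univ_eq_sum_range (fun k => X (s + k) ω)]
  · simp [Fin.sum_univ_eq_sum_range (fun k => X k ω)]

theorem measurable_sum_range_comp {N : Ω → ℕ} {X : ℕ → Ω → ℕ} (hN : Measurable N)
    (hX : ∀ i, Measurable (X i)) :
    Measurable fun ω => ∑ i ∈ range (N ω), X i ω :=
  (measurable_from_prod_countable_left fun c => Finset.measurable_sum (range c) fun i _ => hX i :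
    Measurable fun q : Ω × ℕ => ∑ i ∈ range q.2, X i q.1).comp (measurable_id.prodMk hN)

end Independence

section Blocks

def block (δ : ℕ → ℕ) (j : ℕ) : Finset ℕ :=
  Ico (∑ k ∈ range j, δ k) (∑ k ∈ range (j + 1), δ k)

theorem block_eq_Ico_add (δ : ℕ → ℕ) (j : ℕ) :
    block δ j = Ico (∑ k ∈ range j, δ k) (∑ k ∈ range j, δ k + δ j) := by
  rw [block, sum_range_succ]

theorem pairwise_disjoint_block (δ : ℕ → ℕ) : Pairwise (Disjoint on block δ) := by
  have hmono : Monotone fun j => ∑ k ∈ range j, δ k := fun a b hab =>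
    sum_le_sum_of_subset (range_subset_range.2 hab)
  have hlt : ∀ j l, j < l → Disjoint (block δ j) (block δ l) := fun j l hjl =>
    (Ico_disjoint_Ico_consecutive _ _ _).mono_right (Ico_subset_Ico_left (hmono hjl))
  intro j l hjl
  rcases hjl.lt_or_gt with h | h
  · exact hlt j l h
  · exact (hlt l j h).symm

theorem measurable_sum_block (j : ℕ) :
    Measurable fun p : (ℕ → ℕ) × (ℕ → ℕ) => ∑ i ∈ block p.1 j, p.2 i := by
  have hsum : Measurable fun q : (ℕ → ℕ) × (ℕ × ℕ) => ∑ i ∈ Ico q.2.1 q.2.2, q.1 i :=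
    measurable_from_prod_countable_left fun uv =>
      Finset.measurable_sum (Ico uv.1 uv.2) fun i _ => measurable_pi_apply i
  have hends : Measurable fun δ : ℕ → ℕ => (∑ k ∈ range j, δ k, ∑ k ∈ range (j + 1), δ k) :=
    (Finset.measurable_sum _ fun k _ => measurable_pi_apply k).prodMk
      (Finset.measurable_sum _ fun k _ => measurable_pi_apply k)
  exact hsum.comp (measurable_snd.prodMk (hends.comp measurable_fst))

variable {Ω : Type*} {mΩ : MeasurableSpace Ω} {μ : Measure Ω} {D X : ℕ → Ω → ℕ}
  (hD : ∀ k, Measurable (D k)) (hX : ∀ i, Measurable (X i))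
  (hDind : iIndepFun D μ) (hXind : iIndepFun X μ) (hXid : ∀ i, IdentDistrib (X i) (X 0) μ μ)
  (hDX : IndepFun (fun ω k => D k ω) (fun ω i => X i ω) μ)
include hD hX hDind hXind hXid hDX

theorem measure_biInter_sum_block_preimage (S : Finset ℕ) (A : ℕ → Set ℕ) :
    μ (⋂ j ∈ S, (fun ω => ∑ i ∈ block (D · ω) j, X i ω) ⁻¹' A j) =
      ∏ j ∈ S, ∫⁻ ω, μ ((fun ω' => ∑ i ∈ range (D j ω), X i ω') ⁻¹' A j) ∂μ := by
  have := hXind.isProbabilityMeasure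
  set g : ℕ → ℕ → ℝ≥0∞ := fun j c => μ ((fun ω => ∑ i ∈ range c, X i ω) ⁻¹' A j)
  have hD' : Measurable fun ω k => D k ω := measurable_pi_lambda _ hD
  have hX' : Measurable fun ω i => X i ω := measurable_pi_lambda _ hX
  set B : Set ((ℕ → ℕ) × (ℕ → ℕ)) := {p | ∀ j ∈ S, ∑ i ∈ block p.1 j, p.2 i ∈ A j}
  have hB : MeasurableSet B := by
    simp only [B, Set.ofPred_forall]
    exact .biInter S.countable_toSet fun j _ => measurable_sum_block j .of_discrete
  have hfiber : ∀ δ, μ.map (fun ω i => X i ω) (Prod.mk δ ⁻¹' B) = ∏ j ∈ S, g j (δ j) := by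
    intro δ
    rw [Measure.map_apply hX' (measurable_prodMk_left hB)]
    have hblocks := hXind.finsetSum_of_pairwise_disjoint hX (pairwise_disjoint_block δ)
    calc μ (_ ⁻¹' _) = μ (⋂ j ∈ S, (fun ω => ∑ i ∈ block δ j, X i ω) ⁻¹' A j) := by
          congr 1; ext ω; simp [B]
      _ = ∏ j ∈ S, μ ((fun ω => ∑ i ∈ block δ j, X i ω) ⁻¹' A j) :=
          hblocks.measure_inter_preimage_eq_mul _ fun _ _ => .of_discrete
      _ = ∏ j ∈ S, g j (δ j) := prod_congr rfl fun j _ => by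
          rw [block_eq_Ico_add]
          exact (identDistrib_sum_Ico_add_sum_range hXind hXid _ _).measure_mem_eq .of_discrete
  calc μ (⋂ j ∈ S, (fun ω => ∑ i ∈ block (D · ω) j, X i ω) ⁻¹' A j)
      = μ.map (fun ω => ((D · ω), (X · ω))) B := by
        rw [Measure.map_apply (hD'.prodMk hX') hB]; congr 1; ext; simp [B]
    _ = ((μ.map fun ω k => D k ω).prod (μ.map fun ω i => X i ω)) B := by
        rw [(indepFun_iff_map_prod_eq_prod_map_map hD'.aemeasurable hX'.aemeasurable).1 hDX]
    _ = ∫⁻ δ, ∏ j ∈ S, g j (δ j) ∂(μ.map fun ω k => D k ω) := by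
        rw [Measure.prod_apply hB]; exact lintegral_congr hfiber
    _ = ∫⁻ ω, ∏ j ∈ S, g j (D j ω) ∂μ :=
        lintegral_map (Finset.measurable_prod _ fun j _ =>
          (measurable_of_countable (g j)).comp (measurable_pi_apply j)) hD'
    _ = ∏ j ∈ S, ∫⁻ ω, g j (D j ω) ∂μ :=
        lintegral_prod_eq_prod_lintegral_of_indepFun S _
          (hDind.comp g fun j => measurable_of_countable _)
          fun j => (measurable_of_countable (g j)).comp (hD j)

theorem iIndepFun_sum_block : iIndepFun (fun j ω => ∑ i ∈ block (D · ω) j, X i ω) μ := by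
  have := hXind.isProbabilityMeasure
  refine iIndepFun_iff_measure_inter_preimage_eq_mul.2 fun S A _ => ?_
  rw [measure_biInter_sum_block_preimage hD hX hDind hXind hXid hDX]
  refine prod_congr rfl fun j _ => ?_
  simpa using (measure_biInter_sum_block_preimage hD hX hDind hXind hXid hDX {j} A).symm

theorem identDistrib_sum_block (hDid : ∀ k, IdentDistrib (D k) (D 0) μ μ) (j : ℕ) :
    IdentDistrib (fun ω => ∑ i ∈ block (D · ω) j, X i ω)
      (fun ω => ∑ i ∈ range (D 0 ω), X i ω) μ μ := by
  have hT : ∀ j, Measurable fun ω => ∑ i ∈ block (D · ω) j, X i ω := fun j =>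
    (measurable_sum_block j).comp ((measurable_pi_lambda _ hD).prodMk (measurable_pi_lambda _ hX))
  have h0 : (fun ω => ∑ i ∈ block (D · ω) 0, X i ω) = fun ω => ∑ i ∈ range (D 0 ω), X i ω := by
    ext ω; simp [block]
  rw [← h0]
  refine ⟨(hT j).aemeasurable, (hT 0).aemeasurable, Measure.ext fun A _ => ?_⟩
  have hj := measure_biInter_sum_block_preimage hD hX hDind hXind hXid hDX {j} fun _ => A
  have h0 := measure_biInter_sum_block_preimage hD hX hDind hXind hXid hDX {0} fun _ => A
  simp only [mem_singleton, Set.iInter_iInter_eq_left, prod_singleton] at hj h0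
  rw [Measure.map_apply (hT j) .of_discrete, Measure.map_apply (hT 0) .of_discrete, hj, h0]
  exact ((hDid j).comp (measurable_of_countable
    fun c => μ ((fun ω' => ∑ i ∈ range c, X i ω') ⁻¹' A))).lintegral_eq

end Blocks

-- The increments use truncated subtraction: this is meant for nondecreasing `S` with `S 0 = 0`.
def HasIIDIncrements {Ω : Type*} [MeasurableSpace Ω] (S : ℕ → Ω → ℕ) (μ : Measure Ω) : Prop :=
  iIndepFun (fun j ω => S (j + 1) ω - S j ω) μ ∧
    ∀ j, IdentDistrib (fun ω => S (j + 1) ω - S j ω) (S 1) μ μ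

theorem HasIIDIncrements.sum_range_comp {Ω : Type*} {mΩ : MeasurableSpace Ω} {μ : Measure Ω}
    {S X : ℕ → Ω → ℕ} (h : HasIIDIncrements S μ) (hS : ∀ j, Measurable (S j))
    (hS0 : ∀ ω, S 0 ω = 0) (hSmono : ∀ ω, Monotone (S · ω)) (hX : ∀ i, Measurable (X i))
    (hXind : iIndepFun X μ) (hXid : ∀ i, IdentDistrib (X i) (X 0) μ μ)
    (hSX : IndepFun (fun ω j => S j ω) (fun ω i => X i ω) μ) :
    HasIIDIncrements (fun j ω => ∑ i ∈ range (S j ω), X i ω) μ := by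
  set D : ℕ → Ω → ℕ := fun j ω => S (j + 1) ω - S j ω with hD_def
  have hD : ∀ k, Measurable (D k) := fun k => (hS (k + 1)).sub (hS k)
  have hDX : IndepFun (fun ω k => D k ω) (fun ω i => X i ω) μ :=
    hSX.comp (φ := fun (s : ℕ → ℕ) k => s (k + 1) - s k)
      (measurable_pi_lambda _ fun k => (measurable_pi_apply _).sub (measurable_pi_apply _))
      measurable_id
  have hDid : ∀ k, IdentDistrib (D k) (D 0) μ μ := fun k => (h.2 k).trans (h.2 0).symm
  have hblock : ∀ j ω, ∑ i ∈ range (S (j + 1) ω), X i ω - ∑ i ∈ range (S j ω), X i ω =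
      ∑ i ∈ block (D · ω) j, X i ω := by
    intro j ω
    have hprefix : ∀ j, ∑ k ∈ range j, D k ω = S j ω := fun j => by
      simp [hD_def, sum_range_tsub (hSmono ω), hS0]
    rw [block, hprefix, hprefix, ← sum_range_add_sum_Ico _ (hSmono ω j.le_succ),
      add_tsub_cancel_left]
  have hD0 : ∀ ω, D 0 ω = S 1 ω := fun ω => by simp [hD_def, hS0]
  simp_rw [HasIIDIncrements, hblock, ← hD0]
  exact ⟨iIndepFun_sum_block hD hX h.1 hXind hXid hDX,
    identDistrib_sum_block hD hX h.1 hXind hXid hDX hDid⟩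

section Rows
variable {Ω : Type*} {ξ : ℕ → ℕ → Ω → ℕ}

abbrev rowsSigmaAlgebra (ξ : ℕ → ℕ → Ω → ℕ) (s : Set ℕ) : MeasurableSpace Ω :=
  ⨆ p ∈ {p : ℕ × ℕ | p.1 ∈ s}, MeasurableSpace.comap (ξ p.1 p.2) inferInstance

theorem measurable_rowsSigmaAlgebra {s : Set ℕ} {n : ℕ} (hn : n ∈ s) (i : ℕ) :
    Measurable[rowsSigmaAlgebra ξ s] (ξ n i) :=
  (comap_measurable (ξ n i)).mono
    (le_iSup₂ (f := fun p (_ : p ∈ {p : ℕ × ℕ | p.1 ∈ s}) =>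
      MeasurableSpace.comap (ξ p.1 p.2) inferInstance) (n, i) hn) le_rfl

theorem rowsSigmaAlgebra_mono {s t : Set ℕ} (hst : s ⊆ t) :
    rowsSigmaAlgebra ξ s ≤ rowsSigmaAlgebra ξ t :=
  biSup_mono fun _ hp => hst hp

variable [mΩ : MeasurableSpace Ω]

theorem rowsSigmaAlgebra_le (hmeas : ∀ n i, Measurable (ξ n i)) (s : Set ℕ) :
    rowsSigmaAlgebra ξ s ≤ mΩ :=
  iSup₂_le fun p _ => (hmeas p.1 p.2).comap_le

theorem indepFun_of_measurable_rowsSigmaAlgebra {μ : Measure Ω} {β γ : Type*}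
    [MeasurableSpace β] [MeasurableSpace γ] (hmeas : ∀ n i, Measurable (ξ n i))
    (hindep : iIndepFun (fun p : ℕ × ℕ => ξ p.1 p.2) μ) {s t : Set ℕ} (hst : Disjoint s t)
    {f : Ω → β} {g : Ω → γ} (hf : Measurable[rowsSigmaAlgebra ξ s] f)
    (hg : Measurable[rowsSigmaAlgebra ξ t] g) : IndepFun f g μ := by
  have hrows : Indep (rowsSigmaAlgebra ξ s) (rowsSigmaAlgebra ξ t) μ :=
    indep_iSup_of_disjoint (m := fun p : ℕ × ℕ => MeasurableSpace.comap (ξ p.1 p.2) inferInstance)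
      (fun p => (hmeas p.1 p.2).comap_le) hindep.iIndep
      (Set.disjoint_left.2 fun _ hs ht => Set.disjoint_left.1 hst hs ht)
  exact (IndepFun_iff_Indep _ _ _).2 <| indep_of_indep_of_le_right
    (indep_of_indep_of_le_left hrows hf.comap_le) hg.comap_le

end Rows

section Composition
variable {Ω : Type*} {ξ C : ℕ → ℕ → Ω → ℕ}
  (hC0 : ∀ j ω, C 0 j ω = j)
  (hCrec : ∀ n j ω, C (n + 1) j ω = ∑ i ∈ range (C n j ω), ξ (n + 1) i ω)
include hC0 hCrec

theorem composition_apply_zero (n : ℕ) (ω : Ω) : C n 0 ω = 0 := by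
  induction n with
  | zero => exact hC0 0 ω
  | succ n ih => rw [hCrec, ih, sum_range_zero]

theorem monotone_composition (n : ℕ) (ω : Ω) : Monotone (C n · ω) := by
  induction n with
  | zero => intro j k hjk; simpa [hC0] using hjk
  | succ n ih =>
    intro j k hjk
    simp only [hCrec]
    exact sum_le_sum_of_subset (range_subset_range.2 (ih hjk))

theorem measurable_composition (n j : ℕ) :
    Measurable[rowsSigmaAlgebra ξ (Set.Iic n)] (C n j) := by
  induction n generalizing j with
  | zero => rw [funext (hC0 j)]; exact measurable_const
  | succ n ih =>
    rw [funext (hCrec n j)]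
    exact measurable_sum_range_comp
      ((ih j).mono (rowsSigmaAlgebra_mono (Set.Iic_subset_Iic.2 n.le_succ)) le_rfl)
      (measurable_rowsSigmaAlgebra (Set.mem_Iic.2 le_rfl))

end Composition

theorem stmt6_general {Ω : Type*} [MeasureSpace Ω]
    (ξ : ℕ → ℕ → Ω → ℕ) (hmeas : ∀ n i, Measurable (ξ n i))
    (hindep : iIndepFun (fun p : ℕ × ℕ => ξ p.1 p.2) ℙ)
    (hident : ∀ n i, IdentDistrib (ξ n i) (ξ 0 0) ℙ ℙ)
    (R : ℕ → ℕ → Ω → ℕ) (hR : ∀ n k ω, R n k ω = ∑ i ∈ Finset.range k, ξ n i ω)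
    (C : ℕ → ℕ → Ω → ℕ) (hC0 : ∀ j ω, C 0 j ω = j)
    (hCrec : ∀ n j ω, C (n + 1) j ω = R (n + 1) (C n j ω) ω) :
    ∀ n : ℕ,
      iIndepFun
        (fun j : ℕ => fun ω => C n (j + 1) ω - C n j ω) ℙ ∧
      ∀ j : ℕ, IdentDistrib (fun ω => C n (j + 1) ω - C n j ω) (fun ω => C n 1 ω) ℙ ℙ := by
  have hrec : ∀ n j ω, C (n + 1) j ω = ∑ i ∈ range (C n j ω), ξ (n + 1) i ω :=
    fun n j ω => (hCrec n j ω).trans (hR _ _ _)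
  have hrow : ∀ n, iIndepFun (ξ n) ℙ := fun n => (hindep.precomp (Prod.mk_right_injective n) :)
  suffices ∀ n, HasIIDIncrements (C n) ℙ from this
  intro n
  induction n with
  | zero =>
    simp only [HasIIDIncrements, funext₂ hC0, add_tsub_cancel_left]
    exact ⟨(hrow 0).comp (fun _ _ => 1) fun _ => measurable_const,
      fun _ => .refl aemeasurable_const⟩
  | succ n ih =>
    have hCmeas := measurable_composition hC0 hrec n
    have hCξ : IndepFun (fun ω j => C n j ω) (fun ω i => ξ (n + 1) i ω) ℙ :=
      indepFun_of_measurable_rowsSigmaAlgebra hmeas hindep (s := Set.Iic n) (t := {n + 1})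
        (by simp) (@measurable_pi_lambda _ _ _ (_) _ _ hCmeas)
        (@measurable_pi_lambda _ _ _ (_) _ _
          (measurable_rowsSigmaAlgebra (ξ := ξ) (Set.mem_singleton (n + 1))))
    rw [funext₂ (hrec n)]
    exact ih.sum_range_comp (fun j => (hCmeas j).mono (rowsSigmaAlgebra_le hmeas _) le_rfl)
      (composition_apply_zero hC0 hrec n) (monotone_composition hC0 hrec n) (hmeas _) (hrow _)
      (fun i => (hident _ i).trans (hident _ 0).symm) hCξ

/-- Let `R⁽ⁿ⁾` be i.i.d. increasing random walks on `ℕ` (steps `ξ (n, i) ≥ 1` i.i.d.,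
`ℙ(ξ = 1) < 1`, mean `μ ∈ (1,∞)`).  Then for each `n` the composition
`C n = R⁽ⁿ⁾ ∘ ⋯ ∘ R⁽¹⁾` has i.i.d. increments `j ↦ C n (j+1) - C n j`, each distributed
as `C n 1`, the generation-`n` size of the Galton–Watson process with offspring law `ξ`
and one ancestor. -/
theorem stmt6 {Ω : Type*} [MeasureSpace Ω] [IsProbabilityMeasure (ℙ : Measure Ω)]
    (ξ : ℕ → ℕ → Ω → ℕ) (hmeas : ∀ n i, Measurable (ξ n i))
    (hpos : ∀ n i ω, 1 ≤ ξ n i ω)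
    (hindep : iIndepFun (fun p : ℕ × ℕ => ξ p.1 p.2) ℙ)
    (hident : ∀ n i, IdentDistrib (ξ n i) (ξ 0 0) ℙ ℙ)
    (hp1 : ℙ {ω | ξ 0 0 ω = 1} < 1)
    (μ : ℝ) (hμ : μ = ∫ ω, (ξ 0 0 ω : ℝ))
    (hμfin : Integrable (fun ω => (ξ 0 0 ω : ℝ))) (hμgt : 1 < μ)
    (R : ℕ → ℕ → Ω → ℕ) (hR : ∀ n k ω, R n k ω = ∑ i ∈ Finset.range k, ξ n i ω)
    (C : ℕ → ℕ → Ω → ℕ) (hC0 : ∀ j ω, C 0 j ω = j)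
    (hCrec : ∀ n j ω, C (n + 1) j ω = R (n + 1) (C n j ω) ω) :
    ∀ n : ℕ,
      iIndepFun
        (fun j : ℕ => fun ω => C n (j + 1) ω - C n j ω) ℙ ∧
      ∀ j : ℕ, IdentDistrib (fun ω => C n (j + 1) ω - C n j ω) (fun ω => C n 1 ω) ℙ ℙ :=
  stmt6_general ξ hmeas hindep hident R hR C hC0 hCrec
end

section
/- Suppose a random sequence (X_1, X_2, …) with 0 ≤ X_1 ≤ X_2 ≤ ⋯ satisfies the stochastic fixed-point equation (μX_1, μX_2, …) =_d (X_{R(1)}, X_{R(2)}, …), where R is an increasing ℕ-valued random walk with mean step μ, independent of (X_j). If G : [0,∞) → [0,∞) is a nondecreasing random process independent of (X_j) with (G(μt))_{t≥0} =_{f.d.d.} (μ G(t))_{t≥0}, then (G(X_1), G(X_2), …) also satisfies the same stochastic fixed-point equation. -/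
open MeasureTheory ProbabilityTheory
open scoped ENNReal

/-!
The difficulty is that `G` is indexed by an uncountable set, so `ω ↦ G (X ω) ω` is not a
measurable function of the pair `(X, G)`. Monotonicity repairs this: for a countable set of nodes
`u i`, dense in `[0, ∞)` and containing every atom of the `X j`, `G t` equals
`sup {G (u i) | u i ≤ t}` unless `t` is one of the countably many jumps of `G` off the nodes, which
by independence happens with probability zero. Hence `(G (X j))_j` is a fixed measurable function
of `X` and of the countable family `(G (u i))_i`, which are independent. Replacing `G` by `μ G`
or by `G (μ ·)` (equal finite-dimensional laws) gives `(μ G (X j))_j =_d (G (μ X j))_j`, and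
replacing `(μ X j)_j` by `(X (R j))_j` (equal laws by the fixed-point equation) gives
`(G (μ X j))_j =_d (G (X (R j)))_j`.
-/

noncomputable def supBelow (u : ℕ → ℝ) (t : ℝ) (k : ℕ → ℝ) : ℝ≥0∞ :=
  ⨆ i, if u i ≤ t then ENNReal.ofReal (k i) else 0

noncomputable def infAbove (u : ℕ → ℝ) (t : ℝ) (k : ℕ → ℝ) : ℝ≥0∞ :=
  ⨅ i, if t < u i then ENNReal.ofReal (k i) else ⊤

section Deterministic

variable {u : ℕ → ℝ}

theorem measurable_supBelow (u : ℕ → ℝ) : Measurable (Function.uncurry (supBelow u)) :=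
  .iSup fun i => .ite (measurable_fst measurableSet_Ici)
    (ENNReal.measurable_ofReal.comp ((measurable_pi_apply i).comp measurable_snd)) measurable_const

theorem measurable_infAbove (u : ℕ → ℝ) : Measurable (Function.uncurry (infAbove u)) :=
  .iInf fun i => .ite (measurable_fst measurableSet_Iio)
    (ENNReal.measurable_ofReal.comp ((measurable_pi_apply i).comp measurable_snd)) measurable_const

theorem supBelow_comp_le (hu0 : ∀ i, 0 ≤ u i) {g : ℝ → ℝ} (hg : MonotoneOn g (Set.Ici 0))
    {t : ℝ} (ht : 0 ≤ t) : supBelow u t (g ∘ u) ≤ ENNReal.ofReal (g t) :=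
  iSup_le fun i => by
    split_ifs with h
    · exact ENNReal.ofReal_le_ofReal (hg (hu0 i) ht h)
    · exact zero_le

theorem le_infAbove_comp {g : ℝ → ℝ} (hg : MonotoneOn g (Set.Ici 0)) {t : ℝ} (ht : 0 ≤ t) :
    ENNReal.ofReal (g t) ≤ infAbove u t (g ∘ u) :=
  le_iInf fun i => by
    split_ifs with h
    · exact ENNReal.ofReal_le_ofReal (hg ht (ht.trans h.le) h.le)
    · exact le_top

theorem le_supBelow_comp_of_mem (g : ℝ → ℝ) {t : ℝ} (ht : t ∈ Set.range u) :
    ENNReal.ofReal (g t) ≤ supBelow u t (g ∘ u) := by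
  obtain ⟨i, rfl⟩ := ht
  exact le_iSup_of_le i (by simp)

theorem infAbove_le_supBelow (hu : ∀ t t', 0 ≤ t → t < t' → ∃ i, t < u i ∧ u i < t')
    (k : ℕ → ℝ) {t t' : ℝ} (ht : 0 ≤ t) (htt' : t < t') : infAbove u t k ≤ supBelow u t' k := by
  obtain ⟨i, hti, hit'⟩ := hu t t' ht htt'
  calc infAbove u t k ≤ ENNReal.ofReal (k i) := iInf_le_of_le i (by rw [if_pos hti])
    _ ≤ supBelow u t' k := le_iSup_of_le i (by rw [if_pos hit'.le])

/-- By `infAbove_le_supBelow` the gaps `(supBelow u t k, infAbove u t k)` at distinct `t` are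
disjoint, so a rational chosen in each gap determines `t`. -/
theorem countable_setOf_supBelow_lt_infAbove
    (hu : ∀ t t', 0 ≤ t → t < t' → ∃ i, t < u i ∧ u i < t') (k : ℕ → ℝ) :
    {t | 0 ≤ t ∧ supBelow u t k < infAbove u t k}.Countable := by
  set J := {t | 0 ≤ t ∧ supBelow u t k < infAbove u t k}
  have hq : ∀ t : J, ∃ q : ℚ, supBelow u t k < ENNReal.ofReal q ∧
      ENNReal.ofReal q < infAbove u t k := fun t => by
    obtain ⟨q, -, hq⟩ := ENNReal.lt_iff_exists_rat_btwn.mp t.2.2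
    exact ⟨q, hq⟩
  choose q hq using hq
  have hmono : StrictMono fun t : J => ENNReal.ofReal (q t) := fun t t' htt' =>
    (hq t).2.trans_le <| (infAbove_le_supBelow hu k t.2.1 htt').trans (hq t').1.le
  have : Countable J := (hmono.injective.of_comp (f := fun r : ℚ => ENNReal.ofReal r)).countable
  exact Set.countable_coe_iff.mp this

theorem supBelow_comp_eq (hu0 : ∀ i, 0 ≤ u i) {g : ℝ → ℝ} (hg : MonotoneOn g (Set.Ici 0))
    {t : ℝ} (ht : 0 ≤ t) (h : t ∈ Set.range u ∨ ¬ supBelow u t (g ∘ u) < infAbove u t (g ∘ u)) :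
    supBelow u t (g ∘ u) = ENNReal.ofReal (g t) := by
  refine (supBelow_comp_le hu0 hg ht).antisymm ?_
  rcases h with h | h
  · exact le_supBelow_comp_of_mem g h
  · exact (le_infAbove_comp hg ht).trans (not_lt.mp h)

end Deterministic

theorem map_pi_eq_of_forall_fin {Ω ι E : Type*} [MeasurableSpace Ω] [MeasurableSpace E]
    {ν : Measure Ω} [IsFiniteMeasure ν] {f g : ι → Ω → E} (hf : ∀ i, Measurable (f i))
    (hg : ∀ i, Measurable (g i))
    (h : ∀ (m : ℕ) (s : Fin m → ι),
      Measure.map (fun ω k => f (s k) ω) ν = Measure.map (fun ω k => g (s k) ω) ν) :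
    Measure.map (fun ω i => f i ω) ν = Measure.map (fun ω i => g i ω) ν := by
  have hlim : ∀ F : ι → Ω → E, (∀ i, Measurable (F i)) → IsProjectiveLimit
      (Measure.map (fun ω i => F i ω) ν) fun I => Measure.map (fun ω (i : I) => F i ω) ν :=
    fun F hF I => by
      rw [Measure.map_map (Finset.measurable_restrict I) (measurable_pi_lambda _ hF)]
      rfl
  have hfin : ∀ I : Finset ι, Measure.map (fun ω (i : I) => f i ω) ν =
      Measure.map (fun ω (i : I) => g i ω) ν := fun I => by
    have hr : Measurable fun (v : Fin I.card → E) (i : I) => v (I.equivFin i) :=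
      measurable_pi_lambda _ fun i => measurable_pi_apply _
    have hF : ∀ F : ι → Ω → E, (∀ i, Measurable (F i)) → Measure.map (fun ω (i : I) => F i ω) ν =
        Measure.map (fun v i => v (I.equivFin i))
          (Measure.map (fun ω k => F (I.equivFin.symm k) ω) ν) := fun F hF => by
      rw [Measure.map_map hr (measurable_pi_lambda _ fun k => hF _)]
      simp [Function.comp_def]
    rw [hF f hf, hF g hg, h]
  exact (hlim f hf).unique (funext hfin ▸ hlim g hg)

theorem measurable_apply_of_measurable_index {α β : Type*} [MeasurableSpace α] [MeasurableSpace β]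
    {f : ℕ → α → β} (hf : ∀ n, Measurable (f n)) {N : α → ℕ} (hN : Measurable N) :
    Measurable fun a => f (N a) a :=
  (measurable_from_prod_countable_left (f := fun z : α × ℕ => f z.2 z.1) hf).comp
    (measurable_id.prodMk hN)

section Probability

variable {Ω : Type*} [MeasureSpace Ω] [IsProbabilityMeasure (ℙ : Measure Ω)] {u : ℕ → ℝ}

theorem ae_eq_toReal_supBelow {H : ℝ → Ω → ℝ} (hHmeas : ∀ t, Measurable (H t))
    (hHmono : ∀ ω, MonotoneOn (fun t => H t ω) (Set.Ici 0)) (hH0 : ∀ t ω, 0 ≤ t → 0 ≤ H t ω)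
    {p : Ω → ℝ} (hp : Measurable p) (hp0 : ∀ ω, 0 ≤ p ω)
    (hindep : IndepFun p (fun ω t => H t ω) ℙ) (hu0 : ∀ i, 0 ≤ u i)
    (hu : ∀ t t', 0 ≤ t → t < t' → ∃ i, t < u i ∧ u i < t')
    (hatoms : ∀ x, 0 ≤ x → x ∉ Set.range u → ℙ {ω | p ω = x} = 0) :
    ∀ᵐ ω, H (p ω) ω = (supBelow u (p ω) fun i => H (u i) ω).toReal := by
  set K : Ω → ℕ → ℝ := fun ω i => H (u i) ω
  have hK : Measurable K := measurable_pi_lambda _ fun i => hHmeas _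
  have hpK : IndepFun p K ℙ :=
    hindep.comp measurable_id (measurable_pi_lambda _ fun i => measurable_pi_apply (u i))
  set B : Set (ℝ × (ℕ → ℝ)) :=
    {z | 0 ≤ z.1 ∧ z.1 ∉ Set.range u ∧ supBelow u z.1 z.2 < infAbove u z.1 z.2}
  have hB : MeasurableSet B :=
    (measurable_fst measurableSet_Ici).inter <|
      (measurable_fst (Set.countable_range u).measurableSet.compl).inter <|
        measurableSet_lt (measurable_supBelow u) (measurable_infAbove u)
  have hslice : ∀ k, Measure.map p ℙ ((fun x => (x, k)) ⁻¹' B) = 0 := fun k => by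
    have hsub : (fun x => (x, k)) ⁻¹' B ⊆ {t | 0 ≤ t ∧ supBelow u t k < infAbove u t k} :=
      fun x hx => ⟨hx.1, hx.2.2⟩
    refine (measure_null_iff_singleton ((countable_setOf_supBelow_lt_infAbove hu k).mono
      hsub)).mpr fun x hx => ?_
    rw [Measure.map_apply hp (measurableSet_singleton x)]
    exact hatoms x hx.1 hx.2.1
  have hnull : ℙ ((fun ω => (p ω, K ω)) ⁻¹' B) = 0 := by
    rw [← Measure.map_apply (hp.prodMk hK) hB,
      (indepFun_iff_map_prod_eq_prod_map_map hp.aemeasurable hK.aemeasurable).mp hpK,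
      Measure.prod_apply_symm hB]
    simp [hslice]
  filter_upwards [measure_eq_zero_iff_ae_notMem.mp hnull] with ω hω
  have key := supBelow_comp_eq hu0 (hHmono ω) (hp0 ω) (or_iff_not_imp_left.mpr
    fun hr hlt => hω ⟨hp0 ω, hr, hlt⟩)
  rw [show (supBelow u (p ω) fun i => H (u i) ω) = _ from key,
    ENNReal.toReal_ofReal (hH0 _ _ (hp0 ω))]

noncomputable def supBelowSeq (u : ℕ → ℝ) (z : (ℕ → ℝ) × (ℕ → ℝ)) : ℕ → ℝ :=
  fun j => (supBelow u (z.1 j) z.2).toReal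

theorem measurable_supBelowSeq (u : ℕ → ℝ) : Measurable (supBelowSeq u) :=
  measurable_pi_lambda _ fun j => ENNReal.measurable_toReal.comp <|
    (measurable_supBelow u).comp (f := fun z : (ℕ → ℝ) × (ℕ → ℝ) => (z.1 j, z.2))
      (((measurable_pi_apply j).comp measurable_fst).prodMk measurable_snd)

theorem map_eval_eq_map_supBelowSeq {H : ℝ → Ω → ℝ} (hHmeas : ∀ t, Measurable (H t))
    (hHmono : ∀ ω, MonotoneOn (fun t => H t ω) (Set.Ici 0)) (hH0 : ∀ t ω, 0 ≤ t → 0 ≤ H t ω)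
    {Y : Ω → ℕ → ℝ} (hY : Measurable Y) (hY0 : ∀ ω j, 0 ≤ Y ω j)
    (hindep : IndepFun Y (fun ω t => H t ω) ℙ) (hu0 : ∀ i, 0 ≤ u i)
    (hu : ∀ t t', 0 ≤ t → t < t' → ∃ i, t < u i ∧ u i < t')
    (hatoms : ∀ j x, 0 ≤ x → x ∉ Set.range u → ℙ {ω | Y ω j = x} = 0) :
    Measure.map (fun ω j => H (Y ω j) ω) ℙ =
      Measure.map (fun ω => supBelowSeq u (Y ω, fun i => H (u i) ω)) ℙ := by
  refine Measure.map_congr ?_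
  filter_upwards [ae_all_iff.mpr fun j => ae_eq_toReal_supBelow hHmeas hHmono hH0
    ((measurable_pi_apply j).comp hY) (fun ω => hY0 ω j)
    (hindep.comp (measurable_pi_apply j) measurable_id) hu0 hu (hatoms j)] with ω hω
  exact funext hω

theorem exists_dense_seq_containing_atoms {κ : Type*} [Countable κ] {V : κ → Ω → ℝ}
    (hV : ∀ k, Measurable (V k)) :
    ∃ u : ℕ → ℝ, (∀ i, 0 ≤ u i) ∧ (∀ t t', 0 ≤ t → t < t' → ∃ i, t < u i ∧ u i < t') ∧
      ∀ k x, 0 ≤ x → x ∉ Set.range u → ℙ {ω | V k ω = x} = 0 := by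
  set D := Set.Ici 0 ∩ (Set.range ((↑) : ℚ → ℝ) ∪ ⋃ k, {x | 0 < ℙ {ω | V k ω = x}})
  have hD : D.Countable := ((Set.countable_range _).union (Set.countable_iUnion fun k =>
    Measure.countable_meas_level_set_pos (hV k))).mono Set.inter_subset_right
  obtain ⟨u, hu⟩ := hD.exists_eq_range ⟨0, Set.mem_Ici.mpr le_rfl, Or.inl ⟨0, Rat.cast_zero⟩⟩
  refine ⟨u, fun i => (hu ▸ Set.mem_range_self i : u i ∈ D).1, fun t t' ht htt' => ?_,
    fun k x hx hxu => ?_⟩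
  · obtain ⟨q, htq, hqt'⟩ := exists_rat_btwn htt'
    obtain ⟨i, hi⟩ : (q : ℝ) ∈ Set.range u := hu ▸ ⟨ht.trans htq.le, Or.inl ⟨q, rfl⟩⟩
    exact ⟨i, hi ▸ htq, hi ▸ hqt'⟩
  · by_contra h
    exact hxu (hu ▸ ⟨hx, Or.inr (Set.mem_iUnion.mpr ⟨k, pos_iff_ne_zero.mpr h⟩)⟩)

theorem map_eval_eq_of_map_eq {H : ℝ → Ω → ℝ} (hHmeas : ∀ t, Measurable (H t))
    (hHmono : ∀ ω, MonotoneOn (fun t => H t ω) (Set.Ici 0)) (hH0 : ∀ t ω, 0 ≤ t → 0 ≤ H t ω)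
    {Y Z : Ω → ℕ → ℝ} (hY : Measurable Y) (hZ : Measurable Z) (hY0 : ∀ ω j, 0 ≤ Y ω j)
    (hZ0 : ∀ ω j, 0 ≤ Z ω j) (hYH : IndepFun Y (fun ω t => H t ω) ℙ)
    (hZH : IndepFun Z (fun ω t => H t ω) ℙ) (hYZ : Measure.map Y ℙ = Measure.map Z ℙ) :
    Measure.map (fun ω j => H (Y ω j) ω) ℙ = Measure.map (fun ω j => H (Z ω j) ω) ℙ := by
  obtain ⟨u, hu0, hu, hatoms⟩ := exists_dense_seq_containing_atoms
    (V := Sum.elim (fun j ω => Y ω j) fun j ω => Z ω j)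
    (Sum.forall.mpr ⟨fun j => (measurable_pi_apply j).comp hY,
      fun j => (measurable_pi_apply j).comp hZ⟩)
  have hK : Measurable fun ω i => H (u i) ω := measurable_pi_lambda _ fun i => hHmeas _
  have hev : Measurable fun (g : ℝ → ℝ) i => g (u i) :=
    measurable_pi_lambda _ fun i => measurable_pi_apply _
  rw [map_eval_eq_map_supBelowSeq hHmeas hHmono hH0 hY hY0 hYH hu0 hu (fun j => hatoms (.inl j)),
    map_eval_eq_map_supBelowSeq hHmeas hHmono hH0 hZ hZ0 hZH hu0 hu (fun j => hatoms (.inr j))]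
  exact ((IdentDistrib.prodMk ⟨hY.aemeasurable, hZ.aemeasurable, hYZ⟩
    (.refl hK.aemeasurable) (hYH.comp measurable_id hev) (hZH.comp measurable_id hev)).comp
      (measurable_supBelowSeq u)).map_eq

theorem map_mul_eval_eq_map_eval_mul {G : ℝ → Ω → ℝ} (hGmeas : ∀ t, Measurable (G t))
    (hGmono : ∀ ω, MonotoneOn (fun t => G t ω) (Set.Ici 0)) (hG0 : ∀ t ω, 0 ≤ t → 0 ≤ G t ω)
    {μ : ℝ} (hμ : 0 ≤ μ) (hGss : ∀ (m : ℕ) (t : Fin m → ℝ),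
      Measure.map (fun ω i => G (μ * t i) ω) ℙ = Measure.map (fun ω i => μ * G (t i) ω) ℙ)
    {X : Ω → ℕ → ℝ} (hX : Measurable X) (hX0 : ∀ ω j, 0 ≤ X ω j)
    (hXG : IndepFun X (fun ω t => G t ω) ℙ) :
    Measure.map (fun ω j => μ * G (X ω j) ω) ℙ = Measure.map (fun ω j => G (μ * X ω j) ω) ℙ := by
  obtain ⟨u, hu0, hu, hatoms⟩ := exists_dense_seq_containing_atoms (V := fun j ω => X ω j)
    fun j => (measurable_pi_apply j).comp hX
  have hK₁ : Measurable fun ω i => μ * G (u i) ω :=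
    measurable_pi_lambda _ fun i => (hGmeas _).const_mul μ
  have hK₂ : Measurable fun ω i => G (μ * u i) ω := measurable_pi_lambda _ fun i => hGmeas _
  have hXH₁ : IndepFun X (fun ω t => μ * G t ω) ℙ := hXG.comp measurable_id
    (measurable_pi_lambda (fun (g : ℝ → ℝ) t => μ * g t) fun t =>
      (measurable_pi_apply t).const_mul _)
  have hXH₂ : IndepFun X (fun ω t => G (μ * t) ω) ℙ := hXG.comp measurable_id
    (measurable_pi_lambda (fun (g : ℝ → ℝ) t => g (μ * t)) fun t => measurable_pi_apply _)
  have hev : Measurable fun (g : ℝ → ℝ) i => g (u i) :=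
    measurable_pi_lambda _ fun i => measurable_pi_apply _
  have hK : Measure.map (fun ω i => μ * G (u i) ω) ℙ = Measure.map (fun ω i => G (μ * u i) ω) ℙ :=
    map_pi_eq_of_forall_fin (fun i => (hGmeas _).const_mul μ) (fun i => hGmeas _)
      fun m s => (hGss m (u ∘ s)).symm
  refine (map_eval_eq_map_supBelowSeq (H := fun t ω => μ * G t ω)
    (fun t => (hGmeas t).const_mul μ)
    (fun ω a ha b hb hab => mul_le_mul_of_nonneg_left (hGmono ω ha hb hab) hμ)
    (fun t ω ht => mul_nonneg hμ (hG0 t ω ht)) hX hX0 hXH₁ hu0 hu hatoms).trans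
      (.trans ?_ (map_eval_eq_map_supBelowSeq (H := fun t ω => G (μ * t) ω) (fun t => hGmeas _)
        (fun ω a ha b hb hab => hGmono ω (mul_nonneg hμ ha) (mul_nonneg hμ hb)
          (mul_le_mul_of_nonneg_left hab hμ))
        (fun t ω ht => hG0 _ ω (mul_nonneg hμ ht)) hX hX0 hXH₂ hu0 hu hatoms).symm)
  exact ((IdentDistrib.prodMk (.refl hX.aemeasurable) ⟨hK₁.aemeasurable, hK₂.aemeasurable, hK⟩
    (hXH₁.comp measurable_id hev) (hXH₂.comp measurable_id hev)).comp
      (measurable_supBelowSeq u)).map_eq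

end Probability

theorem stmt8_general {Ω : Type*} [MeasureSpace Ω] [IsProbabilityMeasure (ℙ : Measure Ω)]
    (μ : ℝ) (X : ℕ → Ω → ℝ) (hXmeas : ∀ j, Measurable (X j))
    (hXnonneg : ∀ j ω, 0 ≤ X j ω)
    (ξ : ℕ → Ω → ℕ) (hξmeas : ∀ i, Measurable (ξ i))
    (hmean : μ = ∫ ω, (ξ 0 ω : ℝ))
    (R : ℕ → Ω → ℕ) (hR : ∀ k ω, R k ω = ∑ i ∈ Finset.range k, ξ i ω)
    (hSFPE : Measure.map (fun ω => fun j : ℕ => μ * X (j + 1) ω) ℙ =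
      Measure.map (fun ω => fun j : ℕ => X (R (j + 1) ω) ω) ℙ)
    (G : ℝ → Ω → ℝ) (hGmeas : ∀ t, Measurable (G t))
    (hGmono : ∀ ω, MonotoneOn (fun t => G t ω) (Set.Ici (0 : ℝ)))
    (hGnonneg : ∀ t ω, 0 ≤ t → 0 ≤ G t ω)
    (hGindep : IndepFun (fun ω => (fun j : ℕ => X j ω, fun i : ℕ => ξ i ω))
      (fun ω => fun t : ℝ => G t ω) ℙ)
    (hGss : ∀ (m : ℕ) (t : Fin m → ℝ),
      Measure.map (fun ω => fun i : Fin m => G (μ * t i) ω) ℙ =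
        Measure.map (fun ω => fun i : Fin m => μ * G (t i) ω) ℙ) :
    Measure.map (fun ω => fun j : ℕ => μ * G (X (j + 1) ω) ω) ℙ =
      Measure.map (fun ω => fun j : ℕ => G (X (R (j + 1) ω) ω) ω) ℙ := by
  have hμ : 0 ≤ μ := hmean ▸ integral_nonneg fun ω => Nat.cast_nonneg _
  set S : Ω → (ℕ → ℝ) × (ℕ → ℕ) := fun ω => (fun j => X j ω, fun i => ξ i ω)
  set walk : (ℕ → ℝ) × (ℕ → ℕ) → ℕ → ℝ := fun s j => s.1 (∑ i ∈ Finset.range (j + 1), s.2 i)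
  have hS : Measurable S := (measurable_pi_lambda _ hXmeas).prodMk (measurable_pi_lambda _ hξmeas)
  have hshift : Measurable fun (s : (ℕ → ℝ) × (ℕ → ℕ)) j => s.1 (j + 1) :=
    measurable_pi_lambda _ fun j => (measurable_pi_apply _).comp measurable_fst
  have hscale : Measurable fun (s : (ℕ → ℝ) × (ℕ → ℕ)) j => μ * s.1 (j + 1) :=
    measurable_pi_lambda _ fun j => ((measurable_pi_apply _).comp measurable_fst).const_mul _
  have hwalk : Measurable walk :=
    measurable_pi_lambda _ fun j => measurable_apply_of_measurable_index
      (fun n => (measurable_pi_apply n).comp measurable_fst)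
      (Finset.measurable_sum _ fun i _ => (measurable_pi_apply i).comp measurable_snd)
  have hR' : (fun ω j => X (R (j + 1) ω) ω) = walk ∘ S := by
    funext ω j
    simp [walk, S, hR]
  calc Measure.map (fun ω j => μ * G (X (j + 1) ω) ω) ℙ
      = Measure.map (fun ω j => G (μ * X (j + 1) ω) ω) ℙ :=
        map_mul_eval_eq_map_eval_mul hGmeas hGmono hGnonneg hμ hGss (hshift.comp hS)
          (fun ω j => hXnonneg _ ω) (hGindep.comp hshift measurable_id)
    _ = Measure.map (fun ω j => G (X (R (j + 1) ω) ω) ω) ℙ :=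
        map_eval_eq_of_map_eq hGmeas hGmono hGnonneg (hscale.comp hS) (hR' ▸ hwalk.comp hS)
          (fun ω j => mul_nonneg hμ (hXnonneg _ ω)) (fun ω j => hXnonneg _ ω)
          (hGindep.comp hscale measurable_id) (hR' ▸ hGindep.comp hwalk measurable_id) hSFPE

/-- If the nondecreasing nonnegative random sequence `(X j)_{j ≥ 1}` satisfies the
stochastic fixed-point equation `(μ X_1, μ X_2, …) =_d (X_{R(1)}, X_{R(2)}, …)` with `R` an
increasing `ℕ`-valued random walk of mean step `μ` independent of `X`, and `G` is a
nondecreasing random process on `[0,∞)`, independent of `(X, R)`, with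
`(G(μ t))_t =_{f.d.d.} (μ G(t))_t`, then `(G(X_1), G(X_2), …)` satisfies the same equation.
(Indices: `X j` for `j ≥ 1` is the `j`-th term; `R k = ξ 0 + ⋯ + ξ (k-1)`.) -/
theorem stmt8 {Ω : Type*} [MeasureSpace Ω] [IsProbabilityMeasure (ℙ : Measure Ω)]
    (μ : ℝ) (X : ℕ → Ω → ℝ) (hXmeas : ∀ j, Measurable (X j))
    (hXnonneg : ∀ j ω, 0 ≤ X j ω) (hXmono : ∀ ω, Monotone (fun j => X j ω))
    (ξ : ℕ → Ω → ℕ) (hξmeas : ∀ i, Measurable (ξ i)) (hξpos : ∀ i ω, 1 ≤ ξ i ω)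
    (hξiid : iIndepFun ξ ℙ)
    (hξid : ∀ i, IdentDistrib (ξ i) (ξ 0) ℙ ℙ)
    (hmean : μ = ∫ ω, (ξ 0 ω : ℝ))
    (R : ℕ → Ω → ℕ) (hR : ∀ k ω, R k ω = ∑ i ∈ Finset.range k, ξ i ω)
    (hXRindep : IndepFun (fun ω => fun j : ℕ => X j ω) (fun ω => fun i : ℕ => ξ i ω) ℙ)
    (hSFPE : Measure.map (fun ω => fun j : ℕ => μ * X (j + 1) ω) ℙ =
      Measure.map (fun ω => fun j : ℕ => X (R (j + 1) ω) ω) ℙ)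
    (G : ℝ → Ω → ℝ) (hGmeas : ∀ t, Measurable (G t))
    (hGmono : ∀ ω, MonotoneOn (fun t => G t ω) (Set.Ici (0 : ℝ)))
    (hGnonneg : ∀ t ω, 0 ≤ t → 0 ≤ G t ω)
    (hGindep : IndepFun (fun ω => (fun j : ℕ => X j ω, fun i : ℕ => ξ i ω))
      (fun ω => fun t : ℝ => G t ω) ℙ)
    (hGss : ∀ (m : ℕ) (t : Fin m → ℝ),
      Measure.map (fun ω => fun i : Fin m => G (μ * t i) ω) ℙ =
        Measure.map (fun ω => fun i : Fin m => μ * G (t i) ω) ℙ) :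
    Measure.map (fun ω => fun j : ℕ => μ * G (X (j + 1) ω) ω) ℙ =
      Measure.map (fun ω => fun j : ℕ => G (X (R (j + 1) ω) ω) ω) ℙ :=
  stmt8_general μ X hXmeas hXnonneg ξ hξmeas hmean R hR hSFPE G hGmeas hGmono hGnonneg hGindep hGss
end

section
/- Let (Z_∞^{(*,j)})_{j≥1} be i.i.d. positive random variables with continuous distribution unbounded above, and let R be an independent increasing ℕ-valued random walk. If the distribution of Z_∞^* := Z_∞^{(*,1)} satisfies α (Z_∞^{(*,1)} ∨ ⋯ ∨ Z_∞^{(*,ξ)}) =_d Z_∞^* where ξ = R(1) is independent of the Z's and α ∈ (0,1), then the sequence (M_j)_{j≥1} with M_j := Z_∞^{(*,1)} ∨ ⋯ ∨ Z_∞^{(*,j)} satisfies (M_1, M_2, …) =_d (α M_{R(1)}, α M_{R(2)}, …), with R independent of (M_j). -/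
/-!
Let `Y k = α · max {Z i : R k ≤ i < R (k + 1)}` be the scaled block maxima. Since the blocks are
nonempty, `α M_{R (j + 1)} = Y 0 ∨ ⋯ ∨ Y j`, so both sides are images of a sequence under the
running-maximum map and it suffices that `(Y k)` and `(Z k)` have the same law. Conditioning on the
block lengths, which are independent of `Z`, gives
`P (Y k ≤ c k for k ∈ s) = E ∏_{k ∈ s} F (c k / α) ^ ξ k` with `F` the distribution function of
`Z 0`. This factorizes because the `ξ k` are i.i.d., and each factor is `F (c k)` by the
fixed-point equation. Laws on `ℕ → ℝ` are determined by such orthant probabilities.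
-/

open MeasureTheory ProbabilityTheory

theorem ciSup_fin_le_iff {α : Type*} [ConditionallyCompleteLattice α] {n : ℕ} (hn : 0 < n)
    (f : ℕ → α) (c : α) : (⨆ i : Fin n, f i) ≤ c ↔ ∀ i < n, f i ≤ c := by
  have : Nonempty (Fin n) := ⟨⟨0, hn⟩⟩
  rw [ciSup_le_iff (Set.finite_range _).bddAbove, Fin.forall_iff]

theorem sum_range_add_lt_sum_range_add {u : ℕ → ℕ} {k k' i i' : ℕ} (hk : k < k')
    (hi : i < u k) : ∑ l ∈ Finset.range k, u l + i < ∑ l ∈ Finset.range k', u l + i' := by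
  have : ∑ l ∈ Finset.range (k + 1), u l ≤ ∑ l ∈ Finset.range k', u l :=
    Finset.sum_le_sum_of_subset (Finset.range_subset_range.2 hk)
  rw [Finset.sum_range_succ] at this
  omega

theorem forall_lt_sum_range_iff (u : ℕ → ℕ) (n : ℕ) (p : ℕ → Prop) :
    (∀ i < ∑ k ∈ Finset.range n, u k, p i) ↔
      ∀ k < n, ∀ i < u k, p (∑ l ∈ Finset.range k, u l + i) := by
  induction n with
  | zero => simp
  | succ n ih =>
    rw [Finset.sum_range_succ]
    constructor
    · intro h k hk i hi
      rcases Nat.lt_succ_iff_lt_or_eq.1 hk with hk | rfl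
      · exact ih.1 (fun i hi => h i (by omega)) k hk i hi
      · exact h _ (by omega)
    · intro h i hi
      by_cases hin : i < ∑ k ∈ Finset.range n, u k
      · exact ih.2 (fun k hk => h k (by omega)) i hin
      · simpa [Nat.add_sub_cancel' (not_lt.1 hin)] using
          h n n.lt_succ_self (i - ∑ k ∈ Finset.range n, u k) (by omega)

theorem injective_sum_range_add (u : ℕ → ℕ) :
    Function.Injective fun p : (Σ k, Fin (u k)) => ∑ l ∈ Finset.range p.1, u l + p.2 := by
  rintro ⟨k, i⟩ ⟨k', i'⟩ h
  obtain rfl : k = k' := by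
    by_contra hne
    rcases Nat.lt_or_gt_of_ne hne with hlt | hlt
    · exact (sum_range_add_lt_sum_range_add (i' := i') hlt i.2).ne h
    · exact (sum_range_add_lt_sum_range_add (i' := i) hlt i'.2).ne' h
  obtain rfl : i = i' := Fin.ext (by simpa using h)
  rfl

/-- An empty block (`u k = 0`) gets the junk value `⨆ i : Fin 0, _ = 0`. -/
noncomputable def blockMax (z : ℕ → ℝ) (u : ℕ → ℕ) (k : ℕ) : ℝ :=
  ⨆ i : Fin (u k), z (∑ l ∈ Finset.range k, u l + i)

theorem blockMax_le_iff {u : ℕ → ℕ} {k : ℕ} (hu : 0 < u k) (z : ℕ → ℝ) (c : ℝ) :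
    blockMax z u k ≤ c ↔ ∀ i < u k, z (∑ l ∈ Finset.range k, u l + i) ≤ c :=
  ciSup_fin_le_iff hu (fun i => z (∑ l ∈ Finset.range k, u l + i)) c

theorem iSup_fin_sum_range_eq_iSup_blockMax {u : ℕ → ℕ} (hu : ∀ k, 0 < u k) (z : ℕ → ℝ)
    (j : ℕ) :
    ⨆ i : Fin (∑ k ∈ Finset.range (j + 1), u k), z i = ⨆ k : Fin (j + 1), blockMax z u k := by
  have hpos : 0 < ∑ k ∈ Finset.range (j + 1), u k := by
    rw [Finset.sum_range_succ']; exact Nat.add_pos_right _ (hu 0)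
  refine eq_of_forall_ge_iff fun c => ?_
  rw [ciSup_fin_le_iff hpos, ciSup_fin_le_iff j.succ_pos (blockMax z u)]
  simp only [blockMax_le_iff (hu _)]
  exact forall_lt_sum_range_iff u (j + 1) (z · ≤ c)

noncomputable def runningMax (f : ℕ → ℝ) (j : ℕ) : ℝ := ⨆ i : Fin (j + 1), f i

theorem measurable_runningMax : Measurable runningMax :=
  measurable_pi_lambda _ fun _ => Measurable.iSup fun _ => measurable_pi_apply _

theorem measurable_apply_index {Ω β : Type*} [MeasurableSpace Ω] [MeasurableSpace β]
    {ι : Type*} [Countable ι] [MeasurableSpace ι] [MeasurableSingletonClass ι]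
    {N : Ω → ι} (hN : Measurable N) {H : ι → Ω → β} (hH : ∀ n, Measurable (H n)) :
    Measurable fun ω => H (N ω) ω :=
  (measurable_from_prod_countable_left (f := fun p : Ω × ι => H p.2 p.1) hH).comp
    (measurable_id.prodMk hN)

theorem MeasureTheory.Measure.pi_ext_Iic {ι α : Type*} [LinearOrder α] [TopologicalSpace α]
    [OrderTopology α] [SecondCountableTopology α] [Nonempty α] [MeasurableSpace α] [BorelSpace α]
    {μ ν : Measure (ι → α)} [IsFiniteMeasure μ]
    (h : ∀ (s : Finset ι) (c : ι → α),
      μ ((s : Set ι).pi fun i => Set.Iic (c i)) = ν ((s : Set ι).pi fun i => Set.Iic (c i))) :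
    μ = ν := by
  let C : ι → Set (Set (ι → α)) := fun i => Set.preimage (Function.eval i) '' Set.range Set.Iic
  have hgen : MeasurableSpace.pi = MeasurableSpace.generateFrom (piiUnionInter C Set.univ) := by
    refine le_antisymm (iSup_le fun i => ?_) (generateFrom_piiUnionInter_le _ (fun i => ?_) _)
    · rw [BorelSpace.measurable_eq (α := α), borel_eq_generateFrom_Iic,
        MeasurableSpace.comap_generateFrom]
      exact MeasurableSpace.generateFrom_mono (subset_piiUnionInter (π := C) (Set.mem_univ i))
    · refine MeasurableSpace.generateFrom_le ?_
      rintro _ ⟨_, ⟨c, rfl⟩, rfl⟩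
      exact measurable_pi_apply i measurableSet_Iic
  refine ext_of_generate_finite _ hgen (isPiSystem_piiUnionInter _ (fun i => ?_) _) ?_
    (by simpa using h ∅ fun _ => Classical.arbitrary α)
  · exact isPiSystem_Iic.comap _
  · rintro _ ⟨s, -, f, hf, rfl⟩
    simp only [C, Set.mem_image, Set.mem_range, exists_exists_eq_and] at hf
    choose! c hc using hf
    have : (⋂ i ∈ s, f i) = (s : Set ι).pi fun i => Set.Iic (c i) := by
      ext x
      simp only [Set.mem_iInter, Set.mem_pi, Finset.mem_coe, Set.mem_Iic]
      exact forall₂_congr fun i hi => by rw [← hc i hi]; rfl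
    rw [this, h]

theorem ProbabilityTheory.IndepFun.measure_preimage_eq_lintegral {Ω α β : Type*}
    [MeasurableSpace Ω] [MeasurableSpace α] [MeasurableSpace β] {P : Measure Ω}
    [IsFiniteMeasure P] {X : Ω → α} {Y : Ω → β} (hXY : IndepFun X Y P) (hX : Measurable X)
    (hY : Measurable Y) {E : Set (α × β)} (hE : MeasurableSet E) :
    P ((fun ω => (X ω, Y ω)) ⁻¹' E) = ∫⁻ ω, P (X ⁻¹' {x | (x, Y ω) ∈ E}) ∂P := by
  rw [← Measure.map_apply (hX.prodMk hY) hE,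
    hXY.map_prod_eq_prod_map_map hX.aemeasurable hY.aemeasurable, Measure.prod_apply_symm hE,
    lintegral_map (measurable_measure_prodMk_right hE) hY]
  refine lintegral_congr fun ω => ?_
  rw [Measure.map_apply hX (measurable_prodMk_right hE)]
  rfl

section BlockMaxima

variable {Ω : Type*} [MeasurableSpace Ω] {P : Measure Ω}

theorem ProbabilityTheory.iIndepFun.measure_forall_block_mem {β : Type*} [MeasurableSpace β]
    {Z : ℕ → Ω → β} (hZ : iIndepFun Z P) (hZid : ∀ j, IdentDistrib (Z j) (Z 0) P P)
    (u : ℕ → ℕ) (s : Finset ℕ) {t : ℕ → Set β} (ht : ∀ k, MeasurableSet (t k)) :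
    P {ω | ∀ k ∈ s, ∀ i < u k, Z (∑ l ∈ Finset.range k, u l + i) ω ∈ t k} =
      ∏ k ∈ s, P (Z 0 ⁻¹' t k) ^ u k := by
  have hblocks := hZ.precomp (injective_sum_range_add u)
  have hset : {ω | ∀ k ∈ s, ∀ i < u k, Z (∑ l ∈ Finset.range k, u l + i) ω ∈ t k} =
      ⋂ p ∈ s.sigma fun k => (Finset.univ : Finset (Fin (u k))),
        (fun ω => Z (∑ l ∈ Finset.range p.1, u l + p.2) ω) ⁻¹' t p.1 := by
    ext ω
    simp only [Set.mem_ofPred_eq, Set.mem_iInter, Finset.mem_sigma, Finset.mem_univ, and_true,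
      Set.mem_preimage, Sigma.forall, Fin.forall_iff]
    exact ⟨fun h k i hi hk => h k hk i hi, fun h k hk i hi => h k i hi hk⟩
  rw [hset, hblocks.measure_inter_preimage_eq_mul _ fun p _ => ht p.1, Finset.prod_sigma]
  refine Finset.prod_congr rfl fun k _ => ?_
  simp [(hZid _).measure_mem_eq (ht k)]

variable {Z : ℕ → Ω → ℝ} {ξ : ℕ → Ω → ℕ}

theorem measurable_blockMax (hZ : ∀ j, Measurable (Z j)) (hξ : ∀ i, Measurable (ξ i)) (k : ℕ) :
    Measurable fun ω => blockMax (Z · ω) (ξ · ω) k := by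
  have hstart : ∀ i : ℕ, Measurable fun ω => ∑ l ∈ Finset.range k, ξ l ω + i :=
    fun i => (Finset.measurable_sum _ fun l _ => hξ l).add_const i
  exact measurable_apply_index (hξ k) fun n =>
    Measurable.iSup fun i : Fin n => measurable_apply_index (hstart i) hZ

theorem measure_forall_mul_blockMax_le [IsFiniteMeasure P] {α : ℝ} (hα : 0 < α)
    (hZ : ∀ j, Measurable (Z j)) (hZiid : iIndepFun Z P)
    (hZid : ∀ j, IdentDistrib (Z j) (Z 0) P P) (hξ : ∀ i, Measurable (ξ i))
    (hξpos : ∀ i ω, 0 < ξ i ω)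
    (hindep : IndepFun (fun ω j => Z j ω) (fun ω i => ξ i ω) P) (s : Finset ℕ) (c : ℕ → ℝ) :
    P {ω | ∀ k ∈ s, α * blockMax (Z · ω) (ξ · ω) k ≤ c k} =
      ∫⁻ ω, ∏ k ∈ s, P (Z 0 ⁻¹' Set.Iic (c k / α)) ^ ξ k ω ∂P := by
  let E : Set ((ℕ → ℝ) × (ℕ → ℕ)) :=
    {p | ∀ k ∈ s, ∀ i < p.2 k, p.1 (∑ l ∈ Finset.range k, p.2 l + i) ≤ c k / α}
  have hset : {ω | ∀ k ∈ s, α * blockMax (Z · ω) (ξ · ω) k ≤ c k} =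
      (fun ω => ((fun j => Z j ω), fun i => ξ i ω)) ⁻¹' E := by
    ext ω
    simp only [Set.mem_ofPred_eq, Set.mem_preimage, E, ← le_div_iff₀' hα]
    exact forall₂_congr fun k _ => blockMax_le_iff (hξpos k ω) _ _
  have hentry (k i : ℕ) :
      Measurable fun p : (ℕ → ℝ) × (ℕ → ℕ) => p.1 (∑ l ∈ Finset.range k, p.2 l + i) :=
    measurable_apply_index
      ((Finset.measurable_sum _ fun l _ => (measurable_pi_apply l).comp measurable_snd).add_const i)
      fun n => (measurable_pi_apply n).comp measurable_fst
  have hE : MeasurableSet E := measurableSet_setOfPred.2 <| Measurable.forall fun k =>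
    Measurable.imp measurable_const <| Measurable.forall fun i =>
      Measurable.imp (measurableSet_setOfPred.1 (measurableSet_lt measurable_const
        ((measurable_pi_apply k).comp measurable_snd))) <|
      measurableSet_setOfPred.1 (measurableSet_le (hentry k i) measurable_const)
  rw [hset, hindep.measure_preimage_eq_lintegral (measurable_pi_lambda _ hZ)
    (measurable_pi_lambda _ hξ) hE]
  exact lintegral_congr fun ω =>
    hZiid.measure_forall_block_mem hZid (ξ · ω) s fun k => measurableSet_Iic

theorem map_mul_blockMax_eq_map [IsProbabilityMeasure P] {α : ℝ} (hα : 0 < α)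
    (hZ : ∀ j, Measurable (Z j)) (hZiid : iIndepFun Z P)
    (hZid : ∀ j, IdentDistrib (Z j) (Z 0) P P) (hξ : ∀ i, Measurable (ξ i))
    (hξpos : ∀ i ω, 0 < ξ i ω) (hξiid : iIndepFun ξ P)
    (hξid : ∀ i, IdentDistrib (ξ i) (ξ 0) P P)
    (hindep : IndepFun (fun ω j => Z j ω) (fun ω i => ξ i ω) P)
    (hfix : P.map (fun ω => α * blockMax (Z · ω) (ξ · ω) 0) = P.map (Z 0)) :
    P.map (fun ω k => α * blockMax (Z · ω) (ξ · ω) k) = P.map (fun ω k => Z k ω) := by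
  set F : ℝ → ENNReal := fun c => P (Z 0 ⁻¹' Set.Iic c)
  have hY := measure_forall_mul_blockMax_le hα hZ hZiid hZid hξ hξpos hindep
  have hcdf (c : ℝ) : ∫⁻ ω, F (c / α) ^ ξ 0 ω ∂P = F c := by
    have h0 := hY {0} fun _ => c
    simp only [Finset.mem_singleton, forall_eq, Finset.prod_singleton] at h0
    rw [← h0]
    exact (Measure.map_apply ((measurable_blockMax hZ hξ 0).const_mul α)
      measurableSet_Iic).symm.trans
        ((congrArg (· (Set.Iic c)) hfix).trans (Measure.map_apply (hZ 0) measurableSet_Iic))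
  have hYbox (s : Finset ℕ) (c : ℕ → ℝ) :
      P {ω | ∀ k ∈ s, α * blockMax (Z · ω) (ξ · ω) k ≤ c k} = ∏ k ∈ s, F (c k) := by
    have hpow (k : ℕ) : Measurable fun n : ℕ => F (c k / α) ^ n := measurable_from_nat
    rw [hY]
    refine (lintegral_prod_eq_prod_lintegral_of_indepFun s (fun k ω => F (c k / α) ^ ξ k ω)
      (hξiid.comp _ hpow) fun k => (hpow k).comp (hξ k)).trans ?_
    exact Finset.prod_congr rfl fun k _ =>
      ((hξid k).comp (hpow k)).lintegral_eq.trans (hcdf (c k))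
  have hZbox (s : Finset ℕ) (c : ℕ → ℝ) :
      P {ω | ∀ k ∈ s, Z k ω ≤ c k} = ∏ k ∈ s, F (c k) := by
    have h := hZiid.measure_inter_preimage_eq_mul s (sets := fun k => Set.Iic (c k))
      fun k _ => measurableSet_Iic
    have hset : {ω | ∀ k ∈ s, Z k ω ≤ c k} = ⋂ k ∈ s, Z k ⁻¹' Set.Iic (c k) := by ext; simp
    rw [hset, h]
    exact Finset.prod_congr rfl fun k _ => (hZid k).measure_mem_eq measurableSet_Iic
  refine Measure.pi_ext_Iic fun s c => ?_
  have hbox : MeasurableSet ((s : Set ℕ).pi fun k => Set.Iic (c k)) :=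
    .pi s.countable_toSet fun _ _ => measurableSet_Iic
  rw [Measure.map_apply (measurable_pi_lambda _ fun k => (measurable_blockMax hZ hξ k).const_mul α)
    hbox, Measure.map_apply (measurable_pi_lambda _ hZ) hbox]
  exact (hYbox s c).trans (hZbox s c).symm

end BlockMaxima

theorem stmt9_general {Ω : Type*} [MeasureSpace Ω] [IsProbabilityMeasure (ℙ : Measure Ω)]
    (α : ℝ) (hα : α ∈ Set.Ioo (0 : ℝ) 1)
    (Z : ℕ → Ω → ℝ) (hZmeas : ∀ j, Measurable (Z j))
    (hZiid : iIndepFun Z ℙ)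
    (hZid : ∀ j, IdentDistrib (Z j) (Z 0) ℙ ℙ)
    (ξ : ℕ → Ω → ℕ) (hξmeas : ∀ i, Measurable (ξ i)) (hξpos : ∀ i ω, 1 ≤ ξ i ω)
    (hξiid : iIndepFun ξ ℙ)
    (hξid : ∀ i, IdentDistrib (ξ i) (ξ 0) ℙ ℙ)
    (R : ℕ → Ω → ℕ) (hR : ∀ k ω, R k ω = ∑ i ∈ Finset.range k, ξ i ω)
    (hindep : IndepFun (fun ω => fun j : ℕ => Z j ω) (fun ω => fun i : ℕ => ξ i ω) ℙ)
    (hSFPE : Measure.map (fun ω => α * ⨆ i : Fin (R 1 ω), Z i ω) ℙ =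
      Measure.map (Z 0) ℙ) :
    Measure.map (fun ω => fun j : ℕ => ⨆ i : Fin (j + 1), Z i ω) ℙ =
      Measure.map (fun ω => fun j : ℕ => α * ⨆ i : Fin (R (j + 1) ω), Z i ω) ℙ := by
  have hY : Measurable fun ω k => α * blockMax (Z · ω) (ξ · ω) k :=
    measurable_pi_lambda _ fun k => (measurable_blockMax hZmeas hξmeas k).const_mul α
  have hfix : Measure.map (fun ω => α * blockMax (Z · ω) (ξ · ω) 0) ℙ = Measure.map (Z 0) ℙ := by
    convert hSFPE using 4 with ω
    rw [show R 1 ω = ξ 0 ω by simp [hR]]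
    simp [blockMax]
  have hrecord : (fun ω j => α * ⨆ i : Fin (R (j + 1) ω), Z i ω) =
      runningMax ∘ fun ω k => α * blockMax (Z · ω) (ξ · ω) k := by
    funext ω j
    rw [hR, iSup_fin_sum_range_eq_iSup_blockMax (hξpos · ω) (Z · ω) j,
      Real.mul_iSup_of_nonneg hα.1.le]
    rfl
  rw [hrecord, ← Measure.map_map measurable_runningMax hY,
    map_mul_blockMax_eq_map hα.1 hZmeas hZiid hZid hξmeas hξpos hξiid hξid hindep hfix,
    Measure.map_map measurable_runningMax (measurable_pi_lambda _ hZmeas)]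
  rfl

/-- Let `(Z j)` be i.i.d. positive random variables with continuous, unbounded-above
distribution, let `R` be an independent increasing `ℕ`-valued random walk with steps `ξ`,
and `α ∈ (0,1)`.  If `α (Z_1 ∨ ⋯ ∨ Z_ξ) =_d Z_1`, then the running maximum sequence
`M j = Z_1 ∨ ⋯ ∨ Z_j` satisfies `(M_1, M_2, …) =_d (α M_{R(1)}, α M_{R(2)}, …)`.
(Here the max over `1,…,k` is written as `⨆ i : Fin k, Z i`.) -/
theorem stmt9 {Ω : Type*} [MeasureSpace Ω] [IsProbabilityMeasure (ℙ : Measure Ω)]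
    (α : ℝ) (hα : α ∈ Set.Ioo (0 : ℝ) 1)
    (Z : ℕ → Ω → ℝ) (hZmeas : ∀ j, Measurable (Z j))
    (hZpos : ∀ j ω, 0 < Z j ω)
    (hZiid : iIndepFun Z ℙ)
    (hZid : ∀ j, IdentDistrib (Z j) (Z 0) ℙ ℙ)
    (hZcont : ∀ x : ℝ, ℙ {ω | Z 0 ω = x} = 0)
    (hZunbdd : ∀ x : ℝ, 0 < ℙ {ω | x < Z 0 ω})
    (ξ : ℕ → Ω → ℕ) (hξmeas : ∀ i, Measurable (ξ i)) (hξpos : ∀ i ω, 1 ≤ ξ i ω)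
    (hξiid : iIndepFun ξ ℙ)
    (hξid : ∀ i, IdentDistrib (ξ i) (ξ 0) ℙ ℙ)
    (R : ℕ → Ω → ℕ) (hR : ∀ k ω, R k ω = ∑ i ∈ Finset.range k, ξ i ω)
    (hindep : IndepFun (fun ω => fun j : ℕ => Z j ω) (fun ω => fun i : ℕ => ξ i ω) ℙ)
    (hSFPE : Measure.map (fun ω => α * ⨆ i : Fin (R 1 ω), Z i ω) ℙ =
      Measure.map (Z 0) ℙ) :
    Measure.map (fun ω => fun j : ℕ => ⨆ i : Fin (j + 1), Z i ω) ℙ =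
      Measure.map (fun ω => fun j : ℕ => α * ⨆ i : Fin (R (j + 1) ω), Z i ω) ℙ :=
  stmt9_general α hα Z hZmeas hZiid hZid ξ hξmeas hξpos hξiid hξid R hR hindep hSFPE
end

section
/- Let S_α be a random variable with Sibuya distribution of parameter α ∈ (0,1), i.e. with probability generating function E[t^{S_α}] = 1 − (1−t)^α for t ∈ [0,1]. Then for every x > 0, lim_{α↓0} P(α log S_α ≤ x) = 1 − e^{−x}. -/
/-!
Put `n = ⌊e^{x/α}⌋`, so that the event `α log S_α ≤ x` is `S_α ≤ n`. Comparing `t^{S_α}`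
with the indicator of `{S_α ≤ n}` gives `t^n P(S_α ≤ n) ≤ G(t) ≤ P(S_α ≤ n) + t^n` for
`t ∈ [0, 1]`, where `G(t) = 1 - (1 - t)^α`. At `t = 1 - α/n`, Bernoulli's inequality
`(1 - α/n)^n ≥ 1 - α` turns the first bound into `P(S_α ≤ n) ≤ (1 - (α/n)^α) / (1 - α)`;
at `t = 1 - log n / n` we have `t^n ≤ 1/n`, so the second gives
`P(S_α ≤ n) ≥ 1 - (log n / n)^α - 1/n`. As `α ↓ 0`, `α log n → x` while `α log α → 0` and
`α log log n → 0`, so both bounds tend to `1 - e^{-x}`.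
-/

open MeasureTheory ProbabilityTheory Filter Topology Real Set

section ProbabilityGeneratingFunction

variable {Ω : Type*} {m : MeasurableSpace Ω} (μ : Measure Ω) {T : Ω → ℕ} {t : ℝ}

lemma integrable_pow_of_mem_Icc [IsFiniteMeasure μ] (hT : Measurable T) (ht : t ∈ Icc 0 1) :
    Integrable (fun ω => t ^ T ω) μ := by
  refine (integrable_const (1 : ℝ)).mono' (measurable_const.pow hT).aestronglyMeasurable ?_
  filter_upwards with ω
  rw [Real.norm_eq_abs, abs_of_nonneg (pow_nonneg ht.1 _)]
  exact pow_le_one₀ ht.1 ht.2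

lemma pow_mul_measureReal_le_integral_pow [IsFiniteMeasure μ] (hT : Measurable T)
    (ht : t ∈ Icc 0 1) (n : ℕ) : t ^ n * μ.real {ω | T ω ≤ n} ≤ ∫ ω, t ^ T ω ∂μ := by
  have hsub : {ω | T ω ≤ n} ⊆ {ω | t ^ n ≤ t ^ T ω} := fun ω hω =>
    pow_le_pow_of_le_one ht.1 ht.2 hω
  calc t ^ n * μ.real {ω | T ω ≤ n} ≤ t ^ n * μ.real {ω | t ^ n ≤ t ^ T ω} :=
        mul_le_mul_of_nonneg_left (measureReal_mono hsub) (pow_nonneg ht.1 _)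
    _ ≤ ∫ ω, t ^ T ω ∂μ := mul_meas_ge_le_integral_of_nonneg
        (Eventually.of_forall fun ω => pow_nonneg ht.1 _) (integrable_pow_of_mem_Icc μ hT ht) _

lemma integral_pow_le_measureReal_add_pow [IsProbabilityMeasure μ] (hT : Measurable T)
    (ht : t ∈ Icc 0 1) (n : ℕ) : ∫ ω, t ^ T ω ∂μ ≤ μ.real {ω | T ω ≤ n} + t ^ n := by
  have hA : MeasurableSet {ω | T ω ≤ n} := measurableSet_le hT measurable_const
  have hbound : ∀ ω, t ^ T ω ≤ {ω | T ω ≤ n}.indicator 1 ω + t ^ n := by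
    intro ω
    by_cases h : ω ∈ {ω | T ω ≤ n}
    · rw [indicator_of_mem h, Pi.one_apply]
      linarith [pow_le_one₀ (n := T ω) ht.1 ht.2, pow_nonneg ht.1 n]
    · rw [indicator_of_notMem h, zero_add]
      exact pow_le_pow_of_le_one ht.1 ht.2 (not_le.mp h).le
  calc ∫ ω, t ^ T ω ∂μ ≤ ∫ ω, ({ω | T ω ≤ n}.indicator 1 ω + t ^ n) ∂μ :=
        integral_mono (integrable_pow_of_mem_Icc μ hT ht)
          ((integrable_const 1).indicator hA |>.add (integrable_const _)) hbound
    _ = μ.real {ω | T ω ≤ n} + t ^ n := by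
        rw [integral_add ((integrable_const 1).indicator hA) (integrable_const _),
          integral_indicator_one hA, integral_const, probReal_univ, one_smul]

end ProbabilityGeneratingFunction

def HasSibuyaPGF {Ω : Type*} [MeasurableSpace Ω] (μ : Measure Ω) (T : Ω → ℕ) (α : ℝ) : Prop :=
  ∀ t ∈ Icc (0 : ℝ) 1, ∫ ω, t ^ T ω ∂μ = 1 - (1 - t) ^ α

namespace HasSibuyaPGF

variable {Ω : Type*} {m : MeasurableSpace Ω} {μ : Measure Ω} [IsProbabilityMeasure μ]
  {T : Ω → ℕ} {α : ℝ}

lemma measureReal_le (hG : HasSibuyaPGF μ T α) (hT : Measurable T) (hα : α ∈ Ioo 0 1)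
    {n : ℕ} (hn : 1 ≤ n) : μ.real {ω | T ω ≤ n} ≤ (1 - (α / n) ^ α) / (1 - α) := by
  have hn' : (1 : ℝ) ≤ n := Nat.one_le_cast.mpr hn
  have hv : α / n ∈ Icc 0 1 :=
    ⟨div_nonneg hα.1.le n.cast_nonneg, div_le_one_of_le₀ (hα.2.le.trans hn') n.cast_nonneg⟩
  have ht : 1 - α / n ∈ Icc 0 1 := ⟨by linarith [hv.2], by linarith [hv.1]⟩
  have hbernoulli : 1 - α ≤ (1 - α / n) ^ n := by
    have := one_add_mul_le_pow (a := -(α / n)) (by linarith [hv.2]) n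
    rwa [mul_neg, mul_div_cancel₀ _ (by positivity), ← sub_eq_add_neg, ← sub_eq_add_neg] at this
  have hmarkov := pow_mul_measureReal_le_integral_pow μ hT ht n
  rw [hG _ ht, sub_sub_cancel] at hmarkov
  rw [le_div_iff₀ (sub_pos.mpr hα.2)]
  calc μ.real {ω | T ω ≤ n} * (1 - α) ≤ (1 - α / n) ^ n * μ.real {ω | T ω ≤ n} := by
        rw [mul_comm]; gcongr
    _ ≤ 1 - (α / n) ^ α := hmarkov

lemma le_measureReal (hG : HasSibuyaPGF μ T α) (hT : Measurable T) {n : ℕ} (hn : 1 ≤ n) :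
    1 - (log n / n) ^ α - (n : ℝ)⁻¹ ≤ μ.real {ω | T ω ≤ n} := by
  have hn' : (1 : ℝ) ≤ n := Nat.one_le_cast.mpr hn
  have hlog : log n ≤ n := (log_le_sub_one_of_pos (by positivity)).trans (by linarith)
  have hu : log n / n ∈ Icc 0 1 :=
    ⟨div_nonneg (log_nonneg hn') (by positivity), div_le_one_of_le₀ hlog (by positivity)⟩
  have ht : 1 - log n / n ∈ Icc 0 1 := ⟨by linarith [hu.2], by linarith [hu.1]⟩
  have hpow : (1 - log n / n) ^ n ≤ (n : ℝ)⁻¹ := by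
    simpa [exp_neg, exp_log (by positivity : (0 : ℝ) < n)] using one_sub_div_pow_le_exp_neg hlog
  have htail := integral_pow_le_measureReal_add_pow μ hT ht n
  rw [hG _ ht, sub_sub_cancel] at htail
  linarith

end HasSibuyaPGF

section FloorExp

variable {x : ℝ}

lemma tendsto_const_div_nhdsGT_zero_atTop (hx : 0 < x) :
    Tendsto (fun α : ℝ => x / α) (𝓝[>] 0) atTop := by
  simpa only [div_eq_mul_inv] using tendsto_inv_nhdsGT_zero.const_mul_atTop hx

lemma tendsto_floor_exp_div_atTop (hx : 0 < x) :
    Tendsto (fun α : ℝ => (⌊exp (x / α)⌋₊ : ℝ)) (𝓝[>] 0) atTop :=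
  tendsto_natCast_atTop_atTop.comp <| tendsto_nat_floor_atTop.comp <|
    tendsto_exp_atTop.comp (tendsto_const_div_nhdsGT_zero_atTop hx)

lemma tendsto_mul_log_floor_exp_div (hx : 0 < x) :
    Tendsto (fun α : ℝ => α * log ⌊exp (x / α)⌋₊) (𝓝[>] 0) (𝓝 x) := by
  have hratio : Tendsto (fun α : ℝ => (⌊exp (x / α)⌋₊ : ℝ) / exp (x / α)) (𝓝[>] 0) (𝓝 1) :=
    tendsto_nat_floor_div_atTop.comp <|
      tendsto_exp_atTop.comp (tendsto_const_div_nhdsGT_zero_atTop hx)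
  have hlog := (continuousAt_log one_ne_zero).tendsto.comp hratio
  rw [log_one] at hlog
  have h := tendsto_const_nhds (x := x) |>.add <|
    (tendsto_id.mono_left nhdsWithin_le_nhds).mul hlog
  rw [mul_zero, add_zero] at h
  refine h.congr' ?_
  filter_upwards [self_mem_nhdsWithin,
    (tendsto_floor_exp_div_atTop hx).eventually_gt_atTop 0] with α hα hN
  rw [Function.comp_apply, log_div hN.ne' (exp_pos _).ne', log_exp, id, mul_sub,
    mul_div_cancel₀ _ (ne_of_gt hα)]
  ring

lemma tendsto_mul_log_nhdsGT_zero : Tendsto (fun α : ℝ => α * log α) (𝓝[>] 0) (𝓝 0) := by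
  simpa using (continuous_mul_log.tendsto 0).mono_left nhdsWithin_le_nhds

lemma tendsto_mul_log_log_floor_exp_div (hx : 0 < x) :
    Tendsto (fun α : ℝ => α * log (log ⌊exp (x / α)⌋₊)) (𝓝[>] 0) (𝓝 0) := by
  have h := ((tendsto_id.mono_left nhdsWithin_le_nhds).mul
    ((continuousAt_log hx.ne').tendsto.comp (tendsto_mul_log_floor_exp_div hx))).sub
    tendsto_mul_log_nhdsGT_zero
  rw [zero_mul, sub_zero] at h
  refine h.congr' ?_
  filter_upwards [self_mem_nhdsWithin, (tendsto_log_atTop.comp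
    (tendsto_floor_exp_div_atTop hx)).eventually_gt_atTop 0] with α hα hlogN
  rw [Function.comp_apply] at hlogN
  rw [Function.comp_apply, id, log_mul (ne_of_gt hα) hlogN.ne']
  ring

lemma tendsto_rpow_self_of_tendsto_mul_log {l : Filter ℝ} {f : ℝ → ℝ} {c : ℝ}
    (hf : ∀ᶠ α in l, 0 < f α) (h : Tendsto (fun α => α * log (f α)) l (𝓝 c)) :
    Tendsto (fun α => f α ^ α) l (𝓝 (exp c)) := by
  refine ((continuous_exp.tendsto c).comp h).congr' ?_
  filter_upwards [hf] with α hα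
  rw [Function.comp_apply, rpow_def_of_pos hα, mul_comm]

lemma tendsto_log_floor_exp_div_div_rpow (hx : 0 < x) :
    Tendsto (fun α : ℝ => (log ⌊exp (x / α)⌋₊ / ⌊exp (x / α)⌋₊) ^ α) (𝓝[>] 0)
      (𝓝 (exp (-x))) := by
  have hN := tendsto_floor_exp_div_atTop hx
  refine tendsto_rpow_self_of_tendsto_mul_log ?_ ?_
  · filter_upwards [hN.eventually_gt_atTop 0, (tendsto_log_atTop.comp hN).eventually_gt_atTop 0]
      with α hN hlogN
    exact div_pos hlogN hN
  · have h := (tendsto_mul_log_log_floor_exp_div hx).sub (tendsto_mul_log_floor_exp_div hx)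
    rw [zero_sub] at h
    refine h.congr' ?_
    filter_upwards [hN.eventually_gt_atTop 0, (tendsto_log_atTop.comp hN).eventually_gt_atTop 0]
      with α hN hlogN
    rw [Function.comp_apply] at hlogN
    rw [log_div hlogN.ne' hN.ne', mul_sub]

lemma tendsto_div_floor_exp_div_rpow (hx : 0 < x) :
    Tendsto (fun α : ℝ => (α / ⌊exp (x / α)⌋₊) ^ α) (𝓝[>] 0) (𝓝 (exp (-x))) := by
  have hN := tendsto_floor_exp_div_atTop hx
  have h := tendsto_mul_log_nhdsGT_zero.sub (tendsto_mul_log_floor_exp_div hx)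
  rw [zero_sub] at h
  refine tendsto_rpow_self_of_tendsto_mul_log ?_ (h.congr' ?_)
  · filter_upwards [self_mem_nhdsWithin, hN.eventually_gt_atTop 0] with α hα hN
    exact div_pos hα hN
  · filter_upwards [self_mem_nhdsWithin, hN.eventually_gt_atTop 0] with α hα hN
    rw [log_div (ne_of_gt hα) hN.ne', mul_sub]

end FloorExp

lemma mul_log_natCast_le_iff_le_floor_exp {α x : ℝ} (hα : 0 < α) (hx : 0 ≤ x) (k : ℕ) :
    α * log k ≤ x ↔ k ≤ ⌊exp (x / α)⌋₊ := by
  rcases k.eq_zero_or_pos with rfl | hk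
  · simpa using hx
  rw [mul_comm, ← le_div_iff₀ hα, log_le_iff_le_exp (Nat.cast_pos.mpr hk),
    Nat.le_floor_iff (exp_pos _).le]

theorem stmt10_general {Ω : Type*} [MeasureSpace Ω] [IsProbabilityMeasure (ℙ : Measure Ω)]
    (S : ℝ → Ω → ℕ) (hmeas : ∀ α, Measurable (S α))
    (hpgf : ∀ α ∈ Set.Ioo (0 : ℝ) 1, ∀ t ∈ Set.Icc (0 : ℝ) 1,
      (∫ ω, t ^ (S α ω)) = 1 - (1 - t) ^ α)
    (x : ℝ) (hx : 0 < x) :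
    Tendsto (fun α : ℝ => (ℙ {ω | α * Real.log (S α ω) ≤ x}).toReal)
      (nhdsWithin 0 (Set.Ioo 0 1)) (nhds (1 - Real.exp (-x))) := by
  have hl : 𝓝[Ioo 0 1] (0 : ℝ) ≤ 𝓝[>] 0 := nhdsWithin_mono _ Ioo_subset_Ioi_self
  have hN := tendsto_floor_exp_div_atTop hx
  have lower : Tendsto (fun α : ℝ => 1 - (log ⌊exp (x / α)⌋₊ / ⌊exp (x / α)⌋₊) ^ α
      - (⌊exp (x / α)⌋₊ : ℝ)⁻¹) (𝓝[Ioo 0 1] 0) (𝓝 (1 - exp (-x))) := by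
    simpa using ((tendsto_const_nhds.sub (tendsto_log_floor_exp_div_div_rpow hx)).sub
      (tendsto_inv_atTop_zero.comp hN)).mono_left hl
  have hα : Tendsto (fun α : ℝ => α) (𝓝[>] 0) (𝓝 0) := tendsto_id.mono_left nhdsWithin_le_nhds
  have upper : Tendsto (fun α : ℝ => (1 - (α / ⌊exp (x / α)⌋₊) ^ α) / (1 - α))
      (𝓝[Ioo 0 1] 0) (𝓝 (1 - exp (-x))) := by
    simpa [Pi.div_def] using ((tendsto_const_nhds.sub (tendsto_div_floor_exp_div_rpow hx)).div
      (tendsto_const_nhds.sub hα) (by norm_num : (1 : ℝ) - 0 ≠ 0)).mono_left hl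
  refine tendsto_of_tendsto_of_tendsto_of_le_of_le' lower upper ?_ ?_ <;>
  filter_upwards [self_mem_nhdsWithin, (hN.mono_left hl).eventually_ge_atTop 1] with α hα hN1 <;>
  simp only [mul_log_natCast_le_iff_le_floor_exp hα.1 hx.le]
  · exact HasSibuyaPGF.le_measureReal (hpgf α hα) (hmeas α) (Nat.one_le_cast.mp hN1)
  · exact HasSibuyaPGF.measureReal_le (hpgf α hα) (hmeas α) hα (Nat.one_le_cast.mp hN1)

/-- If `S α` has a Sibuya distribution with parameter `α ∈ (0,1)`, i.e. its probability
generating function is `E[t^{S α}] = 1 - (1-t)^α` for `t ∈ [0,1]`, then for every `x > 0`,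
`ℙ(α log S_α ≤ x) → 1 - e^{-x}` as `α ↓ 0`. -/
theorem stmt10 {Ω : Type*} [MeasureSpace Ω] [IsProbabilityMeasure (ℙ : Measure Ω)]
    (S : ℝ → Ω → ℕ) (hmeas : ∀ α, Measurable (S α))
    (hpos : ∀ α ω, 1 ≤ S α ω)
    (hpgf : ∀ α ∈ Set.Ioo (0 : ℝ) 1, ∀ t ∈ Set.Icc (0 : ℝ) 1,
      (∫ ω, t ^ (S α ω)) = 1 - (1 - t) ^ α)
    (x : ℝ) (hx : 0 < x) :
    Tendsto (fun α : ℝ => (ℙ {ω | α * Real.log (S α ω) ≤ x}).toReal)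
      (nhdsWithin 0 (Set.Ioo 0 1)) (nhds (1 - Real.exp (-x))) :=
  stmt10_general S hmeas hpgf x hx
end

section
/- If B_1, B_2, … are independent Bernoulli random variables with P(B_i = 1) = α/i, then S := min{n ∈ ℕ : B_n = 1} has Sibuya distribution with parameter α, i.e. E[t^S] = 1 − (1−t)^α for t ∈ [0,1]. -/
/-!
Write `q n = ∏_{1 ≤ i ≤ n} (1 - α / i)`. Independence gives `P(S > n) = q n`, hence
`P(S = n + 1) = q n - q (n + 1)`, while `P(no success) = lim q n = 0` because the harmonic series
diverges. Since `q n = (-1)^n (α - 1 choose n)`, Pascal's rule turns `q n - q (n + 1)` into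
`(-1)^n (α choose n + 1)`, which is exactly the coefficient of `t^(n+1)` in `1 - (1 - t)^α`
given by the binomial series.
-/

open Filter Finset MeasureTheory ProbabilityTheory

noncomputable def sibuyaTail (α : ℝ) (n : ℕ) : ℝ := ∏ i ∈ range n, (1 - α / (i + 1))

lemma Ring.succ_nsmul_choose_succ {R : Type*} [CommRing R] [BinomialRing R] (r : R) (n : ℕ) :
    (n + 1) • Ring.choose r (n + 1) = Ring.choose r n * (r - n) := by
  simpa using Ring.choose_smul_choose r (Nat.le_succ n)

section SibuyaTail

variable {α : ℝ}

lemma sibuyaTail_succ (n : ℕ) : sibuyaTail α (n + 1) = sibuyaTail α n * (1 - α / (n + 1)) :=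
  prod_range_succ _ n

lemma sibuyaTail_eq_choose (n : ℕ) : sibuyaTail α n = (-1) ^ n * Ring.choose (α - 1) n := by
  induction n with
  | zero => simp [sibuyaTail]
  | succ n ih =>
    have hrec := Ring.succ_nsmul_choose_succ (α - 1) n
    rw [nsmul_eq_mul, Nat.cast_succ] at hrec
    rw [sibuyaTail_succ, ih, pow_succ]
    field_simp
    linear_combination hrec

lemma sibuyaTail_sub_succ (n : ℕ) :
    sibuyaTail α n - sibuyaTail α (n + 1) = (-1) ^ n * Ring.choose α (n + 1) := by
  have hpascal := Ring.choose_succ_succ (α - 1) n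
  rw [sub_add_cancel] at hpascal
  rw [sibuyaTail_eq_choose, sibuyaTail_eq_choose, hpascal, pow_succ]
  ring

lemma hasSum_sibuyaTail_sub_mul_pow {t : ℝ} (ht : |t| < 1) :
    HasSum (fun n ↦ (sibuyaTail α n - sibuyaTail α (n + 1)) * t ^ (n + 1)) (1 - (1 - t) ^ α) := by
  have hbinom : HasSum (fun n ↦ (-t) ^ n * Ring.choose α n) ((1 - t) ^ α) := by
    have := Real.one_add_rpow_hasFPowerSeriesOnBall_zero (a := α) |>.hasSum (y := -t) (by
      simpa [enorm_eq_nnnorm, ← NNReal.coe_lt_coe] using ht)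
    simpa [FormalMultilinearSeries.ofScalars_apply_eq, binomialSeries, sub_eq_add_neg] using this
  have hterm (n : ℕ) : (sibuyaTail α n - sibuyaTail α (n + 1)) * t ^ (n + 1) =
      -((-t) ^ (n + 1) * Ring.choose α (n + 1)) := by
    rw [sibuyaTail_sub_succ, neg_pow t, pow_succ (-1 : ℝ)]
    ring
  simp only [hterm]
  simpa using ((hasSum_nat_add_iff' 1).mpr hbinom).neg

lemma one_sub_div_succ_nonneg (hα : α ≤ 1) (i : ℕ) : 0 ≤ 1 - α / (i + 1) :=
  sub_nonneg.2 <| div_le_one_of_le₀ (by linarith [i.cast_nonneg (α := ℝ)]) (by positivity)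

lemma sibuyaTail_nonneg (hα : α ≤ 1) (n : ℕ) : 0 ≤ sibuyaTail α n :=
  prod_nonneg fun i _ ↦ one_sub_div_succ_nonneg hα i

lemma sibuyaTail_succ_le (hα : α ∈ Set.Icc (0 : ℝ) 1) (n : ℕ) :
    sibuyaTail α (n + 1) ≤ sibuyaTail α n := by
  rw [sibuyaTail_succ]
  exact mul_le_of_le_one_right (sibuyaTail_nonneg hα.2 n)
    (sub_le_self _ (div_nonneg hα.1 (by positivity)))

lemma tendsto_sibuyaTail (hα0 : 0 < α) (hα1 : α ≤ 1) : Tendsto (sibuyaTail α) atTop (nhds 0) := by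
  have hbound (n : ℕ) : sibuyaTail α n ≤ Real.exp (-(α * ∑ i ∈ range n, 1 / ((i : ℝ) + 1))) := by
    rw [mul_sum, ← sum_neg_distrib, Real.exp_sum]
    refine prod_le_prod (fun i _ ↦ one_sub_div_succ_nonneg hα1 i) fun i _ ↦ ?_
    rw [mul_one_div, sub_eq_neg_add]
    exact Real.add_one_le_exp _
  have hharm := Real.tendsto_sum_range_one_div_nat_succ_atTop.const_mul_atTop hα0
  exact squeeze_zero (sibuyaTail_nonneg hα1) hbound
    (Real.tendsto_exp_atBot.comp (tendsto_neg_atTop_atBot.comp hharm))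

end SibuyaTail

section FirstSuccess

variable {Ω : Type*} (A : ℕ → Set Ω)

def noSuccessUpTo (n : ℕ) : Set Ω := ⋂ i ∈ range n, (A (i + 1))ᶜ

/-- Since `sInf ∅ = 0`, the value `0` means that none of `A 1, A 2, …` occurs. -/
noncomputable def firstSuccess (ω : Ω) : ℕ := sInf {n | 1 ≤ n ∧ ω ∈ A n}

variable {A}

lemma noSuccessUpTo_succ_subset (n : ℕ) : noSuccessUpTo A (n + 1) ⊆ noSuccessUpTo A n :=
  Set.biInter_subset_biInter_left (range_subset_range.2 n.le_succ)

lemma firstSuccess_eq_succ_iff {ω : Ω} {n : ℕ} :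
    firstSuccess A ω = n + 1 ↔ ω ∈ noSuccessUpTo A n ∧ ω ∈ A (n + 1) := by
  simp only [noSuccessUpTo, Set.mem_iInter, mem_range, Set.mem_compl_iff]
  constructor
  · intro h
    have hfirst : 1 ≤ n + 1 ∧ ω ∈ A (n + 1) := h ▸ Nat.sInf_mem (Nat.nonempty_of_sInf_eq_succ h)
    refine ⟨fun i hi hA ↦ ?_, hfirst.2⟩
    exact Nat.notMem_of_lt_sInf (h ▸ Nat.succ_lt_succ hi : i + 1 < firstSuccess A ω) ⟨by omega, hA⟩
  · rintro ⟨hbefore, hat⟩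
    refine IsLeast.csInf_eq ⟨⟨by omega, hat⟩, fun m ⟨hm, hA⟩ ↦ ?_⟩
    by_contra! hlt
    obtain ⟨i, rfl⟩ := Nat.exists_eq_add_of_le' hm
    exact hbefore i (by omega) hA

lemma firstSuccess_eq_zero_iff {ω : Ω} : firstSuccess A ω = 0 ↔ ∀ i, ω ∉ A (i + 1) := by
  simp only [firstSuccess, Nat.sInf_eq_zero, Set.mem_ofPred_eq, Set.eq_empty_iff_forall_notMem]
  constructor
  · rintro (⟨h, -⟩ | h) i hA
    · omega
    · exact h (i + 1) ⟨by omega, hA⟩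
  · refine fun h ↦ .inr fun x ⟨hx, hA⟩ ↦ ?_
    obtain ⟨i, rfl⟩ := Nat.exists_eq_add_of_le' hx
    exact h i hA

lemma firstSuccess_preimage_succ (n : ℕ) :
    firstSuccess A ⁻¹' {n + 1} = noSuccessUpTo A n \ noSuccessUpTo A (n + 1) := by
  ext ω
  simp only [Set.mem_preimage, Set.mem_singleton_iff, firstSuccess_eq_succ_iff, Set.mem_sdiff,
    noSuccessUpTo, Set.mem_iInter, mem_range, Set.mem_compl_iff]
  grind

lemma firstSuccess_preimage_zero_subset (n : ℕ) : firstSuccess A ⁻¹' {0} ⊆ noSuccessUpTo A n :=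
  fun _ hω ↦ Set.mem_biInter fun i _ ↦ firstSuccess_eq_zero_iff.1 hω i

variable [MeasurableSpace Ω]

lemma measurableSet_noSuccessUpTo (hA : ∀ i, MeasurableSet (A i)) (n : ℕ) :
    MeasurableSet (noSuccessUpTo A n) :=
  .biInter (Set.to_countable _) fun i _ ↦ (hA (i + 1)).compl

lemma measurable_firstSuccess (hA : ∀ i, MeasurableSet (A i)) : Measurable (firstSuccess A) := by
  refine measurable_to_countable' fun n ↦ ?_
  cases n with
  | zero =>
    have : firstSuccess A ⁻¹' {0} = ⋂ i, (A (i + 1))ᶜ := by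
      ext ω; simp [firstSuccess_eq_zero_iff]
    exact this ▸ .iInter fun i ↦ (hA (i + 1)).compl
  | succ n =>
    rw [firstSuccess_preimage_succ]
    exact (measurableSet_noSuccessUpTo hA n).diff (measurableSet_noSuccessUpTo hA (n + 1))

variable {μ : Measure Ω}

lemma measure_firstSuccess_preimage_succ [IsFiniteMeasure μ] (hA : ∀ i, MeasurableSet (A i))
    (n : ℕ) :
    μ (firstSuccess A ⁻¹' {n + 1}) = μ (noSuccessUpTo A n) - μ (noSuccessUpTo A (n + 1)) := by
  rw [firstSuccess_preimage_succ, measure_sdiff (noSuccessUpTo_succ_subset n)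
    (measurableSet_noSuccessUpTo hA _).nullMeasurableSet (measure_ne_top _ _)]

lemma measure_firstSuccess_preimage_zero
    (h : Tendsto (fun n ↦ μ (noSuccessUpTo A n)) atTop (nhds 0)) :
    μ (firstSuccess A ⁻¹' {0}) = 0 :=
  le_zero_iff.1 <| ge_of_tendsto' h fun n ↦ measure_mono (firstSuccess_preimage_zero_subset n)

end FirstSuccess

lemma measure_noSuccessUpTo_preimage {Ω β : Type*} [MeasurableSpace Ω] [MeasurableSpace β]
    {μ : Measure Ω} {B : ℕ → Ω → β} (hindep : iIndepFun B μ) {s : Set β} (hs : MeasurableSet s)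
    (n : ℕ) :
    μ (noSuccessUpTo (fun i ↦ B i ⁻¹' s) n) = ∏ i ∈ range n, μ (B (i + 1) ⁻¹' s)ᶜ :=
  (hindep.precomp (add_left_injective 1)).measure_inter_preimage_eq_mul (range n)
    (sets := fun _ ↦ sᶜ) fun _ _ ↦ hs.compl

lemma integral_comp_eq_tsum {Ω : Type*} [MeasurableSpace Ω] {μ : Measure Ω} [IsFiniteMeasure μ]
    {X : Ω → ℕ} (hX : Measurable X) {f : ℕ → ℝ} {C : ℝ} (hf : ∀ n, ‖f n‖ ≤ C) :
    ∫ ω, f (X ω) ∂μ = ∑' n, μ.real (X ⁻¹' {n}) * f n := by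
  have hfm : AEStronglyMeasurable f (μ.map X) := measurable_from_top.aestronglyMeasurable
  rw [← integral_map hX.aemeasurable hfm, integral_countable (.of_bound hfm C (.of_forall hf))]
  simp [map_measureReal_apply hX (measurableSet_singleton _)]

lemma measure_noSuccessUpTo_eq_sibuyaTail {Ω : Type*} [MeasurableSpace Ω] {μ : Measure Ω}
    [IsProbabilityMeasure μ] {α : ℝ} (hα : α ∈ Set.Icc (0 : ℝ) 1) {B : ℕ → Ω → ℕ}
    (hmeas : ∀ i, Measurable (B i)) (hindep : iIndepFun B μ)
    (hp : ∀ i : ℕ, 1 ≤ i → μ (B i ⁻¹' {1}) = ENNReal.ofReal (α / i)) (n : ℕ) :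
    μ (noSuccessUpTo (fun i ↦ B i ⁻¹' {1}) n) = ENNReal.ofReal (sibuyaTail α n) := by
  rw [measure_noSuccessUpTo_preimage hindep (measurableSet_singleton 1), sibuyaTail,
    ENNReal.ofReal_prod_of_nonneg fun i _ ↦ one_sub_div_succ_nonneg hα.2 i]
  refine prod_congr rfl fun i _ ↦ ?_
  rw [prob_compl_eq_one_sub (hmeas _ (measurableSet_singleton 1)), ← ENNReal.ofReal_one,
    ENNReal.ofReal_sub _ (div_nonneg hα.1 (by positivity)), hp (i + 1) (by omega), Nat.cast_succ]

theorem stmt11_general {Ω : Type*} [MeasureSpace Ω] [IsProbabilityMeasure (ℙ : Measure Ω)]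
    (α : ℝ) (hα : α ∈ Set.Ioo (0 : ℝ) 1)
    (B : ℕ → Ω → ℕ) (hmeas : ∀ i, Measurable (B i))
    (hindep : iIndepFun B ℙ)
    (hp : ∀ i : ℕ, 1 ≤ i → ℙ {ω | B i ω = 1} = ENNReal.ofReal (α / i))
    (S : Ω → ℕ) (hS : ∀ ω, S ω = sInf {n | 1 ≤ n ∧ B n ω = 1}) :
    ∀ t ∈ Set.Icc (0 : ℝ) 1, (∫ ω, t ^ (S ω)) = 1 - (1 - t) ^ α := by
  rintro t ⟨ht0, ht1⟩
  rcases ht1.eq_or_lt with rfl | ht1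
  · simp [Real.zero_rpow hα.1.ne']
  set A : ℕ → Set Ω := fun i ↦ B i ⁻¹' {1}
  have hA (i : ℕ) : MeasurableSet (A i) := hmeas i (measurableSet_singleton 1)
  obtain rfl : S = firstSuccess A := funext hS
  have hα' := Set.Ioo_subset_Icc_self hα
  have hnone (n : ℕ) : ℙ (noSuccessUpTo A n) = ENNReal.ofReal (sibuyaTail α n) :=
    measure_noSuccessUpTo_eq_sibuyaTail hα' hmeas hindep hp n
  have hlaw_zero : ℙ (firstSuccess A ⁻¹' {0}) = 0 := by
    refine measure_firstSuccess_preimage_zero ?_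
    simpa [hnone] using ENNReal.tendsto_ofReal (tendsto_sibuyaTail hα.1 hα.2.le)
  have hlaw_succ (n : ℕ) :
      (ℙ (firstSuccess A ⁻¹' {n + 1})).toReal = sibuyaTail α n - sibuyaTail α (n + 1) := by
    rw [measure_firstSuccess_preimage_succ hA, hnone, hnone,
      ← ENNReal.ofReal_sub _ (sibuyaTail_nonneg hα.2.le _), ENNReal.toReal_ofReal]
    exact sub_nonneg.2 (sibuyaTail_succ_le hα' n)
  rw [integral_comp_eq_tsum (measurable_firstSuccess hA) (C := 1) fun n ↦ by
    simpa [abs_of_nonneg ht0] using pow_le_one₀ ht0 ht1.le]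
  refine HasSum.tsum_eq ((hasSum_nat_add_iff' 1).mp ?_)
  simpa [hlaw_succ, measureReal_def, hlaw_zero] using
    hasSum_sibuyaTail_sub_mul_pow (α := α) (abs_lt.2 ⟨by linarith, ht1⟩)

/-- If `B 1, B 2, …` are independent `{0,1}`-valued random variables with
`ℙ(B i = 1) = α / i`, and `S = min {n ≥ 1 : B n = 1}`, then `S` has a Sibuya distribution
with parameter `α`: `E[t^S] = 1 - (1-t)^α` for all `t ∈ [0,1]`. -/
theorem stmt11 {Ω : Type*} [MeasureSpace Ω] [IsProbabilityMeasure (ℙ : Measure Ω)]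
    (α : ℝ) (hα : α ∈ Set.Ioo (0 : ℝ) 1)
    (B : ℕ → Ω → ℕ) (hmeas : ∀ i, Measurable (B i))
    (h01 : ∀ i ω, B i ω ≤ 1)
    (hindep : iIndepFun B ℙ)
    (hp : ∀ i : ℕ, 1 ≤ i → ℙ {ω | B i ω = 1} = ENNReal.ofReal (α / i))
    (S : Ω → ℕ) (hS : ∀ ω, S ω = sInf {n | 1 ≤ n ∧ B n ω = 1}) :
    ∀ t ∈ Set.Icc (0 : ℝ) 1, (∫ ω, t ^ (S ω)) = 1 - (1 - t) ^ α :=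
  stmt11_general α hα B hmeas hindep hp S hS
end

section
/- Let θ ≥ 1 be a random variable satisfying Davies' condition: x^{−α−γ(x)} ≤ P(θ > x) ≤ x^{−α+γ(x)} for x ≥ x_0, where 0 < α < 1 and γ is nonincreasing, nonnegative, with x ↦ x^{γ(x)} nondecreasing and ∫_{x_0}^∞ γ(exp(e^x)) dx < ∞. Then the function x ↦ x^{γ(x)} is slowly varying at infinity, and there exist random variables θ̲ ≤_{st} θ ≤_{st} θ̄ (stochastic ordering) whose tail functions are regularly varying at infinity with index −α. -/
/-!
Since `γ ≥ 0` is nonincreasing and `γ (exp (exp x))` is integrable, `γ x → 0`. As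
`x ↦ x ^ γ x` is nondecreasing, `1 ≤ (c x) ^ γ (c x) / x ^ γ x ≤ c ^ γ x → 1` for `c ≥ 1`:
this is slow variation.

The comparison laws have density `α s ^ (-α - 1 ∓ γ s)` far out, the missing mass sitting in
an atom. Their tails at `t` lie between `α / (α ± γ t) · t ^ (-α ∓ γ t)` and `t ^ (-α ∓ γ t)`,
so they are on the right side of Davies' bounds and asymptotic to `t ^ (-α) · L t ^ (∓1)` with
`L x = x ^ γ x` slowly varying, hence regularly varying of index `-α`.
-/

open MeasureTheory ProbabilityTheory Filter

/-- `L` is slowly varying at infinity. -/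
def SlowlyVarying (L : ℝ → ℝ) : Prop :=
  ∀ c : ℝ, 0 < c → Tendsto (fun x => L (c * x) / L x) atTop (nhds 1)

open Set Asymptotics Topology Real

def RegularlyVarying (F : ℝ → ℝ) (ρ : ℝ) : Prop :=
  ∀ c : ℝ, 0 < c → Tendsto (fun x => F (c * x) / F x) atTop (𝓝 (c ^ ρ))

lemma frequently_lt_of_integrableOn_Ioi {h : ℝ → ℝ} {a ε : ℝ} (hh : IntegrableOn h (Ioi a))
    (hε : 0 < ε) : ∃ᶠ x in atTop, h x < ε := by
  intro hev
  obtain ⟨b, hb⟩ := (hev.mono fun _ hx => not_lt.mp hx).exists_forall_of_atTop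
  have hconst : IntegrableOn (fun _ => ε) (Ioi (max a b)) := by
    refine (hh.mono_set (Ioi_subset_Ioi (le_max_left a b))).mono' aestronglyMeasurable_const ?_
    filter_upwards [ae_restrict_mem measurableSet_Ioi] with x hx
    rw [Real.norm_of_nonneg hε.le]
    exact hb x (le_max_right a b |>.trans hx.le)
  rw [integrableOn_const_iff] at hconst
  simp [hε.ne'] at hconst

lemma AntitoneOn.tendsto_zero_of_integrableOn_comp {γ φ : ℝ → ℝ} {x₀ a : ℝ}
    (hanti : AntitoneOn γ (Ici x₀)) (hγ0 : ∀ x, x₀ ≤ x → 0 ≤ γ x)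
    (hφ : Tendsto φ atTop atTop)
    (hint : IntegrableOn (fun x => γ (φ x)) (Ioi a)) : Tendsto γ atTop (𝓝 0) := by
  refine tendsto_order.2 ⟨fun ε hε => ?_, fun ε hε => ?_⟩
  · filter_upwards [eventually_ge_atTop x₀] with x hx using hε.trans_le (hγ0 x hx)
  · obtain ⟨x, hxε, hx⟩ := ((frequently_lt_of_integrableOn_Ioi hint hε).and_eventually
      (hφ.eventually_ge_atTop x₀)).exists
    filter_upwards [eventually_ge_atTop (φ x)] with y hy
    exact (hanti hx (hx.trans hy) hy).trans_lt hxε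

lemma slowlyVarying_of_one_le {L : ℝ → ℝ}
    (h : ∀ c : ℝ, 1 ≤ c → Tendsto (fun x => L (c * x) / L x) atTop (𝓝 1)) :
    SlowlyVarying L := by
  intro c hc
  rcases le_or_gt 1 c with h1c | h1c
  · exact h c h1c
  · have h' := ((h c⁻¹ ((one_le_inv₀ hc).mpr h1c.le)).comp
      (tendsto_id.const_mul_atTop hc)).inv₀ one_ne_zero
    simpa only [Function.comp_def, id, inv_mul_cancel_left₀ hc.ne', inv_div, inv_one] using h'

lemma SlowlyVarying.inv {L : ℝ → ℝ} (hL : SlowlyVarying L) :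
    SlowlyVarying fun x => (L x)⁻¹ :=
  fun c hc => by simpa only [inv_div_inv, inv_div, inv_one] using (hL c hc).inv₀ one_ne_zero

lemma slowlyVarying_rpow_self {γ : ℝ → ℝ} {x₀ : ℝ} (hγ : Tendsto γ atTop (𝓝 0))
    (hanti : AntitoneOn γ (Ici x₀)) (hmono : MonotoneOn (fun x => x ^ γ x) (Ici x₀)) :
    SlowlyVarying fun x => x ^ γ x := by
  refine slowlyVarying_of_one_le fun c hc => ?_
  have hc0 : 0 < c := one_pos.trans_le hc
  have hupper : Tendsto (fun x => c ^ γ x) atTop (𝓝 1) := by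
    simpa using tendsto_const_nhds.rpow hγ (Or.inl hc0.ne')
  have hbounds : ∀ x, max x₀ 1 ≤ x →
      1 ≤ (c * x) ^ γ (c * x) / x ^ γ x ∧ (c * x) ^ γ (c * x) / x ^ γ x ≤ c ^ γ x := by
    intro x hx
    obtain ⟨hx₀, hx1⟩ := max_le_iff.mp hx
    have hcx : x ≤ c * x := le_mul_of_one_le_left (by linarith) hc
    have hxpos : 0 < x ^ γ x := rpow_pos_of_pos (by linarith) _
    refine ⟨(one_le_div hxpos).mpr (hmono hx₀ (hx₀.trans hcx) hcx), ?_⟩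
    rw [div_le_iff₀ hxpos, ← mul_rpow hc0.le (by linarith)]
    exact rpow_le_rpow_of_exponent_le (hx1.trans hcx) (hanti hx₀ (hx₀.trans hcx) hcx)
  exact tendsto_of_tendsto_of_tendsto_of_le_of_le' tendsto_const_nhds hupper
    (eventually_atTop.2 ⟨_, fun x hx => (hbounds x hx).1⟩)
    (eventually_atTop.2 ⟨_, fun x hx => (hbounds x hx).2⟩)

lemma RegularlyVarying.of_isEquivalent {F L : ℝ → ℝ} {ρ : ℝ} (hL : SlowlyVarying L)
    (hF : F ~[atTop] fun x => x ^ ρ * L x) : RegularlyVarying F ρ := by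
  intro c hc
  have hequiv := (hF.comp_tendsto (tendsto_id.const_mul_atTop hc)).div hF
  refine hequiv.symm.tendsto_nhds ?_
  have hlim : Tendsto (fun x => c ^ ρ * (L (c * x) / L x)) atTop (𝓝 (c ^ ρ)) := by
    simpa using (hL c hc).const_mul (c ^ ρ)
  refine hlim.congr' ?_
  filter_upwards [eventually_gt_atTop 0] with x hx
  simp only [Pi.div_apply, Function.comp_apply, id]
  rw [mul_rpow hc.le hx.le, mul_assoc, mul_div_assoc,
    mul_div_mul_left _ _ (rpow_pos_of_pos hx ρ).ne']

lemma isEquivalent_of_mul_le_of_le_mul {ι : Type*} {l : Filter ι} {u v a b : ι → ℝ}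
    (ha : Tendsto a l (𝓝 1)) (hb : Tendsto b l (𝓝 1)) (hv : ∀ᶠ x in l, 0 < v x)
    (hlo : ∀ᶠ x in l, a x * v x ≤ u x) (hhi : ∀ᶠ x in l, u x ≤ b x * v x) :
    u ~[l] v := by
  refine isEquivalent_of_tendsto_one (tendsto_of_tendsto_of_tendsto_of_le_of_le' ha hb ?_ ?_)
  · filter_upwards [hv, hlo] with x hvx hx using (le_div_iff₀ hvx).2 hx
  · filter_upwards [hv, hhi] with x hvx hx using (div_le_iff₀ hvx).2 hx

section PowerTail

variable {f : ℝ → ℝ} {p t C : ℝ}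

lemma integral_Ioi_rpow_neg_sub_one (hp : 0 < p) (ht : 0 < t) :
    ∫ s in Ioi t, s ^ (-p - 1) = t ^ (-p) / p := by
  rw [integral_Ioi_rpow_of_lt (by linarith) ht, sub_add_cancel, neg_div, div_neg, neg_neg]

lemma integrableOn_Ioi_of_le_rpow (hp : 0 < p) (ht : 0 < t)
    (hf : AEStronglyMeasurable f (volume.restrict (Ioi t))) (h0 : ∀ s ∈ Ioi t, 0 ≤ f s)
    (hle : ∀ s ∈ Ioi t, f s ≤ C * s ^ (-p - 1)) : IntegrableOn f (Ioi t) := by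
  refine ((integrableOn_Ioi_rpow_of_lt (by linarith : -p - 1 < -1) ht).const_mul C).mono' hf ?_
  filter_upwards [ae_restrict_mem measurableSet_Ioi] with s hs
  rw [Real.norm_of_nonneg (h0 s hs)]
  exact hle s hs

lemma setIntegral_Ioi_le_of_le_rpow (hp : 0 < p) (ht : 0 < t) (hf : IntegrableOn f (Ioi t))
    (hle : ∀ s ∈ Ioi t, f s ≤ C * s ^ (-p - 1)) :
    ∫ s in Ioi t, f s ≤ C * (t ^ (-p) / p) := by
  rw [← integral_Ioi_rpow_neg_sub_one hp ht, ← integral_const_mul]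
  exact setIntegral_mono_on hf ((integrableOn_Ioi_rpow_of_lt (by linarith) ht).const_mul C)
    measurableSet_Ioi hle

lemma le_setIntegral_Ioi_of_rpow_le (hp : 0 < p) (ht : 0 < t) (hf : IntegrableOn f (Ioi t))
    (hle : ∀ s ∈ Ioi t, C * s ^ (-p - 1) ≤ f s) :
    C * (t ^ (-p) / p) ≤ ∫ s in Ioi t, f s := by
  rw [← integral_Ioi_rpow_neg_sub_one hp ht, ← integral_const_mul]
  exact setIntegral_mono_on ((integrableOn_Ioi_rpow_of_lt (by linarith) ht).const_mul C) hf
    measurableSet_Ioi hle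

end PowerTail

noncomputable def lowerDensity (α : ℝ) (γ : ℝ → ℝ) (s : ℝ) : ℝ :=
  α * s ^ (-α - 1 - γ s)

noncomputable def upperDensity (α : ℝ) (γ : ℝ → ℝ) (s : ℝ) : ℝ :=
  α * s ^ (-α - 1 + γ s)

section DaviesDensity

variable {α x₀ t : ℝ} {γ : ℝ → ℝ}

lemma lowerDensity_nonneg (hα : 0 < α) (ht : 0 ≤ t) : ∀ s ∈ Ioi t, 0 ≤ lowerDensity α γ s :=
  fun _ hs => mul_nonneg hα.le (rpow_nonneg (ht.trans (le_of_lt hs)) _)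

lemma upperDensity_nonneg (hα : 0 < α) (ht : 0 ≤ t) : ∀ s ∈ Ioi t, 0 ≤ upperDensity α γ s :=
  fun _ hs => mul_nonneg hα.le (rpow_nonneg (ht.trans (le_of_lt hs)) _)

lemma aestronglyMeasurable_lowerDensity (hγanti : AntitoneOn γ (Ici x₀)) (ht : x₀ ≤ t) :
    AEStronglyMeasurable (lowerDensity α γ) (volume.restrict (Ioi t)) := by
  have hγ : AEMeasurable γ (volume.restrict (Ioi t)) :=
    aemeasurable_restrict_of_antitoneOn measurableSet_Ioi (hγanti.mono (Ioi_subset_Ici ht))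
  exact (aemeasurable_const.mul (measurable_id.aemeasurable.pow
    (aemeasurable_const.sub hγ))).aestronglyMeasurable

lemma lowerDensity_le (hα : 0 < α) (hx₀ : 1 ≤ x₀)
    (hmono : MonotoneOn (fun x => x ^ γ x) (Ici x₀)) (ht : x₀ ≤ t) {s : ℝ} (hs : t < s) :
    lowerDensity α γ s ≤ α / t ^ γ t * s ^ (-α - 1) := by
  have ht0 : 0 < t := by linarith
  have hs0 : 0 < s := ht0.trans hs
  rw [lowerDensity, rpow_sub hs0, div_mul_eq_mul_div, mul_div_assoc]
  exact mul_le_mul_of_nonneg_left (div_le_div_of_nonneg_left (rpow_nonneg hs0.le _)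
    (rpow_pos_of_pos ht0 _) (hmono ht (ht.trans hs.le) hs.le)) hα.le

lemma rpow_le_lowerDensity (hα : 0 < α) (hx₀ : 1 ≤ x₀)
    (hγanti : AntitoneOn γ (Ici x₀))
    (ht : x₀ ≤ t) {s : ℝ} (hs : t < s) :
    α * s ^ (-(α + γ t) - 1) ≤ lowerDensity α γ s := by
  have hγ := hγanti ht (ht.trans hs.le) hs.le
  exact mul_le_mul_of_nonneg_left (rpow_le_rpow_of_exponent_le (by linarith) (by linarith))
    hα.le

lemma le_upperDensity (hα : 0 < α) (hx₀ : 1 ≤ x₀)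
    (hmono : MonotoneOn (fun x => x ^ γ x) (Ici x₀)) (ht : x₀ ≤ t) {s : ℝ} (hs : t < s) :
    α * t ^ γ t * s ^ (-α - 1) ≤ upperDensity α γ s := by
  have hs0 : 0 < s := by linarith
  rw [upperDensity, rpow_add hs0, mul_comm (s ^ _), ← mul_assoc]
  exact mul_le_mul_of_nonneg_right (mul_le_mul_of_nonneg_left
    (hmono ht (ht.trans hs.le) hs.le) hα.le) (rpow_nonneg hs0.le _)

lemma upperDensity_le_rpow (hα : 0 < α) (hx₀ : 1 ≤ x₀)
    (hγanti : AntitoneOn γ (Ici x₀))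
    (ht : x₀ ≤ t) {s : ℝ} (hs : t < s) :
    upperDensity α γ s ≤ α * s ^ (-(α - γ t) - 1) := by
  have hγ := hγanti ht (ht.trans hs.le) hs.le
  exact mul_le_mul_of_nonneg_left (rpow_le_rpow_of_exponent_le (by linarith) (by linarith))
    hα.le

lemma aestronglyMeasurable_upperDensity (hγanti : AntitoneOn γ (Ici x₀)) (ht : x₀ ≤ t) :
    AEStronglyMeasurable (upperDensity α γ) (volume.restrict (Ioi t)) := by
  have hγ : AEMeasurable γ (volume.restrict (Ioi t)) :=
    aemeasurable_restrict_of_antitoneOn measurableSet_Ioi (hγanti.mono (Ioi_subset_Ici ht))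
  exact (aemeasurable_const.mul (measurable_id.aemeasurable.pow
    (aemeasurable_const.add hγ))).aestronglyMeasurable

lemma integrableOn_lowerDensity (hα : 0 < α) (hx₀ : 1 ≤ x₀)
    (hγanti : AntitoneOn γ (Ici x₀))
    (hmono : MonotoneOn (fun x => x ^ γ x) (Ici x₀)) (ht : x₀ ≤ t) :
    IntegrableOn (lowerDensity α γ) (Ioi t) :=
  integrableOn_Ioi_of_le_rpow hα (by linarith) (aestronglyMeasurable_lowerDensity hγanti ht)
    (lowerDensity_nonneg hα (by linarith))
    (fun _ hs => lowerDensity_le hα hx₀ hmono ht hs)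

lemma integrableOn_upperDensity (hα : 0 < α) (hx₀ : 1 ≤ x₀)
    (hγanti : AntitoneOn γ (Ici x₀)) (ht : x₀ ≤ t) (hγt : γ t < α) :
    IntegrableOn (upperDensity α γ) (Ioi t) :=
  integrableOn_Ioi_of_le_rpow (sub_pos.mpr hγt) (by linarith)
    (aestronglyMeasurable_upperDensity hγanti ht)
    (upperDensity_nonneg hα (by linarith))
    (fun _ hs => upperDensity_le_rpow hα hx₀ hγanti ht hs)

lemma integral_lowerDensity_le (hα : 0 < α) (hx₀ : 1 ≤ x₀)
    (hγanti : AntitoneOn γ (Ici x₀))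
    (hmono : MonotoneOn (fun x => x ^ γ x) (Ici x₀)) (ht : x₀ ≤ t) :
    ∫ s in Ioi t, lowerDensity α γ s ≤ t ^ (-α - γ t) := by
  have ht0 : 0 < t := by linarith
  calc ∫ s in Ioi t, lowerDensity α γ s ≤ α / t ^ γ t * (t ^ (-α) / α) :=
        setIntegral_Ioi_le_of_le_rpow hα ht0 (integrableOn_lowerDensity hα hx₀ hγanti hmono ht)
          fun _ hs => lowerDensity_le hα hx₀ hmono ht hs
    _ = t ^ (-α - γ t) := by rw [rpow_sub ht0]; field_simp

lemma le_integral_lowerDensity (hα : 0 < α) (hx₀ : 1 ≤ x₀)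
    (hγanti : AntitoneOn γ (Ici x₀))
    (hmono : MonotoneOn (fun x => x ^ γ x) (Ici x₀)) (ht : x₀ ≤ t) (hγt : 0 ≤ γ t) :
    α / (α + γ t) * t ^ (-α - γ t) ≤ ∫ s in Ioi t, lowerDensity α γ s := by
  calc α / (α + γ t) * t ^ (-α - γ t) = α * (t ^ (-(α + γ t)) / (α + γ t)) := by
        rw [neg_add']; ring
    _ ≤ ∫ s in Ioi t, lowerDensity α γ s :=
        le_setIntegral_Ioi_of_rpow_le (by linarith) (by linarith)
          (integrableOn_lowerDensity hα hx₀ hγanti hmono ht)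
          fun _ hs => rpow_le_lowerDensity hα hx₀ hγanti ht hs

lemma le_integral_upperDensity (hα : 0 < α) (hx₀ : 1 ≤ x₀)
    (hγanti : AntitoneOn γ (Ici x₀))
    (hmono : MonotoneOn (fun x => x ^ γ x) (Ici x₀)) (ht : x₀ ≤ t) (hγt : γ t < α) :
    t ^ (-α + γ t) ≤ ∫ s in Ioi t, upperDensity α γ s := by
  have ht0 : 0 < t := by linarith
  calc t ^ (-α + γ t) = α * t ^ γ t * (t ^ (-α) / α) := by rw [rpow_add ht0]; field_simp
    _ ≤ ∫ s in Ioi t, upperDensity α γ s :=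
        le_setIntegral_Ioi_of_rpow_le hα ht0 (integrableOn_upperDensity hα hx₀ hγanti ht hγt)
          fun _ hs => le_upperDensity hα hx₀ hmono ht hs

lemma integral_upperDensity_le (hα : 0 < α) (hx₀ : 1 ≤ x₀)
    (hγanti : AntitoneOn γ (Ici x₀)) (ht : x₀ ≤ t) (hγt : γ t < α) :
    ∫ s in Ioi t, upperDensity α γ s ≤ α / (α - γ t) * t ^ (-α + γ t) := by
  calc ∫ s in Ioi t, upperDensity α γ s ≤ α * (t ^ (-(α - γ t)) / (α - γ t)) :=
        setIntegral_Ioi_le_of_le_rpow (sub_pos.mpr hγt) (by linarith)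
          (integrableOn_upperDensity hα hx₀ hγanti ht hγt)
          fun _ hs => upperDensity_le_rpow hα hx₀ hγanti ht hs
    _ = α / (α - γ t) * t ^ (-α + γ t) := by rw [neg_sub', sub_neg_eq_add]; ring

lemma isEquivalent_integral_lowerDensity (hα : 0 < α) (hx₀ : 1 ≤ x₀)
    (hγ0 : ∀ x, x₀ ≤ x → 0 ≤ γ x) (hγanti : AntitoneOn γ (Ici x₀))
    (hmono : MonotoneOn (fun x => x ^ γ x) (Ici x₀)) (hγ : Tendsto γ atTop (𝓝 0)) :
    (fun t => ∫ s in Ioi t, lowerDensity α γ s) ~[atTop]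
      fun t => t ^ (-α) * (t ^ γ t)⁻¹ := by
  have hfactor : Tendsto (fun t => α / (α + γ t)) atTop (𝓝 1) := by
    have h := (tendsto_const_nhds (x := α)).div (tendsto_const_nhds.add hγ)
      (by rw [add_zero]; exact hα.ne')
    rwa [add_zero, div_self hα.ne'] at h
  have hform : ∀ t, 0 < t → t ^ (-α) * (t ^ γ t)⁻¹ = t ^ (-α - γ t) := fun t ht => by
    rw [rpow_sub ht, div_eq_mul_inv]
  refine isEquivalent_of_mul_le_of_le_mul hfactor tendsto_const_nhds ?_ ?_ ?_
  · filter_upwards [eventually_gt_atTop 0] with t ht using by positivity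
  · filter_upwards [eventually_ge_atTop x₀] with t ht
    rw [hform t (by linarith)]
    exact le_integral_lowerDensity hα hx₀ hγanti hmono ht (hγ0 t ht)
  · filter_upwards [eventually_ge_atTop x₀] with t ht
    rw [hform t (by linarith), one_mul]
    exact integral_lowerDensity_le hα hx₀ hγanti hmono ht

lemma isEquivalent_integral_upperDensity (hα : 0 < α) (hx₀ : 1 ≤ x₀)
    (hγanti : AntitoneOn γ (Ici x₀)) (hmono : MonotoneOn (fun x => x ^ γ x) (Ici x₀))
    (hγ : Tendsto γ atTop (𝓝 0)) :
    (fun t => ∫ s in Ioi t, upperDensity α γ s) ~[atTop] fun t => t ^ (-α) * t ^ γ t := by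
  have hfactor : Tendsto (fun t => α / (α - γ t)) atTop (𝓝 1) := by
    have h := (tendsto_const_nhds (x := α)).div (tendsto_const_nhds.sub hγ)
      (by rw [sub_zero]; exact hα.ne')
    rwa [sub_zero, div_self hα.ne'] at h
  have hform : ∀ t, 0 < t → t ^ (-α) * t ^ γ t = t ^ (-α + γ t) := fun t ht =>
    (rpow_add ht _ _).symm
  have hγα : ∀ᶠ t in atTop, x₀ ≤ t ∧ γ t < α :=
    (eventually_ge_atTop x₀).and (hγ.eventually (gt_mem_nhds hα))
  refine isEquivalent_of_mul_le_of_le_mul tendsto_const_nhds hfactor ?_ ?_ ?_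
  · filter_upwards [eventually_gt_atTop 0] with t ht using by positivity
  · filter_upwards [hγα] with t ⟨ht, hγt⟩
    rw [hform t (by linarith), one_mul]
    exact le_integral_upperDensity hα hx₀ hγanti hmono ht hγt
  · filter_upwards [hγα] with t ⟨ht, hγt⟩
    rw [hform t (by linarith)]
    exact integral_upperDensity_le hα hx₀ hγanti ht hγt

lemma tendsto_rpow_neg_add_zero (hα : 0 < α) (hγ : Tendsto γ atTop (𝓝 0)) :
    Tendsto (fun t => t ^ (-α + γ t)) atTop (𝓝 0) := by
  have hexp : Tendsto (fun t => log t * (-α + γ t)) atTop atBot :=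
    tendsto_log_atTop.atTop_mul_neg (neg_lt_zero.mpr hα) (by simpa using hγ.const_add (-α))
  refine (tendsto_exp_atBot.comp hexp).congr' ?_
  filter_upwards [eventually_gt_atTop 0] with t ht using (rpow_def_of_pos ht _).symm

lemma exists_integral_upperDensity_le_one (hα : 0 < α) (hx₀ : 1 ≤ x₀)
    (hγanti : AntitoneOn γ (Ici x₀)) (hmono : MonotoneOn (fun x => x ^ γ x) (Ici x₀))
    (hγ : Tendsto γ atTop (𝓝 0)) :
    ∃ T, x₀ ≤ T ∧ γ T < α ∧ ∫ s in Ioi T, upperDensity α γ s ≤ 1 := by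
  have hdecay : Tendsto (fun t => t ^ (-α) * t ^ γ t) atTop (𝓝 0) := by
    refine (tendsto_rpow_neg_add_zero hα hγ).congr' ?_
    filter_upwards [eventually_gt_atTop 0] with t ht using rpow_add ht _ _
  have htail :=
    (isEquivalent_integral_upperDensity hα hx₀ hγanti hmono hγ).symm.tendsto_nhds hdecay
  obtain ⟨T, ⟨hT, hγT⟩, hT1⟩ := ((eventually_ge_atTop x₀).and (hγ.eventually (gt_mem_nhds hα))
    |>.and (htail.eventually (ge_mem_nhds one_pos))).exists
  exact ⟨T, hT, hγT, hT1⟩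

end DaviesDensity

noncomputable def densityWithAtom (f : ℝ → ℝ) (a b : ℝ) : Measure ℝ :=
  volume.withDensity ((Ioi a).indicator fun s => ENNReal.ofReal (f s)) +
    (1 - ENNReal.ofReal (∫ s in Ioi a, f s)) • Measure.dirac b

section DensityWithAtom

variable {f : ℝ → ℝ} {a b t : ℝ}

lemma withDensity_indicator_Ioi_apply (hf0 : ∀ s ∈ Ioi a, 0 ≤ f s)
    (hf : IntegrableOn f (Ioi a)) {S : Set ℝ} (hS : MeasurableSet S) :
    volume.withDensity ((Ioi a).indicator fun s => ENNReal.ofReal (f s)) S =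
      ENNReal.ofReal (∫ s in Ioi a ∩ S, f s) := by
  rw [withDensity_apply _ hS, lintegral_indicator measurableSet_Ioi,
    Measure.restrict_restrict measurableSet_Ioi, ← ofReal_integral_eq_lintegral_ofReal]
  · exact hf.mono_set inter_subset_left
  · filter_upwards [ae_restrict_mem (measurableSet_Ioi.inter hS)] with s hs using hf0 s hs.1

lemma isProbabilityMeasure_densityWithAtom (hf0 : ∀ s ∈ Ioi a, 0 ≤ f s)
    (hf : IntegrableOn f (Ioi a)) (h1 : ∫ s in Ioi a, f s ≤ 1) :
    IsProbabilityMeasure (densityWithAtom f a b) := by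
  constructor
  rw [densityWithAtom, Measure.add_apply, withDensity_indicator_Ioi_apply hf0 hf .univ,
    inter_univ, Measure.smul_apply, measure_univ, smul_eq_mul, mul_one]
  exact add_tsub_cancel_of_le (ENNReal.ofReal_le_one.mpr h1)

lemma densityWithAtom_Ioi_of_le (hf0 : ∀ s ∈ Ioi a, 0 ≤ f s) (hf : IntegrableOn f (Ioi a))
    (hbt : b ≤ t) :
    densityWithAtom f a b (Ioi t) = ENNReal.ofReal (∫ s in Ioi (max a t), f s) := by
  rw [densityWithAtom, Measure.add_apply, withDensity_indicator_Ioi_apply hf0 hf measurableSet_Ioi,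
    Ioi_inter_Ioi, Measure.smul_apply, Measure.dirac_apply' _ measurableSet_Ioi,
    indicator_of_notMem (notMem_Ioi.mpr hbt), smul_zero, add_zero]

lemma densityWithAtom_Ioi_of_lt (hf0 : ∀ s ∈ Ioi a, 0 ≤ f s) (hf : IntegrableOn f (Ioi a))
    (h1 : ∫ s in Ioi a, f s ≤ 1) (hba : b ≤ a) (htb : t < b) :
    densityWithAtom f a b (Ioi t) = 1 := by
  rw [densityWithAtom, Measure.add_apply, withDensity_indicator_Ioi_apply hf0 hf measurableSet_Ioi,
    Ioi_inter_Ioi, max_eq_left (htb.trans_le hba).le, Measure.smul_apply,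
    Measure.dirac_apply' _ measurableSet_Ioi, indicator_of_mem (mem_Ioi.mpr htb), Pi.one_apply,
    smul_eq_mul, mul_one]
  exact add_tsub_cancel_of_le (ENNReal.ofReal_le_one.mpr h1)

lemma regularlyVarying_densityWithAtom {L : ℝ → ℝ} {ρ : ℝ}
    (hf0 : ∀ s ∈ Ioi a, 0 ≤ f s) (hf : IntegrableOn f (Ioi a)) (hL : SlowlyVarying L)
    (hequiv : (fun t => ∫ s in Ioi t, f s) ~[atTop] fun t => t ^ ρ * L t) :
    RegularlyVarying (fun t => (densityWithAtom f a b (Ioi t)).toReal) ρ := by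
  refine RegularlyVarying.of_isEquivalent hL (hequiv.congr_left ?_)
  filter_upwards [eventually_ge_atTop (max a b)] with t ht
  rw [densityWithAtom_Ioi_of_le hf0 hf (le_of_max_le_right ht), max_eq_right (le_of_max_le_left ht),
    ENNReal.toReal_ofReal (setIntegral_nonneg measurableSet_Ioi fun s hs =>
      hf0 s ((le_of_max_le_left ht).trans_lt hs))]

end DensityWithAtom

section StochasticOrder

variable {Ω : Type*} [MeasurableSpace Ω] {P : Measure Ω} [IsProbabilityMeasure P]
  {θ : Ω → ℝ}
  {f : ℝ → ℝ} {a b : ℝ}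

lemma densityWithAtom_Ioi_le_of_integral_le (hθ : ∀ ω, b ≤ θ ω)
    (hf0 : ∀ s ∈ Ioi a, 0 ≤ f s)
    (hf : IntegrableOn f (Ioi a)) (h1 : ∫ s in Ioi a, f s ≤ 1)
    (htail : ∀ t, a ≤ t → ∫ s in Ioi t, f s ≤ (P {ω | t < θ ω}).toReal) (t : ℝ) :
    densityWithAtom f a b (Ioi t) ≤ P {ω | t < θ ω} := by
  rcases lt_or_ge t b with htb | hbt
  · have : IsProbabilityMeasure (densityWithAtom f a b) :=
      isProbabilityMeasure_densityWithAtom hf0 hf h1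
    rw [show {ω | t < θ ω} = univ from eq_univ_of_forall fun ω => htb.trans_le (hθ ω),
      measure_univ]
    exact prob_le_one
  · rw [densityWithAtom_Ioi_of_le hf0 hf hbt]
    calc ENNReal.ofReal (∫ s in Ioi (max a t), f s) ≤ P {ω | max a t < θ ω} :=
          ENNReal.ofReal_le_of_le_toReal (htail _ (le_max_left a t))
      _ ≤ P {ω | t < θ ω} := measure_mono fun ω hω => (le_max_right a t).trans_lt hω

lemma le_densityWithAtom_Ioi_of_le_integral (hf0 : ∀ s ∈ Ioi a, 0 ≤ f s)
    (hf : IntegrableOn f (Ioi a)) (h1 : ∫ s in Ioi a, f s ≤ 1)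
    (htail : ∀ t, a ≤ t → (P {ω | t < θ ω}).toReal ≤ ∫ s in Ioi t, f s) (t : ℝ) :
    P {ω | t < θ ω} ≤ densityWithAtom f a a (Ioi t) := by
  rcases lt_or_ge t a with hta | hat
  · rw [densityWithAtom_Ioi_of_lt hf0 hf h1 le_rfl hta]
    exact prob_le_one
  · rw [densityWithAtom_Ioi_of_le hf0 hf hat, max_eq_right hat,
      ← ENNReal.ofReal_toReal (measure_ne_top P _)]
    exact ENNReal.ofReal_le_ofReal (htail t hat)

end StochasticOrder

theorem stmt15_general {Ω : Type*} [MeasureSpace Ω] [IsProbabilityMeasure (ℙ : Measure Ω)]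
    (θ : Ω → ℝ) (hθ1 : ∀ ω, 1 ≤ θ ω)
    (α : ℝ) (hα : α ∈ Set.Ioo (0 : ℝ) 1)
    (x₀ : ℝ) (hx₀ : 1 ≤ x₀)
    (γ : ℝ → ℝ) (hγ0 : ∀ x, x₀ ≤ x → 0 ≤ γ x)
    (hγanti : AntitoneOn γ (Set.Ici x₀))
    (hγmono : MonotoneOn (fun x => x ^ γ x) (Set.Ici x₀))
    (hγint : IntegrableOn (fun x => γ (Real.exp (Real.exp x))) (Set.Ioi x₀))
    (hDavies : ∀ x, x₀ ≤ x →
      x ^ (-α - γ x) ≤ (ℙ {ω | x < θ ω}).toReal ∧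
      (ℙ {ω | x < θ ω}).toReal ≤ x ^ (-α + γ x)) :
    SlowlyVarying (fun x => x ^ γ x) ∧
    ∃ μl μu : Measure ℝ, IsProbabilityMeasure μl ∧ IsProbabilityMeasure μu ∧
      (∀ t : ℝ, μl (Set.Ioi t) ≤ ℙ {ω | t < θ ω} ∧
        ℙ {ω | t < θ ω} ≤ μu (Set.Ioi t)) ∧
      (∀ c : ℝ, 0 < c →
        Tendsto (fun x => (μl (Set.Ioi (c * x))).toReal / (μl (Set.Ioi x)).toReal)
          atTop (nhds (c ^ (-α)))) ∧
      (∀ c : ℝ, 0 < c →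
        Tendsto (fun x => (μu (Set.Ioi (c * x))).toReal / (μu (Set.Ioi x)).toReal)
          atTop (nhds (c ^ (-α)))) := by
  obtain ⟨hα0, -⟩ := hα
  have hγ : Tendsto γ atTop (𝓝 0) :=
    hγanti.tendsto_zero_of_integrableOn_comp hγ0 (tendsto_exp_atTop.comp tendsto_exp_atTop) hγint
  have hL := slowlyVarying_rpow_self hγ hγanti hγmono
  obtain ⟨T, hxT, hγT, hT1⟩ :=
    exists_integral_upperDensity_le_one hα0 hx₀ hγanti hγmono hγ
  have hl0 := lowerDensity_nonneg (γ := γ) hα0 (by linarith : 0 ≤ x₀)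
  have hu0 := upperDensity_nonneg (γ := γ) hα0 (by linarith : 0 ≤ T)
  have hlint := integrableOn_lowerDensity hα0 hx₀ hγanti hγmono le_rfl
  have huint := integrableOn_upperDensity hα0 hx₀ hγanti hxT hγT
  have hl1 : ∫ s in Ioi x₀, lowerDensity α γ s ≤ 1 :=
    (integral_lowerDensity_le hα0 hx₀ hγanti hγmono le_rfl).trans
      (rpow_le_one_of_one_le_of_nonpos hx₀ (by linarith [hγ0 x₀ le_rfl]))
  have hlower t (ht : x₀ ≤ t) :
      ∫ s in Ioi t, lowerDensity α γ s ≤ (ℙ {ω | t < θ ω}).toReal :=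
    (integral_lowerDensity_le hα0 hx₀ hγanti hγmono ht).trans (hDavies t ht).1
  have hupper t (ht : T ≤ t) :
      (ℙ {ω | t < θ ω}).toReal ≤ ∫ s in Ioi t, upperDensity α γ s :=
    (hDavies t (hxT.trans ht)).2.trans (le_integral_upperDensity hα0 hx₀ hγanti hγmono
      (hxT.trans ht) ((hγanti hxT (hxT.trans ht) ht).trans_lt hγT))
  exact ⟨hL, densityWithAtom (lowerDensity α γ) x₀ 1,
    densityWithAtom (upperDensity α γ) T T,
    isProbabilityMeasure_densityWithAtom hl0 hlint hl1,
    isProbabilityMeasure_densityWithAtom hu0 huint hT1,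
    fun t => ⟨densityWithAtom_Ioi_le_of_integral_le hθ1 hl0 hlint hl1 hlower t,
      le_densityWithAtom_Ioi_of_le_integral hu0 huint hT1 hupper t⟩,
    regularlyVarying_densityWithAtom hl0 hlint hL.inv
      (isEquivalent_integral_lowerDensity hα0 hx₀ hγ0 hγanti hγmono hγ),
    regularlyVarying_densityWithAtom hu0 huint hL
      (isEquivalent_integral_upperDensity hα0 hx₀ hγanti hγmono hγ)⟩

/-- Let `θ ≥ 1` satisfy Davies' condition `x^{-α-γ(x)} ≤ ℙ(θ > x) ≤ x^{-α+γ(x)}` for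
`x ≥ x₀`, with `0 < α < 1`, `γ ≥ 0` nonincreasing, `x ↦ x^{γ(x)}` nondecreasing and
`∫_{x₀}^∞ γ(exp(eˣ)) dx < ∞`.  Then `x ↦ x^{γ(x)}` is slowly varying at infinity, and
there are probability laws `μl ≤_st law(θ) ≤_st μu` whose tails are regularly varying at
infinity with index `−α` (tail ratios `μ(c·x,∞)/μ(x,∞) → c^{-α}`). -/
theorem stmt15 {Ω : Type*} [MeasureSpace Ω] [IsProbabilityMeasure (ℙ : Measure Ω)]
    (θ : Ω → ℝ) (hθmeas : Measurable θ) (hθ1 : ∀ ω, 1 ≤ θ ω)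
    (α : ℝ) (hα : α ∈ Set.Ioo (0 : ℝ) 1)
    (x₀ : ℝ) (hx₀ : 1 ≤ x₀)
    (γ : ℝ → ℝ) (hγ0 : ∀ x, x₀ ≤ x → 0 ≤ γ x)
    (hγanti : AntitoneOn γ (Set.Ici x₀))
    (hγmono : MonotoneOn (fun x => x ^ γ x) (Set.Ici x₀))
    (hγint : IntegrableOn (fun x => γ (Real.exp (Real.exp x))) (Set.Ioi x₀))
    (hDavies : ∀ x, x₀ ≤ x →
      x ^ (-α - γ x) ≤ (ℙ {ω | x < θ ω}).toReal ∧
      (ℙ {ω | x < θ ω}).toReal ≤ x ^ (-α + γ x)) :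
    SlowlyVarying (fun x => x ^ γ x) ∧
    ∃ μl μu : Measure ℝ, IsProbabilityMeasure μl ∧ IsProbabilityMeasure μu ∧
      (∀ t : ℝ, μl (Set.Ioi t) ≤ ℙ {ω | t < θ ω} ∧
        ℙ {ω | t < θ ω} ≤ μu (Set.Ioi t)) ∧
      (∀ c : ℝ, 0 < c →
        Tendsto (fun x => (μl (Set.Ioi (c * x))).toReal / (μl (Set.Ioi x)).toReal)
          atTop (nhds (c ^ (-α)))) ∧
      (∀ c : ℝ, 0 < c →
        Tendsto (fun x => (μu (Set.Ioi (c * x))).toReal / (μu (Set.Ioi x)).toReal)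
          atTop (nhds (c ^ (-α)))) :=
  stmt15_general θ hθ1 α hα x₀ hx₀ γ hγ0 hγanti hγmono hγint hDavies
end
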